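/- arXiv:hep-th/0305057 — 13 statements merged into one kernel-verified Lean document; each statement's English description precedes it below -/
import Mathlib

section
/- For a prime p > 3 and positive integers n, k, l with k ≤ n, the binomial coefficient C(n·p^l, k·p^l) is congruent to C(n·p^(l-1), k·p^(l-1)) modulo p^(3l). -/
open Finset Nat

lemma jk_inv_unique {m : ℕ} {a b : ZMod m} (ha : IsUnit a) (h : a * b = 1) : a⁻¹ = b := by
  have h1 : a⁻¹ * (a * b) = a⁻¹ := by rw [h, mul_one]
  rw [← mul_assoc, ZMod.inv_mul_of_unit a ha, one_mul] at h1
  exact h1.symm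

lemma jk_esymm2 {ι α : Type*} [DecidableEq ι] [CommRing α] (s : Finset ι) (f : ι → α) :
    2 * ∑ t ∈ s.powersetCard 2, ∏ i ∈ t, f i + ∑ i ∈ s, f i ^ 2 = (∑ i ∈ s, f i) ^ 2 := by
  classical
  induction s using Finset.induction with
  | empty =>
    rw [show (Finset.powersetCard 2 (∅ : Finset ι)) = ∅ from Finset.powersetCard_eq_empty.2 (by simp)]
    simp
  | insert _ _ ha ih =>
    rename_i a s
    have himg : ∑ t ∈ (s.powersetCard 1).image (insert a), ∏ i ∈ t, f i
        = f a * ∑ i ∈ s, f i := by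
      rw [sum_image]
      · rw [powersetCard_one, sum_map]
        simp only [Function.Embedding.coeFn_mk]
        rw [mul_sum]
        refine sum_congr rfl fun i hi => ?_
        rw [prod_insert (by simp; rintro rfl; exact ha hi), prod_singleton]
      · intro t ht u hu htu
        have ht' := (mem_powersetCard.1 ht).1
        have hu' := (mem_powersetCard.1 hu).1
        have : ∀ v ∈ s.powersetCard 1, a ∉ v := fun v hv hav => ha ((mem_powersetCard.1 hv).1 hav)
        have h1 := this t ht
        have h2 := this u hu
        ext x
        constructor
        · intro hx
          have : x ∈ insert a t := mem_insert_of_mem hx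
          rw [htu] at this
          rcases mem_insert.1 this with rfl | h
          · exact absurd hx h1
          · exact h
        · intro hx
          have : x ∈ insert a u := mem_insert_of_mem hx
          rw [← htu] at this
          rcases mem_insert.1 this with rfl | h
          · exact absurd hx h2
          · exact h
    have hdisj : Disjoint (s.powersetCard 2) ((s.powersetCard 1).image (insert a)) := by
      rw [disjoint_right]
      intro t htim ht2
      obtain ⟨u, hu, rfl⟩ := mem_image.1 htim
      exact ha ((mem_powersetCard.1 ht2).1 (mem_insert_self a u))
    rw [powersetCard_succ_insert ha, sum_union hdisj, himg, sum_insert ha, sum_insert ha]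
    linear_combination ih

lemma jk_per_sum {M : Type*} [AddCommMonoid M] (p L : ℕ) (hpL : p ∣ L) :
    ∀ (K : ℕ) (g : ℕ → M), (∀ i, ¬ p ∣ i → g (i + L) = g i) →
    ∑ i ∈ (range (K * L)).filter (fun i => ¬ p ∣ i), g i
      = K • ∑ i ∈ (range L).filter (fun i => ¬ p ∣ i), g i := by
  intro K
  induction K with
  | zero => intro g hg; simp
  | succ K ih =>
    intro g hg
    have hdvd : ∀ i : ℕ, p ∣ (L + i) ↔ p ∣ i := by
      intro i
      constructor
      · intro h; exact (Nat.dvd_add_right hpL).1 h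
      · intro h; exact Nat.dvd_add hpL h
    have hsplit : (K + 1) * L = L + K * L := by ring
    rw [hsplit, range_add, filter_union, sum_union, succ_nsmul']
    · congr 1
      rw [filter_map, sum_map]
      have hc : ∀ i, ((fun i => ¬ p ∣ i) ∘ (addLeftEmbedding L)) i ↔ ¬ p ∣ i := by
        intro i
        simp only [Function.comp, addLeftEmbedding_apply]
        exact not_congr (hdvd i)
      calc ∑ i ∈ (range (K*L)).filter ((fun i => ¬ p ∣ i) ∘ (addLeftEmbedding L)),
              g (addLeftEmbedding L i)
          = ∑ i ∈ (range (K*L)).filter (fun i => ¬ p ∣ i), g (L + i) := by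
            apply sum_congr
            · apply filter_congr
              intro i _
              exact hc i
            · intro i hi; rfl
        _ = K • ∑ i ∈ (range L).filter (fun i => ¬ p ∣ i), g i := by
            rw [ih (fun i => g (L + i)) (fun i hi => by
              show g (L + (i + L)) = g (L + i)
              rw [show L + (i + L) = (L + i) + L by ring]
              exact hg (L+i) (fun h => hi ((hdvd i).1 h)))]
            congr 1
            apply sum_congr rfl
            intro i hi
            show g (L + i) = g i
            rw [show L + i = i + L by ring]
            exact hg i (of_decide_eq_true (by simpa using (mem_filter.1 hi).2))
    · rw [disjoint_left]
      intro i hi1 hi2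
      have h1 := mem_range.1 (mem_filter.1 hi1).1
      have h2 := (mem_filter.1 hi2).1
      obtain ⟨j, hj, rfl⟩ := mem_map.1 h2
      simp only [addLeftEmbedding_apply] at h1
      omega

lemma jk_unit {p m i : ℕ} (hp : p.Prime) (hi : ¬ p ∣ i) : IsUnit ((i : ℕ) : ZMod (p ^ m)) := by
  rw [ZMod.isUnit_iff_coprime]
  exact Nat.Coprime.pow_right m ((hp.coprime_iff_not_dvd.2 hi).symm)

lemma jk_inv_sq_eq {m : ℕ} {A B Q : ZMod m} (hA : IsUnit A) (hB : IsUnit B)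
    (h : Q * A ^ 2 = Q * B ^ 2) : Q * (B⁻¹) ^ 2 = Q * (A⁻¹) ^ 2 := by
  apply IsUnit.mul_left_cancel ((hA.pow 2).mul (hB.pow 2))
  have e1 : A * A⁻¹ = 1 := ZMod.mul_inv_of_unit A hA
  have e2 : B * B⁻¹ = 1 := ZMod.mul_inv_of_unit B hB
  calc A ^ 2 * B ^ 2 * (Q * (B⁻¹) ^ 2)
      = (B * B⁻¹) ^ 2 * (Q * A ^ 2) := by ring
    _ = Q * A ^ 2 := by rw [e2]; ring
    _ = Q * B ^ 2 := h
    _ = (A * A⁻¹) ^ 2 * (Q * B ^ 2) := by rw [e1]; ring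
    _ = A ^ 2 * B ^ 2 * (Q * (A⁻¹) ^ 2) := by ring

lemma jk_Q3 (p l : ℕ) : (((p ^ l : ℕ) : ZMod (p ^ (3 * l)))) ^ 3 = 0 := by
  rw [← Nat.cast_pow, ← pow_mul, mul_comm l 3, ZMod.natCast_self]

lemma jk_base_sum {p l : ℕ} (hp : p.Prime) (hp3 : 3 < p) (hl : 0 < l) :
    ∑ i ∈ (range (p ^ l)).filter (fun i => ¬ p ∣ i),
      ((p ^ l : ℕ) : ZMod (p ^ (3 * l))) ^ 2 * ((((i : ℕ) : ZMod (p ^ (3 * l))))⁻¹) ^ 2 = 0 := by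
  set R := ZMod (p ^ (3 * l))
  have hL0 : 0 < p ^ l := Nat.pow_pos (by omega)
  have hpL : p ∣ p ^ l := dvd_pow_self p (by omega)
  have hQ3 : ((p ^ l : ℕ) : R) ^ 3 = 0 := jk_Q3 p l
  have h2 : IsUnit ((2 : ℕ) : R) := jk_unit hp (fun h => by have := Nat.le_of_dvd (by norm_num) h; omega)
  set B := (range (p ^ l)).filter (fun i => ¬ p ∣ i) with hB
  have hmaps : ∀ i ∈ B, 2 * i % p ^ l ∈ B := by
    intro i hi
    obtain ⟨hir, hip⟩ := mem_filter.1 hi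
    refine mem_filter.2 ⟨mem_range.2 (Nat.mod_lt _ hL0), ?_⟩
    intro hdvd
    have h2i : p ∣ 2 * i := by
      rw [← Nat.mod_add_div (2 * i) (p ^ l)]
      exact Nat.dvd_add hdvd (hpL.mul_right _)
    rcases (Nat.Prime.dvd_mul hp).1 h2i with h | h
    · have := Nat.le_of_dvd (by norm_num) h; omega
    · exact hip h
  have hinj : ∀ i ∈ B, ∀ j ∈ B, 2 * i % p ^ l = 2 * j % p ^ l → i = j := by
    intro i hi j hj hij
    have hi' := mem_range.1 (mem_filter.1 hi).1
    have hj' := mem_range.1 (mem_filter.1 hj).1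
    have hmod : 2 * i ≡ 2 * j [MOD p ^ l] := hij
    have hco : Nat.gcd (p ^ l) 2 = 1 := by
      have hc2 : Nat.Coprime 2 p := (Nat.coprime_primes (by norm_num) hp).2 (by omega)
      exact Nat.Coprime.gcd_eq_one ((hc2.pow_right l).symm)
    have := (Nat.ModEq.cancel_left_of_coprime hco hmod)
    unfold Nat.ModEq at this
    rw [Nat.mod_eq_of_lt hi', Nat.mod_eq_of_lt hj'] at this
    exact this
  have himage : B.image (fun i => 2 * i % p ^ l) = B := by
    apply eq_of_subset_of_card_le
    · intro j hj
      obtain ⟨i, hi, rfl⟩ := mem_image.1 hj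
      exact hmaps i hi
    · rw [Finset.card_image_of_injOn hinj]
  have hkey : ∀ i ∈ B, ((p ^ l : ℕ) : R) ^ 2 * ((((2 * i % p ^ l : ℕ) : R))⁻¹) ^ 2
      = ((((2:ℕ):R))⁻¹) ^ 2 * (((p ^ l : ℕ) : R) ^ 2 * ((((i : ℕ) : R))⁻¹) ^ 2) := by
    intro i hi
    obtain ⟨hir, hip⟩ := mem_filter.1 hi
    have hu : IsUnit ((i : ℕ) : R) := jk_unit hp hip
    have hA : IsUnit ((2 * i % p ^ l : ℕ) : R) := jk_unit hp (mem_filter.1 (hmaps i hi)).2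
    have h2u : IsUnit (((2:ℕ):R) * ((i : ℕ) : R)) := h2.mul hu
    have hAd : ((2 * i % p ^ l : ℕ) : R) + ((p ^ l : ℕ) : R) * ((2 * i / p ^ l : ℕ) : R)
        = ((2:ℕ):R) * ((i : ℕ) : R) := by
      have h := Nat.mod_add_div (2 * i) (p ^ l)
      have h' : ((2 * i % p ^ l + p ^ l * (2 * i / p ^ l) : ℕ) : R) = ((2 * i : ℕ) : R) := by
        rw [h]
      push_cast at h' ⊢
      rw [Nat.cast_mul (α := R), Nat.cast_mul (α := R), Nat.cast_pow (α := R)] at h'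
      linear_combination h'
    have hsq : ((p ^ l : ℕ) : R) ^ 2 * ((((2:ℕ):R) * ((i : ℕ) : R))⁻¹) ^ 2
        = ((p ^ l : ℕ) : R) ^ 2 * ((((2 * i % p ^ l : ℕ) : R))⁻¹) ^ 2 := by
      apply jk_inv_sq_eq hA h2u
      rw [← hAd]
      linear_combination (-(2 * ((2 * i % p ^ l : ℕ) : R) * ((2 * i / p ^ l : ℕ) : R))
        - ((p ^ l : ℕ) : R) * ((2 * i / p ^ l : ℕ) : R) ^ 2) * hQ3
    have hinv2 : (((2:ℕ):R) * ((i : ℕ) : R))⁻¹ = (((2:ℕ):R))⁻¹ * (((i : ℕ) : R))⁻¹ := by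
      apply jk_inv_unique h2u
      have e2 : ((2:ℕ):R) * (((2:ℕ):R))⁻¹ = 1 := ZMod.mul_inv_of_unit _ h2
      have e3 : ((i : ℕ) : R) * (((i : ℕ) : R))⁻¹ = 1 := ZMod.mul_inv_of_unit _ hu
      calc ((2:ℕ):R) * ((i : ℕ) : R) * ((((2:ℕ):R))⁻¹ * (((i : ℕ) : R))⁻¹)
          = (((2:ℕ):R) * (((2:ℕ):R))⁻¹) * (((i : ℕ) : R) * (((i : ℕ) : R))⁻¹) := by ring
        _ = 1 := by rw [e2, e3]; ring
    rw [← hsq, hinv2]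
    ring
  have hsum : ∑ i ∈ B, ((p ^ l : ℕ) : R) ^ 2 * ((((i : ℕ) : R))⁻¹) ^ 2
      = ((((2:ℕ):R))⁻¹) ^ 2 * ∑ i ∈ B, ((p ^ l : ℕ) : R) ^ 2 * ((((i : ℕ) : R))⁻¹) ^ 2 := by
    conv_lhs => rw [← himage]
    rw [sum_image hinj, mul_sum]
    exact sum_congr rfl hkey
  set S : R := ∑ i ∈ B, ((p ^ l : ℕ) : R) ^ 2 * ((((i : ℕ) : R))⁻¹) ^ 2 with hS
  have e2 : ((2:ℕ):R) * (((2:ℕ):R))⁻¹ = 1 := ZMod.mul_inv_of_unit _ h2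
  have h3S : ((3:ℕ):R) * S = 0 := by
    push_cast
    push_cast at e2 hsum
    linear_combination (4:R) * hsum + ((2:R)*(2:R)⁻¹ + 1) * S * e2
  have h3 : IsUnit ((3:ℕ):R) := jk_unit hp (fun h => by have := Nat.le_of_dvd (by norm_num) h; omega)
  have e3 : ((3:ℕ):R) * (((3:ℕ):R))⁻¹ = 1 := ZMod.mul_inv_of_unit _ h3
  calc S = ((((3:ℕ):R)) * (((3:ℕ):R))⁻¹) * S := by rw [e3]; ring
    _ = (((3:ℕ):R))⁻¹ * (((3:ℕ):R) * S) := by ring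
    _ = 0 := by rw [h3S]; ring

lemma jk_pair {m : ℕ} {u v Q c : ZMod m} (hu : IsUnit u) (hv : IsUnit v)
    (hQ3 : Q ^ 3 = 0) (h : u + v = c * Q) :
    Q * u⁻¹ + Q * v⁻¹ + c * Q ^ 2 * (u⁻¹) ^ 2 = 0 := by
  apply IsUnit.mul_left_cancel ((hu.pow 2).mul hv)
  have e1 : u * u⁻¹ = 1 := ZMod.mul_inv_of_unit u hu
  have e2 : v * v⁻¹ = 1 := ZMod.mul_inv_of_unit v hv
  calc u ^ 2 * v * (Q * u⁻¹ + Q * v⁻¹ + c * Q ^ 2 * (u⁻¹) ^ 2)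
      = (u * u⁻¹) * (Q * u * v) + (v * v⁻¹) * (Q * u ^ 2) + (u * u⁻¹) ^ 2 * (c * Q ^ 2 * v) := by
        ring
    _ = Q * u * (u + v) + c * Q ^ 2 * v := by rw [e1, e2]; ring
    _ = Q * u * (c * Q) + c * Q ^ 2 * v := by rw [h]
    _ = c * Q ^ 2 * (u + v) := by ring
    _ = c * Q ^ 2 * (c * Q) := by rw [h]
    _ = c ^ 2 * Q ^ 3 := by ring
    _ = 0 := by rw [hQ3]; ring
    _ = u ^ 2 * v * 0 := by ring

section
variable {p l : ℕ}

lemma jk_S2 (hp : p.Prime) (hp3 : 3 < p) (hl : 0 < l) (K : ℕ) :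
    ∑ i ∈ (range (K * p ^ l)).filter (fun i => ¬ p ∣ i),
      ((p ^ l : ℕ) : ZMod (p ^ (3 * l))) ^ 2 * ((((i : ℕ) : ZMod (p ^ (3 * l))))⁻¹) ^ 2 = 0 := by
  set R := ZMod (p ^ (3 * l))
  have hpL : p ∣ p ^ l := dvd_pow_self p (by omega)
  have hQ3 : ((p ^ l : ℕ) : R) ^ 3 = 0 := jk_Q3 p l
  rw [jk_per_sum p (p ^ l) hpL K _ ?_, jk_base_sum hp hp3 hl, smul_zero]
  intro i hi
  have hip' : ¬ p ∣ (i + p ^ l) := fun h => hi (by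
    have := Nat.dvd_sub h hpL; simpa using this)
  have hu : IsUnit ((i : ℕ) : R) := jk_unit hp hi
  have hu' : IsUnit (((i + p ^ l : ℕ) : ℕ) : R) := jk_unit hp hip'
  have : ((p ^ l : ℕ) : R) ^ 2 * (((i + p ^ l : ℕ) : R)) ^ 2
      = ((p ^ l : ℕ) : R) ^ 2 * (((i : ℕ) : R)) ^ 2 := by
    have hQ3' := hQ3
    push_cast at hQ3' ⊢
    linear_combination (2 * ((i:ℕ) : R) + (p : R) ^ l) * hQ3'
  exact jk_inv_sq_eq hu hu' this.symm
end

lemma jk_S1 (hp : p.Prime) (hp3 : 3 < p) (hl : 0 < l) (K : ℕ) :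
    ((p ^ l : ℕ) : ZMod (p ^ (3 * l))) *
      ∑ i ∈ (range (K * p ^ l)).filter (fun i => ¬ p ∣ i), (((i : ℕ) : ZMod (p ^ (3 * l))))⁻¹
      = 0 := by
  set R := ZMod (p ^ (3 * l))
  set N := K * p ^ l with hN
  have hpN : p ∣ N := Dvd.dvd.mul_left (dvd_pow_self p (by omega)) K
  have hQ3 : ((p ^ l : ℕ) : R) ^ 3 = 0 := jk_Q3 p l
  set S := (range N).filter (fun i => ¬ p ∣ i) with hS
  have hmem : ∀ i ∈ S, i < N ∧ ¬ p ∣ i ∧ 0 < i := by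
    intro i hi
    obtain ⟨h1, h2⟩ := mem_filter.1 hi
    refine ⟨mem_range.1 h1, h2, ?_⟩
    rcases Nat.eq_zero_or_pos i with rfl | h
    · exact absurd (dvd_zero p) h2
    · exact h
  have hmaps : ∀ i ∈ S, N - i ∈ S := by
    intro i hi
    obtain ⟨h1, h2, h3⟩ := hmem i hi
    refine mem_filter.2 ⟨mem_range.2 (by omega), ?_⟩
    intro hdvd
    have : p ∣ i := by
      have := Nat.dvd_sub hpN hdvd
      rwa [Nat.sub_sub_self (le_of_lt h1)] at this
    exact h2 this
  have hinj : ∀ i ∈ S, ∀ j ∈ S, N - i = N - j → i = j := by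
    intro i hi j hj hij
    have h1 := (hmem i hi).1
    have h2 := (hmem j hj).1
    omega
  have himage : S.image (fun i => N - i) = S := by
    apply eq_of_subset_of_card_le
    · intro j hj
      obtain ⟨i, hi, rfl⟩ := mem_image.1 hj
      exact hmaps i hi
    · rw [Finset.card_image_of_injOn hinj]
  have hrev : ∑ i ∈ S, ((p ^ l : ℕ) : R) * ((((N - i : ℕ) : ℕ) : R))⁻¹
      = ∑ i ∈ S, ((p ^ l : ℕ) : R) * (((i : ℕ) : R))⁻¹ := by
    conv_rhs => rw [← himage]
    rw [sum_image hinj]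
  have hpairs : ∑ i ∈ S, (((p ^ l : ℕ) : R) * (((i : ℕ) : R))⁻¹
      + ((p ^ l : ℕ) : R) * ((((N - i : ℕ) : ℕ) : R))⁻¹
      + (K : R) * ((p ^ l : ℕ) : R) ^ 2 * ((((i : ℕ) : R))⁻¹) ^ 2) = 0 := by
    apply sum_eq_zero
    intro i hi
    obtain ⟨h1, h2, h3⟩ := hmem i hi
    have hu : IsUnit ((i : ℕ) : R) := jk_unit hp h2
    have hv : IsUnit (((N - i : ℕ) : ℕ) : R) := jk_unit hp (mem_filter.1 (hmaps i hi)).2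
    apply jk_pair hu hv hQ3
    have : ((i : ℕ) : R) + (((N - i : ℕ) : ℕ) : R) = ((N : ℕ) : R) := by
      rw [← Nat.cast_add, Nat.add_sub_cancel' (le_of_lt h1)]
    rw [this, hN]
    push_cast
    rw [Nat.cast_mul (α := R), Nat.cast_pow (α := R)]
  rw [sum_add_distrib, sum_add_distrib] at hpairs
  have hS2 := jk_S2 hp hp3 hl K
  have h3rd : ∑ i ∈ S, (K : R) * ((p ^ l : ℕ) : R) ^ 2 * ((((i : ℕ) : R))⁻¹) ^ 2 = 0 := by
    calc ∑ i ∈ S, (K : R) * ((p ^ l : ℕ) : R) ^ 2 * ((((i : ℕ) : R))⁻¹) ^ 2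
        = (K : R) * ∑ i ∈ S, ((p ^ l : ℕ) : R) ^ 2 * ((((i : ℕ) : R))⁻¹) ^ 2 := by
          rw [mul_sum]; exact sum_congr rfl fun i _ => by ring
      _ = 0 := by rw [hS2]; ring
  rw [hrev, h3rd, ← mul_sum] at hpairs
  have h2 : IsUnit ((2 : ℕ) : R) :=
    jk_unit hp (fun h => by have := Nat.le_of_dvd (by norm_num) h; omega)
  have e2 : ((2:ℕ):R) * (((2:ℕ):R))⁻¹ = 1 := ZMod.mul_inv_of_unit _ h2
  set T : R := ((p ^ l : ℕ) : R) * ∑ i ∈ S, (((i : ℕ) : R))⁻¹ with hT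
  have h2T : ((2:ℕ):R) * T = 0 := by
    push_cast at hpairs ⊢
    linear_combination hpairs
  calc T = (((2:ℕ):R))⁻¹ * (((2:ℕ):R) * T) := by
        rw [← mul_assoc, mul_comm (((2:ℕ):R))⁻¹, e2, one_mul]
    _ = 0 := by rw [h2T]; ring

lemma jk_prod {p l : ℕ} (hp : p.Prime) (hp3 : 3 < p) (hl : 0 < l) (K c : ℕ) (hK : 0 < K) :
    ∏ i ∈ (range (K * p ^ l)).filter (fun i => ¬ p ∣ i), ((c * p ^ l + i : ℕ) : ZMod (p ^ (3 * l)))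
      = ∏ i ∈ (range (K * p ^ l)).filter (fun i => ¬ p ∣ i), ((i : ℕ) : ZMod (p ^ (3 * l))) := by
  set R := ZMod (p ^ (3 * l)) with hR
  set S := (range (K * p ^ l)).filter (fun i => ¬ p ∣ i) with hS
  set Q : R := ((p ^ l : ℕ) : R) with hQ
  set C0 : R := (c : R) * Q with hC0
  have hQ3 : Q ^ 3 = 0 := jk_Q3 p l
  have hC03 : C0 ^ 3 = 0 := by
    rw [hC0, mul_pow, hQ3, mul_zero]
  have hunit : ∀ i ∈ S, IsUnit ((i : ℕ) : R) := fun i hi => jk_unit hp (mem_filter.1 hi).2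
  have h2 : IsUnit ((2 : ℕ) : R) :=
    jk_unit hp (fun h => by have := Nat.le_of_dvd (by norm_num) h; omega)
  set P : R := ∏ i ∈ S, ((i : ℕ) : R) with hP
  -- step 1 : cast and expand with prod_add
  have hcast : ∏ i ∈ S, ((c * p ^ l + i : ℕ) : R) = ∏ i ∈ S, (C0 + ((i : ℕ) : R)) := by
    apply prod_congr rfl
    intro i _
    rw [hC0, hQ, Nat.cast_add, Nat.cast_mul]
  rw [hcast]
  have hexp : ∏ i ∈ S, (C0 + ((i : ℕ) : R))
      = ∑ t ∈ S.powerset, C0 ^ t.card * ∏ i ∈ S \ t, ((i : ℕ) : R) := by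
    rw [prod_add]
    apply sum_congr rfl
    intro t _
    rw [prod_const]
  rw [hexp]
  -- step 2 : split powerset by card
  rw [powerset_card_disjiUnion]; erw [sum_disjiUnion]
  set G : ℕ → R := fun j => ∑ t ∈ S.powersetCard j, C0 ^ t.card * ∏ i ∈ S \ t, ((i : ℕ) : R)
    with hG
  show ∑ j ∈ range (S.card + 1), G j = P
  -- card S ≥ 2
  have hcard2 : 2 ≤ S.card := by
    have hsub : ({1, 2} : Finset ℕ) ⊆ S := by
      intro x hx
      have hN : p ≤ K * p ^ l := by
        calc p ≤ p ^ l := Nat.le_self_pow (by omega) p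
          _ ≤ K * p ^ l := Nat.le_mul_of_pos_left _ hK
      fin_cases hx
      · exact mem_filter.2 ⟨mem_range.2 (by omega), fun hdvd => by
          have := Nat.le_of_dvd (by norm_num) hdvd; omega⟩
      · exact mem_filter.2 ⟨mem_range.2 (by omega), fun hdvd => by
          have := Nat.le_of_dvd (by norm_num) hdvd; omega⟩
    calc 2 = ({1, 2} : Finset ℕ).card := by decide
      _ ≤ S.card := card_le_card hsub
  -- reduce to range 3
  have hsubr : range 3 ⊆ range (S.card + 1) := range_subset_range.2 (by omega)
  have hvanish : ∀ j ∈ range (S.card + 1), j ∉ range 3 → G j = 0 := by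
    intro j _ hj3
    have hj3' : 3 ≤ j := by simpa using hj3
    apply sum_eq_zero
    intro t ht
    rw [(mem_powersetCard.1 ht).2, show j = 3 + (j - 3) by omega, pow_add, hC03, zero_mul,
      zero_mul]
  rw [← sum_subset hsubr hvanish]
  have hr3 : ∑ x ∈ range 3, G x = G 0 + G 1 + G 2 := by simp [Finset.sum_range_succ]
  rw [hr3]
  -- G 0 = P
  have hG0 : G 0 = P := by
    rw [hG]
    simp only [powersetCard_zero, sum_singleton, card_empty, pow_zero, one_mul, sdiff_empty, hP]
  -- erase product formula
  have herase : ∀ i ∈ S, ∏ j ∈ S \ {i}, ((j : ℕ) : R) = (((i : ℕ) : R))⁻¹ * P := by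
    intro i hi
    rw [sdiff_singleton_eq_erase]
    have e := Finset.mul_prod_erase S (fun j => ((j : ℕ) : R)) hi
    have einv : (((i : ℕ) : R))⁻¹ * (((i : ℕ) : R)) = 1 := ZMod.inv_mul_of_unit _ (hunit i hi)
    calc ∏ j ∈ S.erase i, ((j : ℕ) : R)
        = ((((i : ℕ) : R))⁻¹ * (((i : ℕ) : R))) * ∏ j ∈ S.erase i, ((j : ℕ) : R) := by
          rw [einv, one_mul]
      _ = (((i : ℕ) : R))⁻¹ * P := by rw [mul_assoc, e, hP]
  -- G 1 = 0
  have hG1 : G 1 = 0 := by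
    rw [hG]
    simp only [powersetCard_one, sum_map, Function.Embedding.coeFn_mk, card_singleton, pow_one]
    have : ∀ i ∈ S, C0 * ∏ j ∈ S \ {i}, ((j : ℕ) : R)
        = ((c : R) * P) * (Q * (((i : ℕ) : R))⁻¹) := by
      intro i hi
      rw [herase i hi, hC0]
      ring
    rw [sum_congr rfl this, ← mul_sum, ← mul_sum, hQ]
    rw [jk_S1 hp hp3 hl K]
    ring
  -- sdiff product formula for pairs
  have hsdiff : ∀ t ∈ S.powersetCard 2, ∏ i ∈ S \ t, ((i : ℕ) : R)
      = (∏ i ∈ t, (((i : ℕ) : R))⁻¹) * P := by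
    intro t ht
    have htS : t ⊆ S := (mem_powersetCard.1 ht).1
    have e := prod_sdiff (f := fun j => ((j : ℕ) : R)) htS
    have hone : ∏ i ∈ t, ((((i : ℕ) : R)) * (((i : ℕ) : R))⁻¹) = 1 :=
      prod_eq_one fun i hi => ZMod.mul_inv_of_unit _ (hunit i (htS hi))
    calc ∏ i ∈ S \ t, ((i : ℕ) : R)
        = (∏ i ∈ S \ t, ((i : ℕ) : R)) * ∏ i ∈ t, ((((i : ℕ) : R)) * (((i : ℕ) : R))⁻¹) := by
          rw [hone, mul_one]
      _ = ((∏ i ∈ S \ t, ((i : ℕ) : R)) * ∏ i ∈ t, ((i : ℕ) : R))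
            * ∏ i ∈ t, (((i : ℕ) : R))⁻¹ := by rw [prod_mul_distrib]; ring
      _ = (∏ i ∈ t, (((i : ℕ) : R))⁻¹) * P := by rw [e, hP]; ring
  -- G 2 = 0
  have hG2 : G 2 = 0 := by
    show ∑ t ∈ S.powersetCard 2, C0 ^ t.card * ∏ i ∈ S \ t, ((i : ℕ) : R) = 0
    have hc2 : ∀ t ∈ S.powersetCard 2, C0 ^ t.card * ∏ i ∈ S \ t, ((i : ℕ) : R)
        = ((c : R) ^ 2 * P) * (Q ^ 2 * ∏ i ∈ t, (((i : ℕ) : R))⁻¹) := by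
      intro t ht
      rw [(mem_powersetCard.1 ht).2, hsdiff t ht, hC0]
      ring
    rw [sum_congr rfl hc2, ← mul_sum, ← mul_sum]
    have hE := jk_esymm2 S (fun i => (((i : ℕ) : R))⁻¹)
    have hS1 : Q * ∑ i ∈ S, (((i : ℕ) : R))⁻¹ = 0 := by rw [hQ]; exact jk_S1 hp hp3 hl K
    have hS2' : Q ^ 2 * ∑ i ∈ S, ((((i : ℕ) : R))⁻¹) ^ 2 = 0 := by
      rw [mul_sum, hQ]
      exact jk_S2 hp hp3 hl K
    have h2E : ((2:ℕ):R) * (Q ^ 2 * ∑ t ∈ S.powersetCard 2, ∏ i ∈ t, (((i : ℕ) : R))⁻¹) = 0 := by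
      push_cast
      linear_combination Q ^ 2 * hE + Q * (∑ i ∈ S, (((i : ℕ) : R))⁻¹) * hS1 - hS2'
    have e2 : ((2:ℕ):R) * (((2:ℕ):R))⁻¹ = 1 := ZMod.mul_inv_of_unit _ h2
    have hQ2E : Q ^ 2 * ∑ t ∈ S.powersetCard 2, ∏ i ∈ t, (((i : ℕ) : R))⁻¹ = 0 := by
      calc Q ^ 2 * ∑ t ∈ S.powersetCard 2, ∏ i ∈ t, (((i : ℕ) : R))⁻¹
          = (((2:ℕ):R))⁻¹ * (((2:ℕ):R) *
              (Q ^ 2 * ∑ t ∈ S.powersetCard 2, ∏ i ∈ t, (((i : ℕ) : R))⁻¹)) := by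
            rw [← mul_assoc, mul_comm (((2:ℕ):R))⁻¹, e2, one_mul]
      _ = 0 := by rw [h2E]; ring
    rw [hQ2E]
    ring
  rw [hG0, hG1, hG2]
  ring

lemma jk_Ioc_prod (n : ℕ) : ∏ i ∈ Ioc 0 n, i = n ! := by
  have h : Ioc 0 n = Ico 1 (n + 1) := by rw [← Finset.Icc_add_one_left_eq_Ioc, Finset.Ico_add_one_right_eq_Icc, Nat.zero_add]
  rw [h, prod_Ico_id_eq_factorial]

lemma jk_fact (p m : ℕ) (hp : 0 < p) :
    (m * p)! = p ^ m * m ! * ∏ i ∈ (Ioc 0 (m * p)).filter (fun i => ¬ p ∣ i), i := by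
  have hsplit := prod_filter_mul_prod_filter_not (Ioc 0 (m * p)) (fun i => p ∣ i) (fun i => i)
  have himg : ((Ioc 0 m).image (fun j => p * j)) = (Ioc 0 (m * p)).filter (fun i => p ∣ i) := by
    ext j
    simp only [mem_image, mem_filter, mem_Ioc]
    constructor
    · rintro ⟨i, ⟨hi0, him⟩, rfl⟩
      exact ⟨⟨by positivity, by calc p * i ≤ p * m := Nat.mul_le_mul_left p him
        _ = m * p := Nat.mul_comm p m⟩, Dvd.intro i rfl⟩
    · rintro ⟨⟨hj0, hjm⟩, i, rfl⟩
      exact ⟨i, ⟨Nat.pos_of_ne_zero (fun h => by subst h; simp at hj0), by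
        have := hjm
        rw [Nat.mul_comm m p] at this
        exact Nat.le_of_mul_le_mul_left this hp⟩, rfl⟩
  have hmul : ∏ i ∈ (Ioc 0 (m * p)).filter (fun i => p ∣ i), i = p ^ m * m ! := by
    rw [← himg, prod_image]
    · rw [prod_mul_distrib, prod_const, Nat.card_Ioc, Nat.sub_zero, jk_Ioc_prod]
    · intro a _ b _ hab
      exact Nat.eq_of_mul_eq_mul_left hp hab
  calc (m * p)! = ∏ i ∈ Ioc 0 (m * p), i := (jk_Ioc_prod _).symm
    _ = (∏ i ∈ (Ioc 0 (m * p)).filter (fun i => p ∣ i), i) *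
          ∏ i ∈ (Ioc 0 (m * p)).filter (fun i => ¬ p ∣ i), i := hsplit.symm
    _ = p ^ m * m ! * ∏ i ∈ (Ioc 0 (m * p)).filter (fun i => ¬ p ∣ i), i := by rw [hmul]

lemma jk_shift (p b c : ℕ) (hp : 0 < p) :
    ∏ i ∈ (Ioc 0 ((c + b) * p)).filter (fun i => ¬ p ∣ i), i
      = (∏ i ∈ (Ioc 0 (c * p)).filter (fun i => ¬ p ∣ i), i) *
        ∏ i ∈ (Ioc 0 (b * p)).filter (fun i => ¬ p ∣ i), (c * p + i) := by
  have hle : c * p ≤ (c + b) * p := Nat.mul_le_mul_right p (Nat.le_add_right c b)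
  have hunion : Ioc 0 ((c + b) * p) = Ioc 0 (c * p) ∪ Ioc (c * p) ((c + b) * p) :=
    (Ioc_union_Ioc_eq_Ioc (Nat.zero_le _) hle).symm
  have hdisj : Disjoint ((Ioc 0 (c * p)).filter (fun i => ¬ p ∣ i))
      ((Ioc (c * p) ((c + b) * p)).filter (fun i => ¬ p ∣ i)) := by
    apply disjoint_filter_filter
    rw [disjoint_left]
    intro i hi1 hi2
    exact absurd (mem_Ioc.1 hi2).1 (not_lt.2 (mem_Ioc.1 hi1).2)
  have himg : ((Ioc 0 (b * p)).filter (fun i => ¬ p ∣ i)).image (fun i => c * p + i)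
      = (Ioc (c * p) ((c + b) * p)).filter (fun i => ¬ p ∣ i) := by
    ext j
    simp only [mem_image, mem_filter, mem_Ioc]
    constructor
    · rintro ⟨i, ⟨⟨hi0, hib⟩, hip⟩, rfl⟩
      have hdist : (c + b) * p = c * p + b * p := by ring
      refine ⟨⟨by omega, by omega⟩, fun hdvd => hip ?_⟩
      have hcp : p ∣ c * p := Dvd.dvd.mul_left dvd_rfl c
      have := Nat.dvd_sub hdvd hcp
      simpa using this
    · rintro ⟨⟨hj1, hj2⟩, hjp⟩
      have hdist : (c + b) * p = c * p + b * p := by ring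
      refine ⟨j - c * p, ⟨⟨by omega, by omega⟩, fun hdvd => hjp ?_⟩, by omega⟩
      have hcp : p ∣ c * p := Dvd.dvd.mul_left dvd_rfl c
      have : p ∣ c * p + (j - c * p) := Nat.dvd_add hcp hdvd
      rwa [Nat.add_sub_cancel' (le_of_lt hj1)] at this
  rw [hunion, filter_union, prod_union hdisj, ← himg, prod_image]
  intro a _ b _ hab
  simp only at hab
  omega

lemma jk_nat (p b c : ℕ) (hp : 0 < p) :
    Nat.choose ((b + c) * p) (b * p) * ∏ i ∈ (Ioc 0 (b * p)).filter (fun i => ¬ p ∣ i), i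
      = Nat.choose (b + c) b * ∏ i ∈ (Ioc 0 (b * p)).filter (fun i => ¬ p ∣ i), (c * p + i) := by
  have hbp : b * p ≤ (b + c) * p := Nat.mul_le_mul_right p (Nat.le_add_right b c)
  have E1 := Nat.choose_mul_factorial_mul_factorial hbp
  have hsub : (b + c) * p - b * p = c * p := by
    have : (b + c) * p = b * p + c * p := by ring
    omega
  rw [hsub] at E1
  have Eabc := Nat.choose_mul_factorial_mul_factorial (Nat.le_add_right b c)
  rw [Nat.add_sub_cancel_left] at Eabc
  have Es := jk_shift p b c hp
  rw [show c + b = b + c from Nat.add_comm c b] at Es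
  rw [jk_fact p b hp, jk_fact p c hp, jk_fact p (b + c) hp, Es, ← Eabc] at E1
  set Ub := ∏ i ∈ (Ioc 0 (b * p)).filter (fun i => ¬ p ∣ i), i with hUb
  set Uc := ∏ i ∈ (Ioc 0 (c * p)).filter (fun i => ¬ p ∣ i), i with hUc
  set V := ∏ i ∈ (Ioc 0 (b * p)).filter (fun i => ¬ p ∣ i), (c * p + i) with hV
  have hUcpos : 0 < Uc := by
    apply prod_pos
    intro i hi
    exact (mem_Ioc.1 (mem_filter.1 hi).1).1
  have hMpos : 0 < p ^ (b + c) * (b ! * (c ! * Uc)) := by positivity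
  apply Nat.eq_of_mul_eq_mul_right hMpos
  calc Nat.choose ((b + c) * p) (b * p) * Ub * (p ^ (b + c) * (b ! * (c ! * Uc)))
      = Nat.choose ((b + c) * p) (b * p) * (p ^ b * b ! * Ub) * (p ^ c * c ! * Uc) := by ring
    _ = p ^ (b + c) * (Nat.choose (b + c) b * b ! * c !) * (Uc * V) := E1
    _ = Nat.choose (b + c) b * V * (p ^ (b + c) * (b ! * (c ! * Uc))) := by ring


lemma jk_final {p l K c : ℕ} (hp : p.Prime) (hp3 : 3 < p) (hl : 0 < l) (hK : 0 < K) :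
    Nat.choose ((K + c) * p ^ l) (K * p ^ l)
      ≡ Nat.choose ((K + c) * p ^ (l - 1)) (K * p ^ (l - 1)) [MOD p ^ (3 * l)] := by
  have hp' : 0 < p := by omega
  have hlp : p ^ (l - 1) * p = p ^ l := by
    rw [← pow_succ]
    congr 1
    omega
  have hb : (K * p ^ (l - 1)) * p = K * p ^ l := by rw [mul_assoc, hlp]
  have hcp : (c * p ^ (l - 1)) * p = c * p ^ l := by rw [mul_assoc, hlp]
  have hbc : K * p ^ (l - 1) + c * p ^ (l - 1) = (K + c) * p ^ (l - 1) := by ring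
  have habp : (K * p ^ (l - 1) + c * p ^ (l - 1)) * p = (K + c) * p ^ l := by
    rw [hbc, mul_assoc, hlp]
  have hpN : p ∣ K * p ^ l := Dvd.dvd.mul_left (dvd_pow_self p (by omega)) K
  have hsetq : (Ioc 0 (K * p ^ (l - 1) * p)).filter (fun i => ¬ p ∣ i)
      = (range (K * p ^ l)).filter (fun i => ¬ p ∣ i) := by
    rw [hb]
    ext i
    simp only [mem_filter, mem_Ioc, mem_range]
    constructor
    · rintro ⟨⟨h0, h1⟩, h2⟩
      refine ⟨?_, h2⟩
      rcases Nat.lt_or_ge i (K * p ^ l) with h | h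
      · exact h
      · have : i = K * p ^ l := by omega
        subst this
        exact absurd hpN h2
    · rintro ⟨h1, h2⟩
      refine ⟨⟨?_, by omega⟩, h2⟩
      rcases Nat.eq_zero_or_pos i with rfl | h
      · exact absurd (dvd_zero p) h2
      · exact h
  have hkey := jk_nat p (K * p ^ (l - 1)) (c * p ^ (l - 1)) hp'
  rw [habp, hsetq, hb, hbc] at hkey
  have hVU : (∏ i ∈ (range (K * p ^ l)).filter (fun i => ¬ p ∣ i), (c * p ^ (l - 1) * p + i))
      ≡ (∏ i ∈ (range (K * p ^ l)).filter (fun i => ¬ p ∣ i), i) [MOD p ^ (3 * l)] := by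
    have hprod := jk_prod hp hp3 hl K c hK
    rw [← ZMod.natCast_eq_natCast_iff]
    rw [Nat.cast_prod, Nat.cast_prod]
    simp only [hcp]
    exact hprod
  have hco : Nat.Coprime (p ^ (3 * l)) (∏ i ∈ (range (K * p ^ l)).filter (fun i => ¬ p ∣ i), i) := by
    apply Nat.Coprime.prod_right
    intro i hi
    exact Nat.Coprime.pow_left (3 * l) (hp.coprime_iff_not_dvd.2 (mem_filter.1 hi).2)
  apply Nat.ModEq.cancel_right_of_coprime hco
  calc Nat.choose ((K + c) * p ^ l) (K * p ^ l) * ∏ i ∈ (range (K * p ^ l)).filter (fun i => ¬ p ∣ i), i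
      = Nat.choose ((K + c) * p ^ (l - 1)) (K * p ^ (l - 1)) *
          ∏ i ∈ (range (K * p ^ l)).filter (fun i => ¬ p ∣ i), (c * p ^ (l - 1) * p + i) := hkey
    _ ≡ Nat.choose ((K + c) * p ^ (l - 1)) (K * p ^ (l - 1)) *
          ∏ i ∈ (range (K * p ^ l)).filter (fun i => ¬ p ∣ i), i [MOD p ^ (3 * l)] :=
        Nat.ModEq.mul_left _ hVU

theorem stmt_0 (p n k l : ℕ) (hp : p.Prime) (hp3 : 3 < p)
    (hn : 0 < n) (hk : 0 < k) (hl : 0 < l) (hkn : k ≤ n) :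
    Nat.choose (n * p ^ l) (k * p ^ l) ≡ Nat.choose (n * p ^ (l - 1)) (k * p ^ (l - 1)) [MOD p ^ (3 * l)] := by
  have hn' : k + (n - k) = n := by omega
  have := jk_final (p := p) (l := l) (K := k) (c := n - k) hp hp3 hl hk
  rwa [hn'] at this
end

section
/- For any prime p and positive integers n, k, l with k ≤ n, the binomial coefficient C(n·p^l, k·p^l) is congruent to C(n·p^(l-1), k·p^(l-1)) modulo p^(3l-1). -/
open Finset

namespace Jac

/-- numbers in `[0, Q)` not divisible by `p` -/
def US (p Q : ℕ) : Finset ℕ := (Finset.range Q).filter (fun i => ¬ p ∣ i)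

/-- product of numbers `< N` coprime to `p` -/
def V (p N : ℕ) : ℕ := ∏ i ∈ US p N, i

theorem blockProd {β : Type*} [CommMonoid β] (f : ℕ → β) (m Q : ℕ) :
    ∏ i ∈ range (m * Q), f i = ∏ j ∈ range m, ∏ r ∈ range Q, f (j * Q + r) := by
  induction m with
  | zero => simp
  | succ m ih =>
    rw [Nat.succ_mul, Finset.prod_range_add, ih, prod_range_succ]

theorem blockSum {β : Type*} [AddCommMonoid β] (f : ℕ → β) (m Q : ℕ) :
    ∑ i ∈ range (m * Q), f i = ∑ j ∈ range m, ∑ r ∈ range Q, f (j * Q + r) := by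
  induction m with
  | zero => simp
  | succ m ih =>
    rw [Nat.succ_mul, Finset.sum_range_add, ih, sum_range_succ]

theorem dvd_shift {p Q j r : ℕ} (hQ : p ∣ Q) : p ∣ j * Q + r ↔ p ∣ r :=
  Nat.dvd_add_right (hQ.mul_left j)

theorem US_block_prod {β : Type*} [CommMonoid β] (F : ℕ → β) {p Q : ℕ} (hQ : p ∣ Q) (m : ℕ) :
    ∏ i ∈ US p (m * Q), F i = ∏ j ∈ range m, ∏ i ∈ US p Q, F (j * Q + i) := by
  unfold US
  rw [prod_filter, blockProd]
  refine Finset.prod_congr rfl fun j _ => ?_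
  rw [prod_filter]
  refine Finset.prod_congr rfl fun r _ => ?_
  simp [dvd_shift hQ]

theorem US_block_sum {β : Type*} [AddCommMonoid β] (F : ℕ → β) {p Q : ℕ} (hQ : p ∣ Q) (m : ℕ) :
    ∑ i ∈ US p (m * Q), F i = ∑ j ∈ range m, ∑ i ∈ US p Q, F (j * Q + i) := by
  unfold US
  rw [sum_filter, blockSum]
  refine Finset.sum_congr rfl fun j _ => ?_
  rw [sum_filter]
  refine Finset.sum_congr rfl fun r _ => ?_
  simp [dvd_shift hQ]

theorem V_block {p Q : ℕ} (hQ : p ∣ Q) (m : ℕ) :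
    V p (m * Q) = ∏ j ∈ range m, ∏ i ∈ US p Q, (j * Q + i) :=
  US_block_prod id hQ m

theorem factorial_add_prod (A B : ℕ) :
    Nat.factorial (A + B) = Nat.factorial A * ∏ i ∈ range B, (A + i + 1) := by
  induction B with
  | zero => simp
  | succ B ih =>
    rw [← Nat.add_assoc, Nat.factorial_succ, prod_range_succ, ih]; ring

theorem US_self_prod (p : ℕ) (hp : p.Prime) (f : ℕ → ℕ) :
    ∏ i ∈ US p p, f i = ∏ r ∈ range (p - 1), f (r + 1) := by
  obtain ⟨t, ht⟩ : ∃ t, p = t + 1 := ⟨p - 1, (Nat.succ_pred_eq_of_pos hp.pos).symm⟩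
  subst ht
  unfold US
  rw [prod_filter, prod_range_succ']
  have h0 : (if ¬ (t + 1) ∣ 0 then f 0 else 1) = 1 := by simp
  rw [h0, mul_one, Nat.add_sub_cancel]
  refine Finset.prod_congr rfl fun r hr => ?_
  have hrlt : r + 1 < t + 1 := by have := Finset.mem_range.mp hr; omega
  have hnd : ¬ (t + 1) ∣ (r + 1) := by
    intro h
    have := Nat.le_of_dvd (Nat.succ_pos r) h
    omega
  simp [hnd]

theorem prod_range_pred (p : ℕ) (hp : p.Prime) (c : ℕ) :
    ∏ r ∈ range p, (c + r + 1) = (∏ r ∈ range (p - 1), (c + r + 1)) * (c + p) := by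
  obtain ⟨t, ht⟩ : ∃ t, p = t + 1 := ⟨p - 1, (Nat.succ_pred_eq_of_pos hp.pos).symm⟩
  subst ht
  rw [prod_range_succ, Nat.add_sub_cancel]
  ring

theorem fact_eq {p : ℕ} (hp : p.Prime) (m : ℕ) :
    Nat.factorial (m * p) = p ^ m * Nat.factorial m * V p (m * p) := by
  induction m with
  | zero => simp [V, US]
  | succ m ih =>
    have hpd : p ∣ p := dvd_rfl
    have hVs : V p ((m + 1) * p) = V p (m * p) * ∏ i ∈ US p p, (m * p + i) := by
      rw [V_block hpd (m + 1), prod_range_succ, ← V_block hpd m]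
    have hblock : ∏ i ∈ US p p, (m * p + i) = ∏ r ∈ range (p - 1), (m * p + r + 1) := by
      rw [US_self_prod p hp (fun i => m * p + i)]
      exact Finset.prod_congr rfl fun r _ => by omega
    have hfac : Nat.factorial ((m + 1) * p)
        = Nat.factorial (m * p) * ((∏ r ∈ range (p - 1), (m * p + r + 1)) * (m * p + p)) := by
      have h1 : (m + 1) * p = m * p + p := by ring
      rw [h1, factorial_add_prod (m * p) p, prod_range_pred p hp (m * p)]
    rw [hfac, ih, hVs, hblock]
    have h2 : m * p + p = p * (m + 1) := by ring
    rw [h2, Nat.factorial_succ]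
    ring

theorem key_id {p : ℕ} (hp : p.Prime) (e a b : ℕ) :
    Nat.choose ((a + b) * p ^ (e + 1)) (a * p ^ (e + 1)) * (V p (a * p ^ (e + 1)) * V p (b * p ^ (e + 1)))
      = Nat.choose ((a + b) * p ^ e) (a * p ^ e) * V p ((a + b) * p ^ (e + 1)) := by
  have hfac : ∀ m : ℕ, Nat.factorial (m * p ^ (e + 1))
      = p ^ (m * p ^ e) * Nat.factorial (m * p ^ e) * V p (m * p ^ (e + 1)) := by
    intro m
    have h1 : m * p ^ (e + 1) = (m * p ^ e) * p := by rw [pow_succ]; ring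
    rw [h1, fact_eq hp (m * p ^ e), ← h1]
  have hle1 : a * p ^ (e + 1) ≤ (a + b) * p ^ (e + 1) :=
    Nat.mul_le_mul_right _ (Nat.le_add_right a b)
  have hle0 : a * p ^ e ≤ (a + b) * p ^ e := Nat.mul_le_mul_right _ (Nat.le_add_right a b)
  have hsub1 : (a + b) * p ^ (e + 1) - a * p ^ (e + 1) = b * p ^ (e + 1) := by
    rw [add_mul]; omega
  have hsub0 : (a + b) * p ^ e - a * p ^ e = b * p ^ e := by rw [add_mul]; omega
  have h1 := Nat.choose_mul_factorial_mul_factorial hle1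
  have h0 := Nat.choose_mul_factorial_mul_factorial hle0
  rw [hsub1] at h1
  rw [hsub0] at h0
  have hpow : p ^ ((a + b) * p ^ e) = p ^ (a * p ^ e) * p ^ (b * p ^ e) := by
    rw [add_mul, pow_add]
  apply Nat.eq_of_mul_eq_mul_right (show 0 < p ^ ((a + b) * p ^ e)
    * (Nat.factorial (a * p ^ e) * Nat.factorial (b * p ^ e)) by
      have := hp.pos
      positivity)
  calc Nat.choose ((a + b) * p ^ (e + 1)) (a * p ^ (e + 1))
        * (V p (a * p ^ (e + 1)) * V p (b * p ^ (e + 1)))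
        * (p ^ ((a + b) * p ^ e) * (Nat.factorial (a * p ^ e) * Nat.factorial (b * p ^ e)))
      = Nat.choose ((a + b) * p ^ (e + 1)) (a * p ^ (e + 1))
        * ((p ^ (a * p ^ e) * Nat.factorial (a * p ^ e) * V p (a * p ^ (e + 1)))
          * (p ^ (b * p ^ e) * Nat.factorial (b * p ^ e) * V p (b * p ^ (e + 1)))) := by
        rw [hpow]; ring
    _ = Nat.choose ((a + b) * p ^ (e + 1)) (a * p ^ (e + 1))
        * (Nat.factorial (a * p ^ (e + 1)) * Nat.factorial (b * p ^ (e + 1))) := by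
        rw [← hfac a, ← hfac b]
    _ = Nat.factorial ((a + b) * p ^ (e + 1)) := by rw [← h1]; ring
    _ = p ^ ((a + b) * p ^ e) * Nat.factorial ((a + b) * p ^ e) * V p ((a + b) * p ^ (e + 1)) :=
        hfac (a + b)
    _ = p ^ ((a + b) * p ^ e)
        * (Nat.choose ((a + b) * p ^ e) (a * p ^ e) * Nat.factorial (a * p ^ e)
          * Nat.factorial (b * p ^ e)) * V p ((a + b) * p ^ (e + 1)) := by rw [h0]
    _ = Nat.choose ((a + b) * p ^ e) (a * p ^ e) * V p ((a + b) * p ^ (e + 1))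
        * (p ^ ((a + b) * p ^ e) * (Nat.factorial (a * p ^ e) * Nat.factorial (b * p ^ e))) := by
        ring

theorem zmod_lift {n d : ℕ} [NeZero n] (x : ZMod n) (h : d ∣ x.val) :
    ∃ y, x = (d : ZMod n) * y := by
  obtain ⟨w, hw⟩ := h
  exact ⟨(w : ZMod n), by rw [← Nat.cast_mul, ← hw, ZMod.natCast_zmod_val]⟩

theorem zmod_kernel {n : ℕ} (c d : ℕ) [NeZero n] (hcd : n = c * d) (hc : 0 < c)
    (z : ZMod n) (h : (c : ZMod n) * z = 0) : ∃ w, z = (d : ZMod n) * w := by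
  apply zmod_lift
  have h2 : ((c * z.val : ℕ) : ZMod n) = 0 := by
    push_cast [ZMod.natCast_zmod_val]; exact h
  rw [ZMod.natCast_eq_zero_iff] at h2
  have h3 : c * d ∣ c * z.val := by rw [← hcd]; exact h2
  exact (mul_dvd_mul_iff_left hc.ne').mp h3

theorem castHom_inv {n m : ℕ} (hm : m ∣ n) (x : ZMod n) (hx : IsUnit x) :
    ZMod.castHom hm (ZMod m) x⁻¹ = (ZMod.castHom hm (ZMod m) x)⁻¹ := by
  have h1 : x * x⁻¹ = 1 := ZMod.mul_inv_of_unit x hx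
  have h2 := congrArg (ZMod.castHom hm (ZMod m)) h1
  rw [map_mul, map_one] at h2
  exact (ZMod.inv_eq_of_mul_eq_one _ _ _ h2).symm

theorem inv_add_inv {n : ℕ} (x y : ZMod n) (hx : IsUnit x) (hy : IsUnit y) :
    x⁻¹ + y⁻¹ = (x + y) * (x⁻¹ * y⁻¹) := by
  have hx1 := ZMod.mul_inv_of_unit x hx
  have hy1 := ZMod.mul_inv_of_unit y hy
  linear_combination (-y⁻¹) * hx1 + (-x⁻¹) * hy1

theorem expand {n : ℕ} (qq : ZMod n) (hq3 : qq ^ 3 = 0) (s : Finset ℕ)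
    (hs : ∀ i ∈ s, IsUnit ((i : ZMod n))) :
    ∃ E : ZMod n, (∀ j : ℕ, ∏ i ∈ s, ((j : ZMod n) * qq + (i : ZMod n)) =
        (∏ i ∈ s, (i : ZMod n)) * (1 + (j : ZMod n) * (qq * (∑ i ∈ s, ((i : ZMod n))⁻¹))
          + (j : ZMod n) ^ 2 * (qq ^ 2 * E)))
      ∧ 2 * E = (∑ i ∈ s, ((i : ZMod n))⁻¹) ^ 2 - (∑ i ∈ s, (((i : ZMod n))⁻¹) ^ 2) := by
  induction s using Finset.induction_on with
  | empty => exact ⟨0, fun j => by simp, by simp⟩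
  | @insert i₀ s hi₀ ih =>
    obtain ⟨E, hE, hrel⟩ := ih (fun i hi => hs i (Finset.mem_insert_of_mem hi))
    have hu := hs i₀ (Finset.mem_insert_self i₀ s)
    have hiv : (i₀ : ZMod n) * (i₀ : ZMod n)⁻¹ = 1 := ZMod.mul_inv_of_unit _ hu
    refine ⟨E + (i₀ : ZMod n)⁻¹ * (∑ i ∈ s, ((i : ZMod n))⁻¹), fun j => ?_, ?_⟩
    · rw [Finset.prod_insert hi₀, hE j, Finset.prod_insert hi₀, Finset.sum_insert hi₀]
      linear_combination (-((j : ZMod n) * qq * (∏ i ∈ s, (i : ZMod n))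
          + (j : ZMod n) ^ 2 * qq ^ 2 * (∏ i ∈ s, (i : ZMod n))
            * (∑ i ∈ s, ((i : ZMod n))⁻¹))) * hiv
        + ((j : ZMod n) ^ 3 * (∏ i ∈ s, (i : ZMod n)) * E) * hq3
    · rw [Finset.sum_insert hi₀, Finset.sum_insert hi₀]
      linear_combination hrel

theorem Gprod {n : ℕ} (α β : ZMod n) (hαα : α * α = 0) (hαβ : α * β = 0) (hββ : β * β = 0)
    (m : ℕ) :
    ∏ j ∈ range m, (1 + (j : ZMod n) * α + (j : ZMod n) ^ 2 * β)
      = 1 + ((∑ j ∈ range m, j : ℕ) : ZMod n) * α + ((∑ j ∈ range m, j ^ 2 : ℕ) : ZMod n) * β := by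
  induction m with
  | zero => simp
  | succ m ih =>
    rw [prod_range_succ, ih, sum_range_succ, sum_range_succ]
    push_cast
    linear_combination ((∑ j ∈ range m, (j : ZMod n)) * (m : ZMod n)) * hαα
      + ((∑ j ∈ range m, (j : ZMod n)) * (m : ZMod n) ^ 2
        + (∑ j ∈ range m, (j : ZMod n) ^ 2) * (m : ZMod n)) * hαβ
      + ((∑ j ∈ range m, (j : ZMod n) ^ 2) * (m : ZMod n) ^ 2) * hββ

theorem sum_id_add (a b : ℕ) :
    ∑ j ∈ range (a + b), j = (∑ j ∈ range a, j) + (∑ j ∈ range b, j) + a * b := by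
  induction b with
  | zero => simp
  | succ b ih =>
    rw [show a + (b + 1) = (a + b) + 1 from rfl, sum_range_succ, sum_range_succ, ih]
    ring

theorem sum_sq_add (a b : ℕ) :
    (∑ j ∈ range (a + b), j ^ 2) + a * b
      = (∑ j ∈ range a, j ^ 2) + (∑ j ∈ range b, j ^ 2) + a * b * (a + b) := by
  induction b with
  | zero => simp
  | succ b ih =>
    rw [show a + (b + 1) = (a + b) + 1 from rfl, sum_range_succ, sum_range_succ]
    zify at ih ⊢
    linear_combination ih

theorem six_sum_sq (M : ℕ) :
    6 * ∑ i ∈ range M, (i : ℤ) ^ 2 = M * (M - 1) * (2 * M - 1) := by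
  induction M with
  | zero => simp
  | succ M ih =>
    rw [sum_range_succ, mul_add, ih]
    push_cast
    ring

theorem sq_div {p : ℕ} (hp : p.Prime) (m : ℕ) :
    p ^ (m - 1) ∣ ∑ i ∈ US p (p ^ m), i ^ 2 := by
  obtain _ | m' := m
  · simp
  rw [Nat.add_sub_cancel]
  have hP : (0 : ℕ) < p := hp.pos
  -- work over ℤ
  have h_split : (∑ i ∈ (range (p ^ (m' + 1))).filter (fun i => p ∣ i), (i : ℤ) ^ 2)
      + ∑ i ∈ US p (p ^ (m' + 1)), (i : ℤ) ^ 2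
      = ∑ i ∈ range (p ^ (m' + 1)), (i : ℤ) ^ 2 :=
    Finset.sum_filter_add_sum_filter_not (range (p ^ (m' + 1))) (fun i => p ∣ i) _
  have h_mult : ∑ i ∈ (range (p ^ (m' + 1))).filter (fun i => p ∣ i), (i : ℤ) ^ 2
      = ∑ s ∈ range (p ^ m'), ((p * s : ℕ) : ℤ) ^ 2 := by
    apply Finset.sum_nbij' (fun i => i / p) (fun s => p * s)
    · intro i hi
      rw [Finset.mem_filter, Finset.mem_range] at hi
      rw [Finset.mem_range]
      rw [Nat.div_lt_iff_lt_mul hP]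
      calc i < p ^ (m' + 1) := hi.1
        _ = p ^ m' * p := by rw [pow_succ]
    · intro a ha
      rw [Finset.mem_range] at ha
      rw [Finset.mem_filter, Finset.mem_range]
      constructor
      · calc p * a < p * p ^ m' := by exact (Nat.mul_lt_mul_left hP).mpr ha
          _ = p ^ (m' + 1) := by rw [pow_succ]; ring
      · exact dvd_mul_right p a
    · intro i hi
      rw [Finset.mem_filter] at hi
      exact Nat.mul_div_cancel' hi.2
    · intro a _
      exact Nat.mul_div_cancel_left a hP
    · intro i hi
      rw [Finset.mem_filter] at hi
      rw [Nat.mul_div_cancel' hi.2]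
  have e1 := six_sum_sq (p ^ (m' + 1))
  have e2 := six_sum_sq (p ^ m')
  push_cast at e1 e2
  have h_mult' : ∑ i ∈ (range (p ^ (m' + 1))).filter (fun i => p ∣ i), (i : ℤ) ^ 2
      = (p : ℤ) ^ 2 * ∑ s ∈ range (p ^ m'), (s : ℤ) ^ 2 := by
    rw [h_mult, Finset.mul_sum]
    refine Finset.sum_congr rfl fun s _ => ?_
    push_cast
    ring
  set X : ℤ := ∑ i ∈ US p (p ^ (m' + 1)), (i : ℤ) ^ 2 with hX
  have h6 : 6 * X = (p : ℤ) ^ (m' + 1)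
      * (((p : ℤ) ^ (m' + 1) - 1) * (2 * (p : ℤ) ^ (m' + 1) - 1)
        - (p : ℤ) * (((p : ℤ) ^ m' - 1) * (2 * (p : ℤ) ^ m' - 1))) := by
    have hXe : X = (∑ i ∈ range (p ^ (m' + 1)), (i : ℤ) ^ 2)
        - (p : ℤ) ^ 2 * ∑ s ∈ range (p ^ m'), (s : ℤ) ^ 2 := by
      rw [← h_mult', ← h_split]; ring
    rw [hXe]
    push_cast
    linear_combination e1 - (p : ℤ) ^ 2 * e2
  have hdvdX : (p : ℤ) ^ m' ∣ X := by
    by_cases h2 : p = 2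
    · subst h2
      have h3X : 3 * X = (2 : ℤ) ^ m'
          * (((2 : ℤ) ^ (m' + 1) - 1) * (2 * (2 : ℤ) ^ (m' + 1) - 1)
            - (2 : ℤ) * (((2 : ℤ) ^ m' - 1) * (2 * (2 : ℤ) ^ m' - 1))) := by
        apply mul_left_cancel₀ (show (2 : ℤ) ≠ 0 by norm_num)
        calc (2 : ℤ) * (3 * X) = 6 * X := by ring
          _ = _ := by rw [h6]; push_cast; ring
      have hdvd : (2 : ℤ) ^ m' ∣ 3 * X := Dvd.intro _ h3X.symm
      have hcop : IsCoprime ((2 : ℤ) ^ m') 3 := by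
        rw [show ((2 : ℤ) ^ m') = ((2 ^ m' : ℕ) : ℤ) by push_cast; ring,
          show (3 : ℤ) = ((3 : ℕ) : ℤ) by norm_num, Nat.isCoprime_iff_coprime]
        exact Nat.Coprime.pow_left _ (by decide)
      exact hcop.dvd_of_dvd_mul_left hdvd
    by_cases h3 : p = 3
    · subst h3
      have h2X : 2 * X = (3 : ℤ) ^ m'
          * (((3 : ℤ) ^ (m' + 1) - 1) * (2 * (3 : ℤ) ^ (m' + 1) - 1)
            - (3 : ℤ) * (((3 : ℤ) ^ m' - 1) * (2 * (3 : ℤ) ^ m' - 1))) := by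
        apply mul_left_cancel₀ (show (3 : ℤ) ≠ 0 by norm_num)
        calc (3 : ℤ) * (2 * X) = 6 * X := by ring
          _ = _ := by rw [h6]; push_cast; ring
      have hdvd : (3 : ℤ) ^ m' ∣ 2 * X := Dvd.intro _ h2X.symm
      have hcop : IsCoprime ((3 : ℤ) ^ m') 2 := by
        rw [show ((3 : ℤ) ^ m') = ((3 ^ m' : ℕ) : ℤ) by push_cast; ring,
          show (2 : ℤ) = ((2 : ℕ) : ℤ) by norm_num, Nat.isCoprime_iff_coprime]
        exact Nat.Coprime.pow_left _ (by decide)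
      exact hcop.dvd_of_dvd_mul_left hdvd
    · have hdvd : (p : ℤ) ^ (m' + 1) ∣ 6 * X := Dvd.intro _ h6.symm
      have hcopnat : Nat.Coprime (p ^ (m' + 1)) 6 := by
        apply Nat.Coprime.pow_left
        rw [Nat.Prime.coprime_iff_not_dvd hp]
        intro hd
        have hd' : p ∣ 2 * 3 := by
          have h23 : (2 * 3 : ℕ) = 6 := by norm_num
          rw [h23]; exact hd
        rcases (Nat.Prime.dvd_mul hp).mp hd' with h | h
        · exact h2 ((Nat.prime_dvd_prime_iff_eq hp Nat.prime_two).mp h)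
        · exact h3 ((Nat.prime_dvd_prime_iff_eq hp Nat.prime_three).mp h)
      have hcop : IsCoprime ((p : ℤ) ^ (m' + 1)) 6 := by
        rw [show ((p : ℤ) ^ (m' + 1)) = ((p ^ (m' + 1) : ℕ) : ℤ) by push_cast; ring,
          show (6 : ℤ) = ((6 : ℕ) : ℤ) by norm_num, Nat.isCoprime_iff_coprime]
        exact hcopnat
      have hX6 := hcop.dvd_of_dvd_mul_left hdvd
      exact dvd_trans (pow_dvd_pow _ (Nat.le_succ m')) hX6
  have hXnat : X = ((∑ i ∈ US p (p ^ (m' + 1)), i ^ 2 : ℕ) : ℤ) := by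
    rw [hX]; push_cast; rfl
  rw [hXnat] at hdvdX
  rw [show ((p : ℤ) ^ m') = ((p ^ m' : ℕ) : ℤ) by push_cast; ring] at hdvdX
  exact_mod_cast hdvdX

theorem choose_even (e a b : ℕ) (ha : Odd a) (hb : Odd b) :
    2 ∣ Nat.choose ((a + b) * 2 ^ e) (a * 2 ^ e) := by
  have hpe : (0 : ℕ) < 2 ^ e := pow_pos (by norm_num) e
  have hK : 0 < a * 2 ^ e := Nat.mul_pos ha.pos hpe
  have hN : 0 < (a + b) * 2 ^ e := Nat.mul_pos (Nat.add_pos_left ha.pos b) hpe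
  obtain ⟨K', hK'⟩ : ∃ t, a * 2 ^ e = t + 1 := ⟨a * 2 ^ e - 1, by omega⟩
  obtain ⟨N', hN'⟩ : ∃ t, (a + b) * 2 ^ e = t + 1 := ⟨(a + b) * 2 ^ e - 1, by omega⟩
  have h := Nat.add_one_mul_choose_eq N' K'
  rw [← hN', ← hK'] at h
  -- h : (a+b)*2^e * choose N' K' = choose ((a+b)*2^e) (a*2^e) * (a*2^e)
  have h3 : Nat.choose ((a + b) * 2 ^ e) (a * 2 ^ e) * a = (a + b) * Nat.choose N' K' := by
    apply Nat.eq_of_mul_eq_mul_right hpe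
    calc Nat.choose ((a + b) * 2 ^ e) (a * 2 ^ e) * a * 2 ^ e
        = Nat.choose ((a + b) * 2 ^ e) (a * 2 ^ e) * (a * 2 ^ e) := by ring
      _ = (a + b) * 2 ^ e * Nat.choose N' K' := h.symm
      _ = (a + b) * Nat.choose N' K' * 2 ^ e := by ring
  have hab : 2 ∣ (a + b) := (ha.add_odd hb).two_dvd
  have h4 : 2 ∣ Nat.choose ((a + b) * 2 ^ e) (a * 2 ^ e) * a := by
    rw [h3]; exact Dvd.dvd.mul_right hab _
  rcases (Nat.Prime.dvd_mul Nat.prime_two).mp h4 with h | h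
  · exact h
  · exfalso
    have := Nat.odd_iff.mp ha
    omega

theorem cast_unit {p : ℕ} (hp : p.Prime) (N i : ℕ) [NeZero (p ^ N)] (h : ¬ p ∣ i) :
    IsUnit ((i : ZMod (p ^ N))) := by
  rw [ZMod.isUnit_iff_coprime]
  exact Nat.Coprime.pow_right _ (((Nat.Prime.coprime_iff_not_dvd hp).mpr h).symm)

theorem notdvd_of_mem_US {p Q i : ℕ} (hi : i ∈ US p Q) : ¬ p ∣ i :=
  (Finset.mem_filter.mp hi).2

theorem lt_of_mem_US {p Q i : ℕ} (hi : i ∈ US p Q) : i < Q :=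
  Finset.mem_range.mp (Finset.mem_filter.mp hi).1

theorem inv_val_mem_US {p N : ℕ} (hp : p.Prime) [NeZero (p ^ N)] (hN : 1 ≤ N) {r : ℕ}
    (hr : r ∈ US p (p ^ N)) : (((r : ZMod (p ^ N)))⁻¹).val ∈ US p (p ^ N) := by
  have hu : IsUnit ((r : ZMod (p ^ N))) := cast_unit hp N r (notdvd_of_mem_US hr)
  have hu' : IsUnit (((r : ZMod (p ^ N)))⁻¹) :=
    IsUnit.of_mul_eq_one _ (ZMod.inv_mul_of_unit _ hu)
  rw [US, Finset.mem_filter, Finset.mem_range]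
  refine ⟨ZMod.val_lt _, ?_⟩
  intro hdvd
  have hcop : Nat.Coprime ((((r : ZMod (p ^ N)))⁻¹).val) (p ^ N) := by
    have := ZMod.val_coe_unit_coprime hu'.unit
    rwa [IsUnit.unit_spec] at this
  have hdp : p ∣ p ^ N := dvd_pow_self p (by omega)
  have := Nat.dvd_gcd hdvd hdp
  rw [Nat.Coprime] at hcop
  rw [hcop] at this
  have := Nat.le_of_dvd one_pos this
  have := hp.one_lt
  omega

theorem estB {p : ℕ} (hp : p.Prime) (e M : ℕ) (hM : e + 1 ≤ M) [NeZero (p ^ M)] :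
    ∃ y, ∑ i ∈ US p (p ^ (e + 1)), (((i : ZMod (p ^ M)))⁻¹) ^ 2
      = (p : ZMod (p ^ M)) ^ e * y := by
  obtain _ | e' := e
  · exact ⟨_, by rw [pow_zero, one_mul]⟩
  haveI : NeZero (p ^ (e' + 1)) := NeZero.of_pos (pow_pos hp.pos _)
  have hdvdpow : p ^ (e' + 1) ∣ p ^ M := pow_dvd_pow p (by omega)
  let φ : ZMod (p ^ M) →+* ZMod (p ^ (e' + 1)) := ZMod.castHom hdvdpow (ZMod (p ^ (e' + 1)))
  set B : ZMod (p ^ M) := ∑ i ∈ US p (p ^ (e' + 1 + 1)), (((i : ZMod (p ^ M)))⁻¹) ^ 2 with hB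
  have hφB : φ B = ∑ i ∈ US p (p ^ (e' + 1 + 1)), (((i : ZMod (p ^ (e' + 1))))⁻¹) ^ 2 := by
    rw [hB, map_sum]
    refine Finset.sum_congr rfl fun i hi => ?_
    rw [map_pow, castHom_inv hdvdpow _ (cast_unit hp M i (notdvd_of_mem_US hi)), map_natCast]
  have hQdvd : p ∣ p ^ (e' + 1) := dvd_pow_self p (Nat.succ_ne_zero e')
  have hblock : ∑ i ∈ US p (p ^ (e' + 1 + 1)), (((i : ZMod (p ^ (e' + 1))))⁻¹) ^ 2
      = ∑ j ∈ range p, ∑ r ∈ US p (p ^ (e' + 1)), ((((j * p ^ (e' + 1) + r : ℕ) : ZMod (p ^ (e' + 1))))⁻¹) ^ 2 := by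
    rw [show p ^ (e' + 1 + 1) = p * p ^ (e' + 1) from by rw [pow_succ']]
    exact US_block_sum _ hQdvd p
  have hcast : ∀ j r : ℕ, ((j * p ^ (e' + 1) + r : ℕ) : ZMod (p ^ (e' + 1))) = (r : ZMod (p ^ (e' + 1))) := by
    intro j r
    have hz : ((p ^ (e' + 1) : ℕ) : ZMod (p ^ (e' + 1))) = 0 := ZMod.natCast_self _
    rw [Nat.cast_add, Nat.cast_mul, hz, mul_zero, zero_add]
  have hT : ∑ r ∈ US p (p ^ (e' + 1)), (((r : ZMod (p ^ (e' + 1))))⁻¹) ^ 2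
      = ((∑ r ∈ US p (p ^ (e' + 1)), r ^ 2 : ℕ) : ZMod (p ^ (e' + 1))) := by
    have step1 : ∑ r ∈ US p (p ^ (e' + 1)), (((r : ZMod (p ^ (e' + 1))))⁻¹) ^ 2
        = ∑ r ∈ US p (p ^ (e' + 1)), ((r : ZMod (p ^ (e' + 1)))) ^ 2 := by
      refine Finset.sum_nbij' (fun r => (((r : ZMod (p ^ (e' + 1))))⁻¹).val)
        (fun r => (((r : ZMod (p ^ (e' + 1))))⁻¹).val) ?_ ?_ ?_ ?_ ?_
      · intro r hr; exact inv_val_mem_US hp (by omega) hr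
      · intro r hr; exact inv_val_mem_US hp (by omega) hr
      · intro r hr
        rw [ZMod.natCast_zmod_val]
        rw [ZMod.inv_eq_of_mul_eq_one _ _ _
          (ZMod.inv_mul_of_unit _ (cast_unit hp _ r (notdvd_of_mem_US hr)))]
        exact ZMod.val_cast_of_lt (lt_of_mem_US hr)
      · intro r hr
        rw [ZMod.natCast_zmod_val]
        rw [ZMod.inv_eq_of_mul_eq_one _ _ _
          (ZMod.inv_mul_of_unit _ (cast_unit hp _ r (notdvd_of_mem_US hr)))]
        exact ZMod.val_cast_of_lt (lt_of_mem_US hr)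
      · intro r _
        rw [ZMod.natCast_zmod_val]
    rw [step1]
    push_cast
    rfl
  have hzero : φ B = 0 := by
    rw [hφB, hblock]
    have : ∀ j ∈ range p, ∑ r ∈ US p (p ^ (e' + 1)), ((((j * p ^ (e' + 1) + r : ℕ) : ZMod (p ^ (e' + 1))))⁻¹) ^ 2
        = ((∑ r ∈ US p (p ^ (e' + 1)), r ^ 2 : ℕ) : ZMod (p ^ (e' + 1))) := by
      intro j _
      rw [← hT]
      exact Finset.sum_congr rfl fun r _ => by rw [hcast]
    rw [Finset.sum_congr rfl this, Finset.sum_const, Finset.card_range, nsmul_eq_mul]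
    rw [← Nat.cast_mul, ZMod.natCast_eq_zero_iff]
    have hsq := sq_div hp (e' + 1)
    rw [Nat.add_sub_cancel] at hsq
    calc p ^ (e' + 1) = p * p ^ e' := by rw [pow_succ']
      _ ∣ p * ∑ r ∈ US p (p ^ (e' + 1)), r ^ 2 := mul_dvd_mul_left p hsq
  have hdvd_val : p ^ (e' + 1) ∣ B.val := by
    have h1 : φ B = ((B.val : ℕ) : ZMod (p ^ (e' + 1))) := by
      conv_lhs => rw [show B = ((B.val : ℕ) : ZMod (p ^ M)) from (ZMod.natCast_zmod_val B).symm]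
      rw [map_natCast]
    rw [h1] at hzero
    exact (ZMod.natCast_eq_zero_iff _ _).mp hzero
  obtain ⟨y, hy⟩ := zmod_lift B hdvd_val
  exact ⟨y, by rw [hy, Nat.cast_pow]⟩

theorem main (p : ℕ) (hp : p.Prime) (e a b : ℕ) :
    Nat.choose ((a + b) * p ^ (e + 1)) (a * p ^ (e + 1))
      ≡ Nat.choose ((a + b) * p ^ e) (a * p ^ e) [MOD p ^ (3 * e + 2)] := by
  haveI : NeZero (p ^ (3 * e + 2)) := NeZero.of_pos (pow_pos hp.pos _)
  have h0 : (p : ZMod (p ^ (3 * e + 2))) ^ (3 * e + 2) = 0 := by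
    rw [← Nat.cast_pow, ZMod.natCast_self]
  have hq3 : ((p : ZMod (p ^ (3 * e + 2))) ^ (e + 1)) ^ 3 = 0 := by
    have hsplit : ((p : ZMod (p ^ (3 * e + 2))) ^ (e + 1)) ^ 3
        = (p : ZMod (p ^ (3 * e + 2))) ^ (3 * e + 2) * (p : ZMod (p ^ (3 * e + 2))) := by
      rw [← pow_mul, ← pow_succ]
      congr 1
      ring
    rw [hsplit, h0, zero_mul]
  have hunit : ∀ i ∈ US p (p ^ (e + 1)), IsUnit ((i : ZMod (p ^ (3 * e + 2)))) :=
    fun i hi => cast_unit hp _ i (notdvd_of_mem_US hi)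
  obtain ⟨E, hE, hrel⟩ := expand ((p : ZMod (p ^ (3 * e + 2))) ^ (e + 1)) hq3 (US p (p ^ (e + 1))) hunit
  obtain ⟨yB, hyB⟩ := estB hp e (3 * e + 2) (by omega)
  have hmemUS : ∀ i ∈ US p (p ^ (e + 1)), p ^ (e + 1) - i ∈ US p (p ^ (e + 1)) := by
    intro i hi
    have h1 : i < p ^ (e + 1) := lt_of_mem_US hi
    have h2 : ¬ p ∣ i := notdvd_of_mem_US hi
    have hipos : 0 < i := Nat.pos_of_ne_zero (fun h => h2 (h ▸ dvd_zero p))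
    rw [US, Finset.mem_filter, Finset.mem_range]
    refine ⟨by omega, fun hdvd => h2 ?_⟩
    have hq : p ∣ p ^ (e + 1) := dvd_pow_self p (Nat.succ_ne_zero e)
    have h3 := Nat.dvd_sub hq hdvd
    rwa [Nat.sub_sub_self (le_of_lt h1)] at h3
  have hcastsum : ∀ i ∈ US p (p ^ (e + 1)),
      (i : ZMod (p ^ (3 * e + 2))) + (((p ^ (e + 1) - i : ℕ) : ZMod (p ^ (3 * e + 2)))) = (p : ZMod (p ^ (3 * e + 2))) ^ (e + 1) := by
    intro i hi
    have h1 : i < p ^ (e + 1) := lt_of_mem_US hi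
    rw [← Nat.cast_pow, ← Nat.cast_add]
    congr 1
    omega
  have hApair : (∑ i ∈ US p (p ^ (e + 1)), ((i : ZMod (p ^ (3 * e + 2))))⁻¹) = ∑ i ∈ US p (p ^ (e + 1)), (((p ^ (e + 1) - i : ℕ) : ZMod (p ^ (3 * e + 2))))⁻¹ := by
    refine Finset.sum_nbij' (fun i => p ^ (e + 1) - i) (fun i => p ^ (e + 1) - i)
      (fun i hi => hmemUS i hi) (fun i hi => hmemUS i hi) ?_ ?_ ?_
    · intro i hi
      exact Nat.sub_sub_self (le_of_lt (lt_of_mem_US hi))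
    · intro i hi
      exact Nat.sub_sub_self (le_of_lt (lt_of_mem_US hi))
    · intro i hi
      rw [Nat.sub_sub_self (le_of_lt (lt_of_mem_US hi))]
  have h2A : 2 * (∑ i ∈ US p (p ^ (e + 1)), ((i : ZMod (p ^ (3 * e + 2))))⁻¹) = (p : ZMod (p ^ (3 * e + 2))) ^ (e + 1) * (∑ i ∈ US p (p ^ (e + 1)), (((i : ZMod (p ^ (3 * e + 2))))⁻¹ * (((p ^ (e + 1) - i : ℕ) : ZMod (p ^ (3 * e + 2))))⁻¹)) := by
    have hsum : (∑ i ∈ US p (p ^ (e + 1)), ((i : ZMod (p ^ (3 * e + 2))))⁻¹) + (∑ i ∈ US p (p ^ (e + 1)), ((i : ZMod (p ^ (3 * e + 2))))⁻¹) = ∑ i ∈ US p (p ^ (e + 1)), (((i : ZMod (p ^ (3 * e + 2))))⁻¹ + (((p ^ (e + 1) - i : ℕ) : ZMod (p ^ (3 * e + 2))))⁻¹) := by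
      rw [Finset.sum_add_distrib, ← hApair]
    rw [two_mul, hsum, Finset.mul_sum]
    refine Finset.sum_congr rfl fun i hi => ?_
    rw [inv_add_inv _ _ (hunit i hi) (hunit _ (hmemUS i hi)), hcastsum i hi]
  have hCB : (∑ i ∈ US p (p ^ (e + 1)), (((i : ZMod (p ^ (3 * e + 2))))⁻¹ * (((p ^ (e + 1) - i : ℕ) : ZMod (p ^ (3 * e + 2))))⁻¹)) + (∑ i ∈ US p (p ^ (e + 1)), (((i : ZMod (p ^ (3 * e + 2))))⁻¹) ^ 2) = (p : ZMod (p ^ (3 * e + 2))) ^ (e + 1) * (∑ i ∈ US p (p ^ (e + 1)), ((i : ZMod (p ^ (3 * e + 2))))⁻¹ * (((i : ZMod (p ^ (3 * e + 2))))⁻¹ * (((p ^ (e + 1) - i : ℕ) : ZMod (p ^ (3 * e + 2))))⁻¹)) := by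
    rw [← Finset.sum_add_distrib, Finset.mul_sum]
    refine Finset.sum_congr rfl fun i hi => ?_
    have key := inv_add_inv ((i : ZMod (p ^ (3 * e + 2)))) (((p ^ (e + 1) - i : ℕ) : ZMod (p ^ (3 * e + 2))))
      (hunit i hi) (hunit _ (hmemUS i hi))
    rw [hcastsum i hi] at key
    linear_combination ((i : ZMod (p ^ (3 * e + 2))))⁻¹ * key
  have hC' : (∑ i ∈ US p (p ^ (e + 1)), (((i : ZMod (p ^ (3 * e + 2))))⁻¹ * (((p ^ (e + 1) - i : ℕ) : ZMod (p ^ (3 * e + 2))))⁻¹)) = (p : ZMod (p ^ (3 * e + 2))) ^ (e + 1) * (∑ i ∈ US p (p ^ (e + 1)), ((i : ZMod (p ^ (3 * e + 2))))⁻¹ * (((i : ZMod (p ^ (3 * e + 2))))⁻¹ * (((p ^ (e + 1) - i : ℕ) : ZMod (p ^ (3 * e + 2))))⁻¹)) - (∑ i ∈ US p (p ^ (e + 1)), (((i : ZMod (p ^ (3 * e + 2))))⁻¹) ^ 2) := eq_sub_of_add_eq hCB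
  obtain ⟨w, h2A2⟩ : ∃ w, 2 * (∑ i ∈ US p (p ^ (e + 1)), ((i : ZMod (p ^ (3 * e + 2))))⁻¹) = (p : ZMod (p ^ (3 * e + 2))) ^ (2 * e + 1) * w :=
    ⟨(p : ZMod (p ^ (3 * e + 2))) * (∑ i ∈ US p (p ^ (e + 1)), ((i : ZMod (p ^ (3 * e + 2))))⁻¹ * (((i : ZMod (p ^ (3 * e + 2))))⁻¹ * (((p ^ (e + 1) - i : ℕ) : ZMod (p ^ (3 * e + 2))))⁻¹)) - yB, by rw [h2A, hC', hyB]; ring⟩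
  have h2α : 2 * ((p : ZMod (p ^ (3 * e + 2))) ^ (e + 1) * (∑ i ∈ US p (p ^ (e + 1)), ((i : ZMod (p ^ (3 * e + 2))))⁻¹)) = 0 := by
    have hh : 2 * ((p : ZMod (p ^ (3 * e + 2))) ^ (e + 1) * (∑ i ∈ US p (p ^ (e + 1)), ((i : ZMod (p ^ (3 * e + 2))))⁻¹)) = (p : ZMod (p ^ (3 * e + 2))) ^ (e + 1) * (2 * (∑ i ∈ US p (p ^ (e + 1)), ((i : ZMod (p ^ (3 * e + 2))))⁻¹)) := by ring
    rw [hh, h2A2]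
    linear_combination w * h0
  have h2β : 2 * (((p : ZMod (p ^ (3 * e + 2))) ^ (e + 1)) ^ 2 * E) = ((p : ZMod (p ^ (3 * e + 2))) ^ (e + 1) * (∑ i ∈ US p (p ^ (e + 1)), ((i : ZMod (p ^ (3 * e + 2))))⁻¹)) ^ 2 - ((p : ZMod (p ^ (3 * e + 2))) ^ (e + 1)) ^ 2 * ((p : ZMod (p ^ (3 * e + 2))) ^ e * yB) := by
    rw [← hyB]
    linear_combination ((p : ZMod (p ^ (3 * e + 2))) ^ (e + 1)) ^ 2 * hrel
  have hcont : (((p : ZMod (p ^ (3 * e + 2))) ^ (e + 1) * (∑ i ∈ US p (p ^ (e + 1)), ((i : ZMod (p ^ (3 * e + 2))))⁻¹)) * ((p : ZMod (p ^ (3 * e + 2))) ^ (e + 1) * (∑ i ∈ US p (p ^ (e + 1)), ((i : ZMod (p ^ (3 * e + 2))))⁻¹)) = 0) → (((p : ZMod (p ^ (3 * e + 2))) ^ (e + 1) * (∑ i ∈ US p (p ^ (e + 1)), ((i : ZMod (p ^ (3 * e + 2))))⁻¹)) * (((p : ZMod (p ^ (3 * e + 2))) ^ (e + 1)) ^ 2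 * E) = 0) → ((((p : ZMod (p ^ (3 * e + 2))) ^ (e + 1)) ^ 2 * E) * (((p : ZMod (p ^ (3 * e + 2))) ^ (e + 1)) ^ 2 * E) = 0) →
      (((a : ZMod (p ^ (3 * e + 2))) * (b : ZMod (p ^ (3 * e + 2))) * ((Nat.choose ((a + b) * p ^ e) (a * p ^ e) : ℕ) : ZMod (p ^ (3 * e + 2)))) * ((p : ZMod (p ^ (3 * e + 2))) ^ (e + 1) * (∑ i ∈ US p (p ^ (e + 1)), ((i : ZMod (p ^ (3 * e + 2))))⁻¹)) = 0) →
      (((a : ZMod (p ^ (3 * e + 2))) * (b : ZMod (p ^ (3 * e + 2))) * ((Nat.choose ((a + b) * p ^ e) (a * p ^ e) : ℕ) : ZMod (p ^ (3 * e + 2)))) * (((p : ZMod (p ^ (3 * e + 2))) ^ (e + 1)) ^ 2 * E) = 0) →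
      Nat.choose ((a + b) * p ^ (e + 1)) (a * p ^ (e + 1))
        ≡ Nat.choose ((a + b) * p ^ e) (a * p ^ e) [MOD p ^ (3 * e + 2)] := by
    intro hαα hαβ hββ hkα hkβ
    have hVR : ∀ m : ℕ, ((V p (m * p ^ (e + 1)) : ℕ) : ZMod (p ^ (3 * e + 2)))
        = (∏ i ∈ US p (p ^ (e + 1)), (i : ZMod (p ^ (3 * e + 2)))) ^ m * (1 + (∑ j ∈ range m, (j : ZMod (p ^ (3 * e + 2)))) * ((p : ZMod (p ^ (3 * e + 2))) ^ (e + 1) * (∑ i ∈ US p (p ^ (e + 1)), ((i : ZMod (p ^ (3 * e + 2))))⁻¹))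
          + (∑ j ∈ range m, (j : ZMod (p ^ (3 * e + 2))) ^ 2) * (((p : ZMod (p ^ (3 * e + 2))) ^ (e + 1)) ^ 2 * E)) := by
      intro m
      rw [V_block (dvd_pow_self p (Nat.succ_ne_zero e)) m]
      push_cast
      rw [Finset.prod_congr rfl (fun j _ => hE j), Finset.prod_mul_distrib,
        Finset.prod_const, Finset.card_range,
        Gprod ((p : ZMod (p ^ (3 * e + 2))) ^ (e + 1) * (∑ i ∈ US p (p ^ (e + 1)), ((i : ZMod (p ^ (3 * e + 2))))⁻¹)) (((p : ZMod (p ^ (3 * e + 2))) ^ (e + 1)) ^ 2 * E) hαα hαβ hββ m]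
      push_cast
      ring
    have hkeyR : ((Nat.choose ((a + b) * p ^ (e + 1)) (a * p ^ (e + 1)) : ℕ) : ZMod (p ^ (3 * e + 2))) * (((V p (a * p ^ (e + 1)) : ℕ) : ZMod (p ^ (3 * e + 2))) * ((V p (b * p ^ (e + 1)) : ℕ) : ZMod (p ^ (3 * e + 2)))) = ((Nat.choose ((a + b) * p ^ e) (a * p ^ e) : ℕ) : ZMod (p ^ (3 * e + 2))) * ((V p ((a + b) * p ^ (e + 1)) : ℕ) : ZMod (p ^ (3 * e + 2))) := by
      exact_mod_cast congrArg (fun x : ℕ => (x : ZMod (p ^ (3 * e + 2)))) (key_id hp e a b)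
    have hS1R : (∑ j ∈ range (a + b), (j : ZMod (p ^ (3 * e + 2)))) = (∑ j ∈ range a, (j : ZMod (p ^ (3 * e + 2)))) + (∑ j ∈ range b, (j : ZMod (p ^ (3 * e + 2)))) + (a : ZMod (p ^ (3 * e + 2))) * (b : ZMod (p ^ (3 * e + 2))) := by
      have h := congrArg (fun x : ℕ => (x : ZMod (p ^ (3 * e + 2)))) (sum_id_add a b)
      push_cast at h
      linear_combination h
    have hS2R : (∑ j ∈ range (a + b), (j : ZMod (p ^ (3 * e + 2))) ^ 2) + (a : ZMod (p ^ (3 * e + 2))) * (b : ZMod (p ^ (3 * e + 2)))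
        = (∑ j ∈ range a, (j : ZMod (p ^ (3 * e + 2))) ^ 2) + (∑ j ∈ range b, (j : ZMod (p ^ (3 * e + 2))) ^ 2) + (a : ZMod (p ^ (3 * e + 2))) * (b : ZMod (p ^ (3 * e + 2))) * ((a : ZMod (p ^ (3 * e + 2))) + (b : ZMod (p ^ (3 * e + 2)))) := by
      have h := congrArg (fun x : ℕ => (x : ZMod (p ^ (3 * e + 2)))) (sum_sq_add a b)
      push_cast at h
      linear_combination h
    have hVu : ∀ m : ℕ, IsUnit ((V p (m * p ^ (e + 1)) : ℕ) : ZMod (p ^ (3 * e + 2))) := by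
      intro m
      rw [ZMod.isUnit_iff_coprime]
      apply Nat.Coprime.pow_right
      unfold V
      apply Nat.Coprime.prod_left
      intro i hi
      exact ((Nat.Prime.coprime_iff_not_dvd hp).mpr (notdvd_of_mem_US hi)).symm
    have hmul : ((Nat.choose ((a + b) * p ^ (e + 1)) (a * p ^ (e + 1)) : ℕ) : ZMod (p ^ (3 * e + 2))) * (((V p (a * p ^ (e + 1)) : ℕ) : ZMod (p ^ (3 * e + 2))) * ((V p (b * p ^ (e + 1)) : ℕ) : ZMod (p ^ (3 * e + 2)))) = ((Nat.choose ((a + b) * p ^ e) (a * p ^ e) : ℕ) : ZMod (p ^ (3 * e + 2))) * (((V p (a * p ^ (e + 1)) : ℕ) : ZMod (p ^ (3 * e + 2))) * ((V p (b * p ^ (e + 1)) : ℕ) : ZMod (p ^ (3 * e + 2)))) := by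
      rw [hkeyR, hVR (a + b), hVR a, hVR b]
      linear_combination (((Nat.choose ((a + b) * p ^ e) (a * p ^ e) : ℕ) : ZMod (p ^ (3 * e + 2))) * (∏ i ∈ US p (p ^ (e + 1)), (i : ZMod (p ^ (3 * e + 2)))) ^ (a + b) * ((p : ZMod (p ^ (3 * e + 2))) ^ (e + 1) * (∑ i ∈ US p (p ^ (e + 1)), ((i : ZMod (p ^ (3 * e + 2))))⁻¹))) * hS1R
        + (((Nat.choose ((a + b) * p ^ e) (a * p ^ e) : ℕ) : ZMod (p ^ (3 * e + 2))) * (∏ i ∈ US p (p ^ (e + 1)), (i : ZMod (p ^ (3 * e + 2)))) ^ (a + b) * (((p : ZMod (p ^ (3 * e + 2))) ^ (e + 1)) ^ 2 * E)) * hS2R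
        + ((∏ i ∈ US p (p ^ (e + 1)), (i : ZMod (p ^ (3 * e + 2)))) ^ (a + b)) * hkα
        + ((∏ i ∈ US p (p ^ (e + 1)), (i : ZMod (p ^ (3 * e + 2)))) ^ (a + b) * ((a : ZMod (p ^ (3 * e + 2))) + (b : ZMod (p ^ (3 * e + 2)))) - (∏ i ∈ US p (p ^ (e + 1)), (i : ZMod (p ^ (3 * e + 2)))) ^ (a + b)) * hkβ
        - (((Nat.choose ((a + b) * p ^ e) (a * p ^ e) : ℕ) : ZMod (p ^ (3 * e + 2))) * (∏ i ∈ US p (p ^ (e + 1)), (i : ZMod (p ^ (3 * e + 2)))) ^ (a + b) * (∑ j ∈ range a, (j : ZMod (p ^ (3 * e + 2)))) * (∑ j ∈ range b, (j : ZMod (p ^ (3 * e + 2))))) * hαα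
        - (((Nat.choose ((a + b) * p ^ e) (a * p ^ e) : ℕ) : ZMod (p ^ (3 * e + 2))) * (∏ i ∈ US p (p ^ (e + 1)), (i : ZMod (p ^ (3 * e + 2)))) ^ (a + b) * ((∑ j ∈ range a, (j : ZMod (p ^ (3 * e + 2)))) * (∑ j ∈ range b, (j : ZMod (p ^ (3 * e + 2))) ^ 2) + (∑ j ∈ range a, (j : ZMod (p ^ (3 * e + 2))) ^ 2) * (∑ j ∈ range b, (j : ZMod (p ^ (3 * e + 2)))))) * hαβ
        - (((Nat.choose ((a + b) * p ^ e) (a * p ^ e) : ℕ) : ZMod (p ^ (3 * e + 2))) * (∏ i ∈ US p (p ^ (e + 1)), (i : ZMod (p ^ (3 * e + 2)))) ^ (a + b) * (∑ j ∈ range a, (j : ZMod (p ^ (3 * e + 2))) ^ 2) * (∑ j ∈ range b, (j : ZMod (p ^ (3 * e + 2))) ^ 2)) * hββ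
    have hsub : (((Nat.choose ((a + b) * p ^ (e + 1)) (a * p ^ (e + 1)) : ℕ) : ZMod (p ^ (3 * e + 2))) - ((Nat.choose ((a + b) * p ^ e) (a * p ^ e) : ℕ) : ZMod (p ^ (3 * e + 2)))) * (((V p (a * p ^ (e + 1)) : ℕ) : ZMod (p ^ (3 * e + 2))) * ((V p (b * p ^ (e + 1)) : ℕ) : ZMod (p ^ (3 * e + 2)))) = 0 := by
      rw [sub_mul, hmul, sub_self]
    have hz : ((Nat.choose ((a + b) * p ^ (e + 1)) (a * p ^ (e + 1)) : ℕ) : ZMod (p ^ (3 * e + 2))) - ((Nat.choose ((a + b) * p ^ e) (a * p ^ e) : ℕ) : ZMod (p ^ (3 * e + 2))) = 0 :=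
      (IsUnit.mul_left_eq_zero ((hVu a).mul (hVu b))).mp hsub
    have hfin : ((Nat.choose ((a + b) * p ^ (e + 1)) (a * p ^ (e + 1)) : ℕ) : ZMod (p ^ (3 * e + 2))) = ((Nat.choose ((a + b) * p ^ e) (a * p ^ e) : ℕ) : ZMod (p ^ (3 * e + 2))) := sub_eq_zero.mp hz
    exact (ZMod.natCast_eq_natCast_iff _ _ _).mp hfin
  rcases hp.eq_two_or_odd' with hp2 | hodd
  · subst hp2
    push_cast at h0
    have hker : ∀ z : ZMod (2 ^ (3 * e + 2)), 2 * z = 0 →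
        ∃ t, z = (2 : ZMod (2 ^ (3 * e + 2))) ^ (3 * e + 1) * t := by
      intro z hz
      obtain ⟨t, ht⟩ := zmod_kernel 2 (2 ^ (3 * e + 1))
        (by rw [show 3 * e + 2 = (3 * e + 1) + 1 by omega, pow_succ']) (by norm_num) z
        (by push_cast; exact hz)
      exact ⟨t, by rw [ht]; push_cast; ring⟩
    obtain ⟨α', hα'⟩ := hker _ h2α
    have hb0 : 2 * ((((2 : ℕ) : ZMod (2 ^ (3 * e + 2))) ^ (e + 1)) ^ 2 * E) = 0 := by
      rw [h2β, hα']
      push_cast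
      linear_combination ((2 : ZMod (2 ^ (3 * e + 2))) ^ (3 * e) * α' ^ 2 - yB) * h0
    obtain ⟨β', hβ'⟩ := hker _ hb0
    have h2dvd : 2 ∣ a * b * Nat.choose ((a + b) * 2 ^ e) (a * 2 ^ e) := by
      rcases Nat.even_or_odd a with hea | hoa
      · exact Dvd.dvd.mul_right (Dvd.dvd.mul_right hea.two_dvd b) _
      rcases Nat.even_or_odd b with heb | hob
      · exact Dvd.dvd.mul_right (Dvd.dvd.mul_left heb.two_dvd a) _
      · exact Dvd.dvd.mul_left (choose_even e a b hoa hob) _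
    obtain ⟨t, ht⟩ := h2dvd
    have hcw : (a : ZMod (2 ^ (3 * e + 2))) * (b : ZMod (2 ^ (3 * e + 2)))
        * ((Nat.choose ((a + b) * 2 ^ e) (a * 2 ^ e) : ℕ) : ZMod (2 ^ (3 * e + 2))) = ((2 * t : ℕ) : ZMod (2 ^ (3 * e + 2))) := by
      rw [← ht]
      push_cast
      ring
    apply hcont
    · rw [hα']
      linear_combination ((2 : ZMod (2 ^ (3 * e + 2))) ^ (3 * e) * α' * α') * h0
    · rw [hα', hβ']
      linear_combination ((2 : ZMod (2 ^ (3 * e + 2))) ^ (3 * e) * α' * β') * h0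
    · rw [hβ']
      linear_combination ((2 : ZMod (2 ^ (3 * e + 2))) ^ (3 * e) * β' * β') * h0
    · rw [hcw, hα']
      push_cast
      linear_combination ((t : ZMod (2 ^ (3 * e + 2))) * α') * h0
    · rw [hcw, hβ']
      push_cast
      linear_combination ((t : ZMod (2 ^ (3 * e + 2))) * β') * h0
  · have hu2 : IsUnit (2 : ZMod (p ^ (3 * e + 2))) := by
      have h2cast : ((2 : ℕ) : ZMod (p ^ (3 * e + 2))) = 2 := by push_cast; ring
      rw [← h2cast, ZMod.isUnit_iff_coprime]
      apply Nat.Coprime.pow_right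
      rw [Nat.Prime.coprime_iff_not_dvd Nat.prime_two]
      intro hdvd
      obtain ⟨t2, ht2⟩ := hodd
      omega
    have hα0 : ((p : ZMod (p ^ (3 * e + 2))) ^ (e + 1) * (∑ i ∈ US p (p ^ (e + 1)), ((i : ZMod (p ^ (3 * e + 2))))⁻¹)) = 0 := (IsUnit.mul_right_eq_zero hu2).mp h2α
    have h2β0 : 2 * (((p : ZMod (p ^ (3 * e + 2))) ^ (e + 1)) ^ 2 * E) = 0 := by
      rw [h2β, hα0]
      linear_combination (-(yB)) * h0
    have hβ0 : (((p : ZMod (p ^ (3 * e + 2))) ^ (e + 1)) ^ 2 * E) = 0 := (IsUnit.mul_right_eq_zero hu2).mp h2β0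
    exact hcont (by rw [hα0, zero_mul]) (by rw [hα0, zero_mul]) (by rw [hβ0, zero_mul])
      (by rw [hα0, mul_zero]) (by rw [hβ0, mul_zero])

end Jac

theorem stmt_1 (p n k l : ℕ) (hp : p.Prime)
    (hn : 0 < n) (hk : 0 < k) (hl : 0 < l) (hkn : k ≤ n) :
    Nat.choose (n * p ^ l) (k * p ^ l) ≡ Nat.choose (n * p ^ (l - 1)) (k * p ^ (l - 1)) [MOD p ^ (3 * l - 1)] := by
  obtain ⟨e, rfl⟩ : ∃ e, l = e + 1 := ⟨l - 1, (Nat.succ_pred_eq_of_pos hl).symm⟩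
  have h := Jac.main p hp e k (n - k)
  rw [Nat.add_sub_cancel' hkn] at h
  have h3 : 3 * (e + 1) - 1 = 3 * e + 2 := by omega
  have h1 : e + 1 - 1 = e := rfl
  rw [h3, h1]
  exact h
end

section
/- For a prime p > 3, the binomial coefficient C(2p-1, p-1) is congruent to 1 modulo p^3. -/
open Finset


lemma sum_inv_sq (p : ℕ) [Fact p.Prime] (hp3 : 3 < p) :
    ∑ k ∈ Ico 1 p, ((k : ZMod p)⁻¹) ^ 2 = 0 := by
  haveI : NeZero p := ⟨by omega⟩
  have hcast : ∀ k ∈ Ico 1 p, (k : ZMod p) ≠ 0 := by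
    intro k hk h0
    rw [ZMod.natCast_eq_zero_iff] at h0
    have h1 := mem_Ico.mp hk
    have := Nat.le_of_dvd (by omega) h0
    omega
  have step1 : ∑ k ∈ Ico 1 p, ((k : ZMod p)⁻¹) ^ 2 = ∑ k ∈ Ico 1 p, (k : ZMod p) ^ 2 := by
    refine Finset.sum_nbij' (fun k => ((k : ZMod p)⁻¹).val) (fun k => ((k : ZMod p)⁻¹).val) ?_ ?_ ?_ ?_ ?_
    · intro a ha
      have hne : ((a : ZMod p)⁻¹) ≠ 0 := by
        intro h; exact hcast a ha (by simpa using congrArg (·⁻¹) h)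
      rw [mem_Ico]
      constructor
      · rcases Nat.eq_zero_or_pos ((a : ZMod p)⁻¹).val with h|h
        · exact absurd (ZMod.val_eq_zero _ |>.mp h) hne
        · exact h
      · exact ZMod.val_lt _
    · intro a ha
      have hne : ((a : ZMod p)⁻¹) ≠ 0 := by
        intro h; exact hcast a ha (by simpa using congrArg (·⁻¹) h)
      rw [mem_Ico]
      refine ⟨?_, ZMod.val_lt _⟩
      rcases Nat.eq_zero_or_pos ((a : ZMod p)⁻¹).val with h|h
      · exact absurd (ZMod.val_eq_zero _ |>.mp h) hne
      · exact h
    · intro a ha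
      have h : ((((a : ZMod p)⁻¹).val : ZMod p)) = (a : ZMod p)⁻¹ := by
        simp [ZMod.natCast_val, ZMod.cast_id]
      show ((((((a : ZMod p)⁻¹).val : ℕ) : ZMod p))⁻¹).val = a
      rw [h, inv_inv, ZMod.val_cast_of_lt (mem_Ico.mp ha).2]
    · intro a ha
      have h : ((((a : ZMod p)⁻¹).val : ZMod p)) = (a : ZMod p)⁻¹ := by
        simp [ZMod.natCast_val, ZMod.cast_id]
      show ((((((a : ZMod p)⁻¹).val : ℕ) : ZMod p))⁻¹).val = a
      rw [h, inv_inv, ZMod.val_cast_of_lt (mem_Ico.mp ha).2]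
    · intro a ha
      simp [ZMod.natCast_val, ZMod.cast_id]
  rw [step1]
  have step2 : ∑ k ∈ Ico 1 p, (k : ZMod p) ^ 2 = ∑ k ∈ range p, (k : ZMod p) ^ 2 := by
    rw [range_eq_Ico, Finset.sum_eq_sum_Ico_succ_bot (by omega : 0 < p)]
    simp
  rw [step2]
  have step3 : ∑ k ∈ range p, (k : ZMod p) ^ 2 = ∑ x : ZMod p, x ^ 2 := by
    refine Finset.sum_nbij' (fun k => (k : ZMod p)) (fun x => x.val) ?_ ?_ ?_ ?_ ?_
    · intro a _; exact mem_univ _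
    · intro a _; exact mem_range.mpr (ZMod.val_lt a)
    · intro a ha; exact ZMod.val_cast_of_lt (mem_range.mp ha)
    · intro a _; simp [ZMod.natCast_val, ZMod.cast_id]
    · intro a _; rfl
  rw [step3]
  exact FiniteField.sum_pow_lt_card_sub_one (K := ZMod p) 2 (by rw [ZMod.card]; omega)


lemma choose_sub_one (p : ℕ) (hp : p.Prime) :
    ∀ k, k < p → ((p - 1).choose k : ZMod p) = (-1) ^ k := by
  intro k
  induction k with
  | zero => simp
  | succ n ih =>
    intro hn
    have hrec : (p - 1).choose n + (p - 1).choose (n + 1) = p.choose (n + 1) := by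
      have := Nat.choose_succ_succ (p - 1) n
      rw [← this]
      congr 1
      omega
    have hdvd : p ∣ p.choose (n + 1) := hp.dvd_choose_self (by omega) (by omega)
    have : ((p - 1).choose n : ZMod p) + ((p - 1).choose (n + 1) : ZMod p) = 0 := by
      have := congrArg (fun m : ℕ => (m : ZMod p)) hrec
      push_cast at this
      rw [this, ZMod.natCast_eq_zero_iff]
      exact hdvd
    rw [ih (by omega)] at this
    have := eq_neg_of_add_eq_zero_right this
    rw [this]
    ring

theorem stmt_2 (p : ℕ) (hp : p.Prime) (hp3 : 3 < p) :
    Nat.choose (2 * p - 1) (p - 1) ≡ 1 [MOD p ^ 3] := by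
  haveI : Fact p.Prime := ⟨hp⟩
  set R := ZMod (p ^ 3)
  -- units
  have hunit : ∀ k ∈ Ico 1 p, IsUnit ((k : ℕ) : R) := by
    intro k hk
    rw [ZMod.isUnit_iff_coprime]
    have hk' := mem_Ico.mp hk
    have hnd : ¬ p ∣ k := fun h => by have := Nat.le_of_dvd (by omega) h; omega
    exact Nat.Coprime.pow_right 3 (Nat.coprime_comm.mp ((hp.coprime_iff_not_dvd).mpr hnd))
  -- choose identity in R
  have hchoose : ∀ k ∈ Ico 1 p, ((p.choose k : ℕ) : R)
      = (p : R) * ((p - 1).choose (k - 1) : ℕ) * ((k : ℕ) : R)⁻¹ := by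
    intro k hk
    have hk' := mem_Ico.mp hk
    obtain ⟨j, rfl⟩ : ∃ j, k = j + 1 := ⟨k - 1, by omega⟩
    have hnat : p * (p - 1).choose j = p.choose (j + 1) * (j + 1) := by
      have := Nat.add_one_mul_choose_eq (p - 1) j
      have hps : p - 1 + 1 = p := by omega
      rw [hps] at this
      exact this
    have hcast : (p : R) * (((p - 1).choose j : ℕ) : R) = ((p.choose (j + 1) : ℕ) : R) * (((j + 1 : ℕ)) : R) := by
      have h := congrArg (fun m : ℕ => (m : R)) hnat
      rw [Nat.cast_mul, Nat.cast_mul] at h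
      exact h
    have hu := hunit (j + 1) hk
    calc ((p.choose (j + 1) : ℕ) : R)
        = ((p.choose (j + 1) : ℕ) : R) * (((j + 1 : ℕ) : R) * ((j + 1 : ℕ) : R)⁻¹) := by
          rw [ZMod.mul_inv_of_unit _ hu, mul_one]
      _ = ((p.choose (j + 1) : ℕ) : R) * ((j + 1 : ℕ) : R) * ((j + 1 : ℕ) : R)⁻¹ := by ring
      _ = (p : R) * (((p - 1).choose j : ℕ) : R) * ((j + 1 : ℕ) : R)⁻¹ := by rw [← hcast]
      _ = (p : R) * ((p - 1).choose ((j + 1) - 1) : ℕ) * ((j + 1 : ℕ) : R)⁻¹ := by norm_num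
  -- Vandermonde
  have hvan : (2 * p).choose p = ∑ k ∈ range (p + 1), p.choose k * p.choose (p - k) := by
    rw [two_mul, Nat.add_choose_eq]
    rw [Finset.Nat.sum_antidiagonal_eq_sum_range_succ_mk]
  have hvan2 : (2 * p).choose p = ∑ k ∈ range (p + 1), (p.choose k) ^ 2 := by
    rw [hvan]
    refine Finset.sum_congr rfl fun k hk => ?_
    have hk' := mem_range.mp hk
    rw [Nat.choose_symm (by omega : k ≤ p)]
    ring
  -- split sum in R
  have hsplit : (((2 * p).choose p : ℕ) : R)
      = 1 + (∑ k ∈ Ico 1 p, ((p.choose k : ℕ) : R) ^ 2) + 1 := by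
    rw [hvan2]
    push_cast
    rw [Finset.sum_range_succ, range_eq_Ico, Finset.sum_eq_sum_Ico_succ_bot (by omega : 0 < p)]
    simp [Nat.choose_self, Nat.choose_zero_right]
    push_cast [R]
    rfl
  -- rewrite middle sum
  set S : R := ∑ k ∈ Ico 1 p, (((p - 1).choose (k - 1) : ℕ) : R) ^ 2 * (((k : ℕ) : R)⁻¹) ^ 2 with hS
  have hmid : (∑ k ∈ Ico 1 p, ((p.choose k : ℕ) : R) ^ 2) = (p : R) ^ 2 * S := by
    rw [hS, Finset.mul_sum]
    refine Finset.sum_congr rfl fun k hk => ?_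
    rw [hchoose k hk]
    ring
  -- S maps to 0 in ZMod p
  have hpd : p ∣ p ^ 3 := dvd_pow_self p (by norm_num)
  set φ := ZMod.castHom hpd (ZMod p)
  have hφS : φ S = 0 := by
    rw [hS, map_sum]
    have : ∀ k ∈ Ico 1 p, φ ((((p - 1).choose (k - 1) : ℕ) : R) ^ 2 * (((k : ℕ) : R)⁻¹) ^ 2)
        = ((k : ZMod p)⁻¹) ^ 2 := by
      intro k hk
      have hk' := mem_Ico.mp hk
      have hinv : φ (((k : ℕ) : R)⁻¹) = ((k : ZMod p))⁻¹ := by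
        have hu := hunit k hk
        have h1 : ((k : ℕ) : R)⁻¹ * ((k : ℕ) : R) = 1 := ZMod.inv_mul_of_unit _ hu
        have h2 : φ (((k : ℕ) : R)⁻¹) * (k : ZMod p) = 1 := by
          have := congrArg φ h1
          rw [map_mul, map_one] at this
          simpa using this
        exact eq_inv_of_mul_eq_one_left h2
      rw [map_mul, map_pow, map_pow, hinv]
      have hc : φ (((p - 1).choose (k - 1) : ℕ) : R) = (((p - 1).choose (k - 1) : ℕ) : ZMod p) := by
        simp
      rw [hc, choose_sub_one p hp (k - 1) (by omega)]
      have : ((-1 : ZMod p) ^ (k - 1)) ^ 2 = 1 := by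
        rw [← pow_mul, mul_comm, pow_mul]
        norm_num
      rw [this, one_mul]
    rw [Finset.sum_congr rfl this]
    exact sum_inv_sq p hp3
  -- p^2 * S = 0 in R
  have hp2S : (p : R) ^ 2 * S = 0 := by
    haveI : NeZero (p ^ 3) := ⟨pow_ne_zero 3 (by omega)⟩
    have hSval : S = ((S.val : ℕ) : R) := by
      rw [ZMod.natCast_val, ZMod.cast_id]
    have hdvd : p ∣ S.val := by
      have : ((S.val : ℕ) : ZMod p) = 0 := by
        have : φ S = ((S.val : ℕ) : ZMod p) := by
          simp [φ, ZMod.castHom_apply, ZMod.natCast_val]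
        rw [← this, hφS]
      exact (ZMod.natCast_eq_zero_iff _ _).mp this
    obtain ⟨t, ht⟩ := hdvd
    rw [hSval, ht]
    rw [Nat.cast_mul]
    have : (p : R) ^ 2 * ((p : R) * (t : R)) = ((p ^ 3 : ℕ) : R) * (t : R) := by push_cast; ring
    rw [this, ZMod.natCast_self, zero_mul]
  -- conclude choose 2p p ≡ 2
  have h2p : (((2 * p).choose p : ℕ) : R) = 2 := by
    rw [hsplit, hmid, hp2S]
    ring
  -- relate to (2p-1) choose (p-1)
  have hrel : (2 * p).choose p = 2 * ((2 * p - 1).choose (p - 1)) := by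
    have h1 : (2 * p).choose p = (2 * p - 1).choose (p - 1) + (2 * p - 1).choose p := by
      have := Nat.choose_succ_succ (2 * p - 1) (p - 1)
      simp only [Nat.succ_eq_add_one] at this
      have e1 : 2 * p - 1 + 1 = 2 * p := by omega
      have e2 : p - 1 + 1 = p := by omega
      rw [e1, e2] at this
      exact this
    have h2 : (2 * p - 1).choose p = (2 * p - 1).choose (p - 1) := by
      rw [← Nat.choose_symm (by omega : p ≤ 2 * p - 1)]
      congr 1
      omega
    omega
  -- finish
  rw [Nat.ModEq]
  have hfinal : ((Nat.choose (2 * p - 1) (p - 1) : ℕ) : R) = ((1 : ℕ) : R) := by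
    have h2u : IsUnit (2 : R) := by
      rw [show (2 : R) = ((2 : ℕ) : R) by norm_num, ZMod.isUnit_iff_coprime]
      exact Nat.Coprime.pow_right 3 ((Nat.coprime_primes Nat.prime_two hp).mpr (by omega))
    have hcast2 : (2 : R) * ((Nat.choose (2 * p - 1) (p - 1) : ℕ) : R) = 2 * (1 : R) := by
      rw [mul_one]
      calc (2 : R) * ((Nat.choose (2 * p - 1) (p - 1) : ℕ) : R)
          = ((2 * Nat.choose (2 * p - 1) (p - 1) : ℕ) : R) := by rw [Nat.cast_mul]; push_cast; ring
        _ = (((2 * p).choose p : ℕ) : R) := by rw [← hrel]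
        _ = 2 := h2p
    have := h2u.mul_left_cancel hcast2
    simpa using this
  exact (ZMod.natCast_eq_natCast_iff _ _ _).mp hfinal
end

section
/- For a prime p > 3 and any positive integer l, the sum of 1/i over all i from 1 to p^l with p not dividing i, computed in the ring Z/p^(2l)Z (using multiplicative inverses of the units i), is congruent to 0 modulo p^(2l). -/
theorem stmt_4 (p l : ℕ) (hp : p.Prime) (hp3 : 3 < p) (hl : 0 < l) :
    ∑ i ∈ (Finset.Icc 1 (p ^ l)).filter (fun i => ¬ p ∣ i),
      ((i : ZMod (p ^ (2 * l))))⁻¹ = 0 := by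
  set n := p ^ l with hn
  set N := p ^ (2 * l) with hNdef
  have hp0 : 0 < p := hp.pos
  have hpn : p ∣ n := dvd_pow_self p hl.ne'
  have hn1 : 1 < n := by
    calc 1 < p := by omega
    _ ≤ n := Nat.le_self_pow hl.ne' p
  have hNnn : N = n * n := by rw [hNdef, hn, ← pow_add, two_mul]
  have hN1 : 1 < N := by nlinarith
  haveI : NeZero n := ⟨by omega⟩
  haveI : Fact (1 < n) := ⟨hn1⟩
  haveI : NeZero N := ⟨by omega⟩
  set A := (Finset.Icc 1 n).filter (fun i => ¬ p ∣ i) with hA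
  have hmem : ∀ i ∈ A, 1 ≤ i ∧ i < n ∧ ¬ p ∣ i := by
    intro i hi
    simp only [hA, Finset.mem_filter, Finset.mem_Icc] at hi
    refine ⟨hi.1.1, ?_, hi.2⟩
    rcases Nat.lt_or_ge i n with h | h
    · exact h
    · exact absurd (h.antisymm hi.1.2 ▸ hpn) hi.2
  have hcop : ∀ i, ¬ p ∣ i → Nat.Coprime i p :=
    fun i h => (Nat.coprime_comm.mp (hp.coprime_iff_not_dvd.mpr h))
  have hcopN : ∀ i ∈ A, Nat.Coprime i N := by
    intro i hi
    rw [hNdef]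
    exact (hcop i (hmem i hi).2.2).pow_right _
  have hcopn : ∀ i ∈ A, Nat.Coprime i n := by
    intro i hi
    rw [hn]
    exact (hcop i (hmem i hi).2.2).pow_right _
  have hunit : ∀ i ∈ A, IsUnit ((i : ZMod N)) :=
    fun i hi => (ZMod.isUnit_iff_coprime i N).2 (hcopN i hi)
  have hunitn : ∀ i ∈ A, IsUnit ((i : ZMod n)) :=
    fun i hi => (ZMod.isUnit_iff_coprime i n).2 (hcopn i hi)
  have hAinv : ∀ i ∈ A, n - i ∈ A := by
    intro i hi
    obtain ⟨h1, h2, h3⟩ := hmem i hi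
    simp only [hA, Finset.mem_filter, Finset.mem_Icc]
    refine ⟨⟨by omega, by omega⟩, fun hd => h3 ?_⟩
    have : n - (n - i) = i := by omega
    exact this ▸ Nat.dvd_sub hpn hd
  set S := ∑ i ∈ A, ((i : ZMod N))⁻¹ with hS
  have hν : (n : ZMod N) * (n : ZMod N) = 0 := by
    rw [← Nat.cast_mul, ← hNnn]
    exact ZMod.natCast_self N
  -- S equals the reflected sum
  have h1 : S = ∑ i ∈ A, (((n - i : ℕ) : ZMod N))⁻¹ := by
    refine Finset.sum_nbij' (fun i => n - i) (fun i => n - i) hAinv hAinv ?_ ?_ ?_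
    · intro a ha; have := hmem a ha; show n - (n - a) = a; omega
    · intro a ha; have := hmem a ha; show n - (n - a) = a; omega
    · intro a ha
      have h1 := hmem a ha
      show ((a : ZMod N))⁻¹ = (((n - (n - a) : ℕ) : ZMod N))⁻¹
      have : n - (n - a) = a := by omega
      rw [this]
  -- per-term identity
  have key : ∀ i ∈ A, ((i : ZMod N))⁻¹ + (((n - i : ℕ) : ZMod N))⁻¹
      = -(n : ZMod N) * ((i : ZMod N))⁻¹ * ((i : ZMod N))⁻¹ := by
    intro i hi
    obtain ⟨hi1, hi2, hi3⟩ := hmem i hi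
    set a : ZMod N := (i : ZMod N) with ha
    set b : ZMod N := ((n - i : ℕ) : ZMod N) with hb
    have hua : IsUnit a := hunit i hi
    have hub : IsUnit b := hunit _ (hAinv i hi)
    have ha1 : a * a⁻¹ = 1 := ZMod.mul_inv_of_unit a hua
    have hb1 : b * b⁻¹ = 1 := ZMod.mul_inv_of_unit b hub
    have hab : a + b = (n : ZMod N) := by
      rw [ha, hb, Nat.cast_sub (le_of_lt hi2)]
      ring
    have hmul : a * (a * b) * (a⁻¹ + b⁻¹) = a * (a * b) * (-(n : ZMod N) * a⁻¹ * a⁻¹) := by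
      linear_combination (a * b + (n : ZMod N) * b * (a * a⁻¹ + 1)) * ha1
        + a ^ 2 * hb1 + (a + (n : ZMod N)) * hab + hν
    exact (hua.mul (hua.mul hub)).mul_left_cancel hmul
  have h2 : S + S = -(n : ZMod N) * ∑ i ∈ A, ((i : ZMod N))⁻¹ * ((i : ZMod N))⁻¹ := by
    rw [Finset.mul_sum]
    nth_rewrite 2 [h1]
    rw [← Finset.sum_add_distrib]
    refine Finset.sum_congr rfl fun i hi => ?_
    rw [key i hi]; ring
  -- the inverse-square sum is killed by n
  have hdvd : n ∣ N := ⟨n, hNnn⟩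
  set f := ZMod.castHom hdvd (ZMod n) with hf
  have hfinv : ∀ i ∈ A, f (((i : ZMod N))⁻¹) = ((i : ZMod n))⁻¹ := by
    intro i hi
    have h := congrArg f (ZMod.mul_inv_of_unit _ (hunit i hi))
    rw [map_mul, map_one, map_natCast] at h
    exact (ZMod.inv_eq_of_mul_eq_one n _ _ h).symm
  -- sum over A of inverse squares in ZMod n equals sum over units
  have hsum_units : ∑ i ∈ A, ((i : ZMod n))⁻¹ * ((i : ZMod n))⁻¹
      = ∑ u : (ZMod n)ˣ, ((u : ZMod n))⁻¹ * ((u : ZMod n))⁻¹ := by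
    refine Finset.sum_bij' (fun i hi => ZMod.unitOfCoprime i (hcopn i hi))
      (fun u _ => (u : ZMod n).val) (fun i hi => Finset.mem_univ _) ?_ ?_ ?_ ?_
    · intro u _
      have hcu : Nat.Coprime (u : ZMod n).val n := ZMod.val_coe_unit_coprime u
      have hne : ((u : ZMod n)) ≠ 0 := u.ne_zero
      have hv0 : (u : ZMod n).val ≠ 0 := fun h => hne (by rwa [ZMod.val_eq_zero] at h)
      have hvlt : (u : ZMod n).val < n := ZMod.val_lt _
      simp only [hA, Finset.mem_filter, Finset.mem_Icc]
      refine ⟨⟨by omega, by omega⟩, fun hd => ?_⟩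
      have : p ∣ Nat.gcd (u : ZMod n).val n := Nat.dvd_gcd hd hpn
      rw [hcu] at this
      have := Nat.le_of_dvd one_pos this
      omega
    · intro i hi
      have := hmem i hi
      simp only [ZMod.coe_unitOfCoprime]
      exact ZMod.val_cast_of_lt this.2.1
    · intro u _
      ext
      simp [ZMod.coe_unitOfCoprime, ZMod.natCast_val, ZMod.cast_id]
    · intro i hi
      simp [ZMod.coe_unitOfCoprime]
  -- now the sum over units is 0
  have hcop2 : Nat.Coprime 2 n := by
    rw [hn]
    exact Nat.Coprime.pow_right _ (Nat.coprime_comm.mp (hp.coprime_iff_not_dvd.mpr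
      (fun h => by have := Nat.le_of_dvd (by norm_num) h; omega)))
  have hcop3 : Nat.Coprime 3 n := by
    rw [hn]
    exact Nat.Coprime.pow_right _ (Nat.coprime_comm.mp (hp.coprime_iff_not_dvd.mpr
      (fun h => by have := Nat.le_of_dvd (by norm_num) h; omega)))
  set T := ∑ u : (ZMod n)ˣ, ((u : ZMod n))⁻¹ * ((u : ZMod n))⁻¹ with hT
  have hT1 : T = ∑ u : (ZMod n)ˣ, ((u : ZMod n)) * ((u : ZMod n)) := by
    rw [hT]
    simp only [ZMod.inv_coe_unit]
    exact Fintype.sum_equiv (Equiv.inv (ZMod n)ˣ) _ _ (fun u => by simp)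
  have c2 : (ZMod n)ˣ := ZMod.unitOfCoprime 2 hcop2
  have hc2 : ((ZMod.unitOfCoprime 2 hcop2 : (ZMod n)ˣ) : ZMod n) = 2 := by
    simp [ZMod.coe_unitOfCoprime]
  have hT4 : (4 : ZMod n) * T = T := by
    nth_rewrite 2 [hT1]
    rw [hT1, Finset.mul_sum]
    refine Fintype.sum_equiv (Equiv.mulLeft (ZMod.unitOfCoprime 2 hcop2)) _ _ (fun u => ?_)
    simp only [Equiv.coe_mulLeft, Units.val_mul, hc2]
    ring
  have h3unit : IsUnit (3 : ZMod n) := by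
    have := (ZMod.isUnit_iff_coprime 3 n).2 hcop3
    simpa using this
  have hT0 : T = 0 := by
    have h3 : (3 : ZMod n) * T = 0 := by linear_combination hT4
    have := h3unit.mul_left_cancel (by rw [h3, mul_zero] : (3 : ZMod n) * T = 3 * 0)
    exact this
  -- transfer back: n * (sum of inverse squares in ZMod N) = 0
  set X := ∑ i ∈ A, ((i : ZMod N))⁻¹ * ((i : ZMod N))⁻¹ with hX
  have hfX : f X = 0 := by
    rw [hX, map_sum]
    have hterm : ∀ i ∈ A, f (((i : ZMod N))⁻¹ * ((i : ZMod N))⁻¹)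
        = ((i : ZMod n))⁻¹ * ((i : ZMod n))⁻¹ :=
      fun i hi => by rw [map_mul, hfinv i hi]
    rw [Finset.sum_congr rfl hterm, hsum_units, hT0]
  have hnX : (n : ZMod N) * X = 0 := by
    have hval : X = ((X.val : ℕ) : ZMod N) := by
      rw [ZMod.natCast_val, ZMod.cast_id]
    have hfX' : ((X.val : ℕ) : ZMod n) = 0 := by
      have : f X = ((X.val : ℕ) : ZMod n) := by
        rw [hf, ZMod.castHom_apply, ZMod.natCast_val]
      rw [← this, hfX]
    have hndvd : n ∣ X.val := (ZMod.natCast_eq_zero_iff _ _).1 hfX'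
    have hNd : N ∣ n * X.val := dvd_trans (dvd_of_eq hNnn) (mul_dvd_mul_left n hndvd)
    calc (n : ZMod N) * X = ((n * X.val : ℕ) : ZMod N) := by
          rw [Nat.cast_mul, ← hval]
    _ = 0 := (ZMod.natCast_eq_zero_iff _ _).2 hNd
  have hSS : S + S = 0 := by
    rw [h2]
    calc -(n : ZMod N) * X = -((n : ZMod N) * X) := by ring
    _ = 0 := by rw [hnX, neg_zero]
  have h2unit : IsUnit (2 : ZMod N) := by
    have hc : Nat.Coprime 2 N := by
      rw [hNdef]
      exact Nat.Coprime.pow_right _ (Nat.coprime_comm.mp (hp.coprime_iff_not_dvd.mpr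
        (fun h => by have := Nat.le_of_dvd (by norm_num) h; omega)))
    have := (ZMod.isUnit_iff_coprime 2 N).2 hc
    simpa using this
  have : (2 : ZMod N) * S = 2 * 0 := by
    rw [mul_zero, ← hSS]; ring
  exact h2unit.mul_left_cancel this
end

section
/- Let p be a prime, and let n, l be positive integers with (p-1) not dividing n. Then the sum of i^n over all i from 1 to p^l with p not dividing i is congruent to 0 modulo p^l. -/
theorem stmt_5 (p n l : ℕ) (hp : p.Prime) (hn : 0 < n) (hl : 0 < l)
    (hnd : ¬ (p - 1) ∣ n) :
    ∑ i ∈ (Finset.Icc 1 (p ^ l)).filter (fun i => ¬ p ∣ i), i ^ n ≡ 0 [MOD p ^ l] := by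
  haveI : Fact p.Prime := ⟨hp⟩
  set N := p ^ l with hN
  haveI : NeZero N := ⟨pow_ne_zero l hp.pos.ne'⟩
  have hpN : p ∣ N := dvd_pow_self p hl.ne'
  have hN1 : 1 < N := Nat.one_lt_pow hl.ne' hp.one_lt
  haveI : Nontrivial (ZMod N) := ZMod.nontrivial_iff.mpr hN1.ne'
  -- key: sum over units is 0
  have key : ∑ u : (ZMod N)ˣ, ((u : ZMod N)) ^ n = 0 := by
    obtain ⟨a, ha⟩ := IsCyclic.exists_generator (α := (ZMod p)ˣ)
    obtain ⟨g, hg⟩ := ZMod.unitsMap_surjective hpN a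
    have han : a ^ n ≠ 1 := by
      intro h
      apply hnd
      have h2 : orderOf a ∣ n := orderOf_dvd_of_pow_eq_one h
      rwa [orderOf_eq_card_of_forall_mem_zpowers ha, Nat.card_eq_fintype_card,
        ZMod.card_units_eq_totient, Nat.totient_prime hp] at h2
    set f := ZMod.castHom hpN (ZMod p) with hf
    have hfa : f (g : ZMod N) = (a : ZMod p) := by
      rw [← hg]; rfl
    have hunit : IsUnit ((g : ZMod N) ^ n - 1) := by
      set x := (g : ZMod N) ^ n - 1 with hx
      have hfx : f x ≠ 0 := by
        rw [hx, map_sub, map_pow, map_one, hfa]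
        intro h
        apply han
        have : ((a ^ n : (ZMod p)ˣ) : ZMod p) = ((1 : (ZMod p)ˣ) : ZMod p) := by
          push_cast
          rw [sub_eq_zero] at h
          simpa using h
        exact Units.ext this
      have hnd' : ¬ p ∣ x.val := by
        intro h
        apply hfx
        have : f x = ((x.val : ℕ) : ZMod p) := by
          rw [ZMod.castHom_apply, ← ZMod.natCast_val]
        rw [this, ZMod.natCast_eq_zero_iff]
        exact h
      have hcop : Nat.Coprime x.val N :=
        Nat.Coprime.pow_right l (Nat.coprime_comm.mp (hp.coprime_iff_not_dvd.mpr hnd'))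
      have := (ZMod.isUnit_iff_coprime x.val N).mpr hcop
      rwa [ZMod.natCast_val, ZMod.cast_id] at this
    set S := ∑ u : (ZMod N)ˣ, ((u : ZMod N)) ^ n with hS
    have hgs : (g : ZMod N) ^ n * S = S := by
      have := Fintype.sum_equiv (Equiv.mulLeft g)
        (fun u : (ZMod N)ˣ => ((g * u : (ZMod N)ˣ) : ZMod N) ^ n)
        (fun u : (ZMod N)ˣ => ((u : ZMod N)) ^ n) (fun u => rfl)
      rw [hS, Finset.mul_sum, ← this]
      simp [mul_pow]
    have h0 : ((g : ZMod N) ^ n - 1) * S = 0 := by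
      rw [sub_mul, one_mul, hgs, sub_self]
    exact ((IsUnit.mul_right_eq_zero hunit).mp h0)
  -- bridge
  rw [Nat.modEq_zero_iff_dvd, ← ZMod.natCast_eq_zero_iff]
  push_cast
  rw [← key]
  refine Finset.sum_bij' (i := fun i _ => ZMod.unitOfCoprime i ?_)
    (j := fun u _ => (u : ZMod N).val) ?_ ?_ ?_ ?_ ?_
  case _ i hi =>
    simp only [Finset.mem_filter, Finset.mem_Icc] at hi
    exact Nat.Coprime.pow_right l (Nat.coprime_comm.mp (hp.coprime_iff_not_dvd.mpr hi.2))
  case _ =>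
    intro a _
    exact Finset.mem_univ _
  case _ =>
    intro u _
    simp only [Finset.mem_filter, Finset.mem_Icc]
    have hvne : (u : ZMod N).val ≠ 0 := by
      simp [ZMod.val_eq_zero]
    have hcop := ZMod.val_coe_unit_coprime u
    refine ⟨⟨Nat.one_le_iff_ne_zero.mpr hvne, (ZMod.val_lt _).le⟩, ?_⟩
    intro hdvd
    have h1 : p ∣ Nat.gcd (u : ZMod N).val N := Nat.dvd_gcd hdvd hpN
    rw [hcop] at h1
    exact hp.one_lt.ne' (Nat.eq_one_of_dvd_one h1)
  case _ =>
    intro a ha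
    simp only [Finset.mem_filter, Finset.mem_Icc] at ha
    have halt : a < N := lt_of_le_of_ne ha.1.2 (by rintro rfl; exact ha.2 hpN)
    simp [ZMod.coe_unitOfCoprime, ZMod.val_cast_of_lt halt]
  case _ =>
    intro u _
    apply Units.ext
    simp [ZMod.coe_unitOfCoprime, ZMod.natCast_val, ZMod.cast_id]
  case _ =>
    intro a _
    simp [ZMod.coe_unitOfCoprime]
end

section
/- Let p be a prime and n, l positive integers. Then the sum of i^n over all i from 1 to p^l with p not dividing i is congruent to 0 modulo p^(l-1). -/
lemma sum_range_mul_decomp {M : Type*} [AddCommMonoid M] (f : ℕ → M) (k m : ℕ) :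
    ∑ i ∈ Finset.range (k * m), f i = ∑ j ∈ Finset.range k, ∑ r ∈ Finset.range m, f (j * m + r) := by
  induction k with
  | zero => simp
  | succ k ih =>
    rw [Nat.succ_mul, Finset.sum_range_add, ih, Finset.sum_range_succ]

lemma aux_dvd (p n : ℕ) (hp : p.Prime) (hn : 0 < n) :
    ∀ l, 0 < l → p ^ (l - 1) ∣ ∑ i ∈ (Finset.range (p ^ l)).filter (fun i => ¬ p ∣ i), i ^ n := by
  intro l
  induction l with
  | zero => intro h; exact absurd h (by simp)
  | succ l ih =>
    intro _
    rcases Nat.eq_zero_or_pos l with hl0 | hl0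
    · subst hl0; simp
    obtain ⟨t, ht⟩ := ih hl0
    set N := p ^ l with hN
    set S := ∑ i ∈ (Finset.range N).filter (fun i => ¬ p ∣ i), i ^ n with hS
    have hpN : p ∣ N := dvd_pow_self p hl0.ne'
    -- rewrite sum over range (p^(l+1)) via decomposition
    have key : (∑ i ∈ (Finset.range (p ^ (l + 1))).filter (fun i => ¬ p ∣ i), i ^ n)
        ≡ p * S [MOD N] := by
      rw [← ZMod.natCast_eq_natCast_iff]
      push_cast
      rw [Finset.sum_filter]
      have hpow : p ^ (l + 1) = p * N := by rw [pow_succ, mul_comm]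
      rw [hpow, sum_range_mul_decomp]
      have inner : ∀ j ∈ Finset.range p,
          (∑ r ∈ Finset.range N, if ¬ p ∣ (j * N + r) then ((j * N + r : ℕ) : ZMod N) ^ n else 0)
          = (S : ZMod N) := by
        intro j _
        rw [hS]
        push_cast
        rw [Finset.sum_filter]
        apply Finset.sum_congr rfl
        intro r _
        have hd : p ∣ (j * N + r) ↔ p ∣ r := by
          constructor
          · intro h
            exact (Nat.dvd_add_right (Dvd.dvd.mul_left hpN j)).mp h
          · intro h
            exact Nat.dvd_add (Dvd.dvd.mul_left hpN j) h
        have hc : ((j * N + r : ℕ) : ZMod N) = (r : ℕ) := by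
          push_cast
          simp [ZMod.natCast_self]
        simp only [hd]
        push_cast
        simp [ZMod.natCast_self]
      calc (∑ j ∈ Finset.range p, ∑ r ∈ Finset.range N,
              if ¬ p ∣ (j * N + r) then ((j * N + r : ℕ) : ZMod N) ^ n else 0)
          = ∑ j ∈ Finset.range p, (S : ZMod N) := Finset.sum_congr rfl inner
        _ = (p : ZMod N) * (S : ZMod N) := by rw [Finset.sum_const, Finset.card_range, nsmul_eq_mul]
    have hNdvd : N ∣ p * S := by
      rw [ht, ← mul_assoc]
      have h2 : p * p ^ (l - 1) = N := by rw [← pow_succ', Nat.sub_add_cancel hl0]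
      rw [h2]
      exact Dvd.intro t rfl
    have : (∑ i ∈ (Finset.range (p ^ (l + 1))).filter (fun i => ¬ p ∣ i), i ^ n) ≡ 0 [MOD N] :=
      key.trans ((Nat.modEq_zero_iff_dvd).mpr hNdvd)
    simpa [Nat.succ_sub_one] using (Nat.modEq_zero_iff_dvd).mp this

theorem stmt_6 (p n l : ℕ) (hp : p.Prime) (hn : 0 < n) (hl : 0 < l) :
    ∑ i ∈ (Finset.Icc 1 (p ^ l)).filter (fun i => ¬ p ∣ i), i ^ n ≡ 0 [MOD p ^ (l - 1)] := by
  have hset : (Finset.Icc 1 (p ^ l)).filter (fun i => ¬ p ∣ i)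
      = (Finset.range (p ^ l)).filter (fun i => ¬ p ∣ i) := by
    ext i
    simp only [Finset.mem_filter, Finset.mem_Icc, Finset.mem_range]
    constructor
    · rintro ⟨⟨h1, h2⟩, h3⟩
      refine ⟨lt_of_le_of_ne h2 ?_, h3⟩
      rintro rfl
      exact h3 (dvd_pow_self p hl.ne')
    · rintro ⟨h1, h3⟩
      refine ⟨⟨?_, h1.le⟩, h3⟩
      rcases Nat.eq_zero_or_pos i with rfl | h
      · exact absurd (dvd_zero p) h3
      · exact h
  rw [hset, Nat.modEq_zero_iff_dvd]
  exact aux_dvd p n hp hn l hl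
end

section
/- Let p be a prime, l a positive integer, and n a positive integer with (p-1) not dividing n. Then the sum of 1/i^n over all i from 1 to p^l with p not dividing i, computed in Z/p^l Z using inverses of units, is congruent to 0 modulo p^l. -/
theorem stmt_7 (p n l : ℕ) (hp : p.Prime) (hn : 0 < n) (hl : 0 < l)
    (hnd : ¬ (p - 1) ∣ n) :
    ∑ i ∈ (Finset.Icc 1 (p ^ l)).filter (fun i => ¬ p ∣ i),
      (((i : ZMod (p ^ l)))⁻¹) ^ n = 0 := by
  classical
  haveI : Fact p.Prime := ⟨hp⟩
  have hplpos : 0 < p ^ l := pow_pos hp.pos l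
  have hpl1 : 1 < p ^ l := one_lt_pow₀ hp.one_lt hl.ne'
  haveI : NeZero (p ^ l) := ⟨hplpos.ne'⟩
  haveI : Fact (1 < p ^ l) := ⟨hpl1⟩
  -- step 1 : rewrite as sum over units
  have h1 : ∑ i ∈ (Finset.Icc 1 (p ^ l)).filter (fun i => ¬ p ∣ i),
      (((i : ZMod (p ^ l)))⁻¹) ^ n
      = ∑ u : (ZMod (p ^ l))ˣ, ((u : ZMod (p ^ l))⁻¹) ^ n := by
    refine Finset.sum_bij' (i := fun a ha => ZMod.unitOfCoprime a ?_)
      (j := fun u _ => (u : ZMod (p ^ l)).val) ?_ ?_ ?_ ?_ ?_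
    · -- coprimality
      simp only [Finset.mem_filter, Finset.mem_Icc] at ha
      exact Nat.Coprime.pow_right _ ((Nat.Prime.coprime_iff_not_dvd hp).mpr ha.2).symm
    · intro a ha; exact Finset.mem_univ _
    · intro u _
      have hcop := ZMod.val_coe_unit_coprime u
      have hne : (u : ZMod (p ^ l)) ≠ 0 := u.ne_zero
      have hvne : (u : ZMod (p ^ l)).val ≠ 0 := fun h => hne (by
        rw [← ZMod.natCast_zmod_val (u : ZMod (p ^ l)), h, Nat.cast_zero])
      have hvlt : (u : ZMod (p ^ l)).val < p ^ l := ZMod.val_lt _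
      simp only [Finset.mem_filter, Finset.mem_Icc]
      refine ⟨⟨Nat.one_le_iff_ne_zero.mpr hvne, hvlt.le⟩, fun hdvd => ?_⟩
      exact (Nat.Prime.not_coprime_iff_dvd.mpr ⟨p, hp, hdvd, dvd_pow_self p hl.ne'⟩) hcop
    · intro a ha
      simp only [Finset.mem_filter, Finset.mem_Icc] at ha
      have halt : a < p ^ l := by
        rcases lt_or_eq_of_le ha.1.2 with h | h
        · exact h
        · exact absurd (h ▸ dvd_pow_self p hl.ne') ha.2
      simp [ZMod.coe_unitOfCoprime, ZMod.val_natCast, Nat.mod_eq_of_lt halt]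
    · intro u _
      apply Units.ext
      simp [ZMod.natCast_zmod_val]
    · intro a ha; rfl
  rw [h1]
  -- step 2: reindex by inversion
  have h2 : ∑ u : (ZMod (p ^ l))ˣ, ((u : ZMod (p ^ l))⁻¹) ^ n
      = ∑ u : (ZMod (p ^ l))ˣ, ((u : ZMod (p ^ l))) ^ n := by
    simp_rw [ZMod.inv_coe_unit]
    exact Fintype.sum_equiv (Equiv.inv _) _ _ (fun u => by simp)
  rw [h2]
  -- step 3: find unit c with (c^n - 1) a unit
  obtain ⟨g, hg⟩ := IsCyclic.exists_generator (α := (ZMod p)ˣ)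
  have hord : orderOf g = p - 1 := by
    rw [orderOf_eq_card_of_forall_mem_zpowers hg, Nat.card_eq_fintype_card, ZMod.card_units_eq_totient, Nat.totient_prime hp]
  have hgn : g ^ n ≠ 1 := by
    intro h
    exact hnd (hord ▸ orderOf_dvd_of_pow_eq_one h)
  have hdvd : p ∣ p ^ l := dvd_pow_self p hl.ne'
  obtain ⟨c, hc⟩ := ZMod.unitsMap_surjective hdvd g
  -- c^n - 1 is a unit
  have hcunit : IsUnit ((c : ZMod (p ^ l)) ^ n - 1) := by
    set x := (c : ZMod (p ^ l)) ^ n - 1 with hx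
    have hcast : ZMod.castHom hdvd (ZMod p) x = (g : ZMod p) ^ n - 1 := by
      have : ZMod.castHom hdvd (ZMod p) (c : ZMod (p ^ l)) = (g : ZMod p) := by
        rw [← hc]; simp [ZMod.unitsMap_def]
      rw [hx, map_sub, map_pow, map_one, this]
    have hne : ZMod.castHom hdvd (ZMod p) x ≠ 0 := by
      rw [hcast]
      intro h
      apply hgn
      apply Units.ext
      push_cast
      rw [sub_eq_zero] at h
      simpa using h
    -- IsUnit from cast nonzero
    rw [← ZMod.natCast_zmod_val x, ZMod.isUnit_iff_coprime]
    apply Nat.Coprime.pow_right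
    rw [Nat.coprime_comm, hp.coprime_iff_not_dvd]
    intro hdv
    apply hne
    rw [← ZMod.natCast_zmod_val x, map_natCast]
    exact (ZMod.natCast_eq_zero_iff _ _).mpr hdv
  -- step 4: multiply reindex
  set T := ∑ u : (ZMod (p ^ l))ˣ, ((u : ZMod (p ^ l))) ^ n with hT
  have h3 : ((c : ZMod (p ^ l)) ^ n) * T = T := by
    rw [hT, Finset.mul_sum]
    exact Fintype.sum_equiv (Equiv.mulLeft c) _ _ (fun u => by simp [mul_pow])
  have h4 : ((c : ZMod (p ^ l)) ^ n - 1) * T = 0 := by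
    rw [sub_mul, one_mul, h3, sub_self]
  exact (IsUnit.mul_right_eq_zero hcunit).mp h4
end

section
/- For an odd prime p and any positive integers k ≥ l, the product of all integers i with 1 ≤ i ≤ p^k - 1 and p not dividing i is congruent to -1 modulo p^l. -/
open Finset

lemma sq_eq_one_aux (p l : ℕ) (hp : p.Prime) (hodd : Odd p) (hl : 0 < l)
    (x : ZMod (p ^ l)) (hx : x * x = 1) : x = 1 ∨ x = -1 := by
  haveI : NeZero (p ^ l) := ⟨pow_ne_zero _ hp.pos.ne'⟩
  set a : ℤ := (x.val : ℤ) with ha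
  have hax : ((a : ℤ) : ZMod (p ^ l)) = x := by
    simp [ha, ZMod.natCast_val, ZMod.intCast_cast]
  have key : ((p : ℤ) ^ l) ∣ (a - 1) * (a + 1) := by
    have : (((a - 1) * (a + 1) : ℤ) : ZMod (p ^ l)) = 0 := by
      push_cast
      rw [hax]
      linear_combination hx
    rwa [ZMod.intCast_zmod_eq_zero_iff_dvd, Nat.cast_pow] at this
  have hpz : Prime (p : ℤ) := Nat.prime_iff_prime_int.mp hp
  have hp2 : ¬ ((p : ℤ) ∣ 2) := by
    intro h
    have h2 : p ∣ 2 := by exact_mod_cast h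
    have : p = 2 := (Nat.prime_dvd_prime_iff_eq hp Nat.prime_two).mp h2
    rw [this, Nat.odd_iff] at hodd
    norm_num at hodd
  by_cases hpd : (p : ℤ) ∣ a - 1
  · have hnd : ¬ (p : ℤ) ∣ a + 1 := by
      intro h
      exact hp2 (by simpa using Int.dvd_sub h hpd)
    have hcop : IsCoprime ((p : ℤ) ^ l) (a + 1) :=
      IsCoprime.pow_left ((hpz.coprime_iff_not_dvd).mpr hnd)
    have : ((p : ℤ) ^ l) ∣ (a - 1) := hcop.dvd_of_dvd_mul_right key
    left
    have h0 : ((a - 1 : ℤ) : ZMod (p ^ l)) = 0 := by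
      rw [ZMod.intCast_zmod_eq_zero_iff_dvd, Nat.cast_pow]; exact this
    push_cast at h0
    rw [hax] at h0
    exact sub_eq_zero.mp h0
  · have hcop : IsCoprime ((p : ℤ) ^ l) (a - 1) :=
      IsCoprime.pow_left ((hpz.coprime_iff_not_dvd).mpr hpd)
    have : ((p : ℤ) ^ l) ∣ (a + 1) := hcop.dvd_of_dvd_mul_left key
    right
    have h0 : ((a + 1 : ℤ) : ZMod (p ^ l)) = 0 := by
      rw [ZMod.intCast_zmod_eq_zero_iff_dvd, Nat.cast_pow]; exact this
    push_cast at h0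
    rw [hax] at h0
    exact eq_neg_of_add_eq_zero_left h0

lemma units_prod_eq_neg_one (p l : ℕ) (hp : p.Prime) (hodd : Odd p) (hl : 0 < l)
    [Fintype (ZMod (p ^ l))ˣ] :
    ∏ x : (ZMod (p ^ l))ˣ, x = (-1 : (ZMod (p ^ l))ˣ) := by
  classical
  haveI : NeZero (p ^ l) := ⟨pow_ne_zero _ hp.pos.ne'⟩
  have hplt : 2 < p ^ l := by
    have : 3 ≤ p := by
      rcases Nat.lt_or_ge p 3 with h | h
      · interval_cases p
        · exact absurd rfl hp.ne_zero
        · exact absurd rfl hp.ne_one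
        · rw [Nat.odd_iff] at hodd; norm_num at hodd
      · exact h
    calc 2 < 3 := by norm_num
    _ ≤ p := this
    _ ≤ p ^ l := Nat.le_self_pow hl.ne' p
  haveI : Fact (2 < p ^ l) := ⟨hplt⟩
  have hneg : (-1 : (ZMod (p ^ l))ˣ) ≠ 1 := by
    intro h
    have := congrArg (Units.val) h
    simp only [Units.val_neg, Units.val_one] at this
    exact (ZMod.neg_one_ne_one) this
  have key : (∏ x ∈ (univ : Finset (ZMod (p ^ l))ˣ).erase (-1), x) = 1 := by
    refine Finset.prod_involution (fun x _ => x⁻¹) (fun a _ => mul_inv_cancel a)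
      (fun a ha hne => ?_) (fun a ha => ?_) (fun a ha => inv_inv a)
    · intro h
      have hsq : (a : ZMod (p ^ l)) * a = 1 := by
        have := congrArg (Units.val) (mul_inv_cancel a)
        rw [h] at this
        simpa using this
      rcases sq_eq_one_aux p l hp hodd hl a hsq with h1 | h1
      · exact hne (Units.ext h1)
      · exact (Finset.mem_erase.mp ha).1 (Units.ext (by simpa using h1))
    · rw [Finset.mem_erase]
      refine ⟨?_, Finset.mem_univ _⟩
      intro h
      have : a = -1 := by rw [← inv_inv a, h]; simp
      exact (Finset.mem_erase.mp ha).1 this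
  rw [← Finset.insert_erase (Finset.mem_univ (-1 : (ZMod (p ^ l))ˣ)),
    Finset.prod_insert (Finset.notMem_erase _ _), key, mul_one]

lemma base_prod (p l : ℕ) (hp : p.Prime) (hodd : Odd p) (hl : 0 < l) :
    ∏ r ∈ (Icc 1 (p ^ l)).filter (fun r => ¬ p ∣ r), (r : ZMod (p ^ l)) = -1 := by
  classical
  haveI : NeZero (p ^ l) := ⟨pow_ne_zero _ hp.pos.ne'⟩
  haveI : Nontrivial (ZMod (p ^ l)) := by
    haveI : Fact (1 < p ^ l) := ⟨Nat.one_lt_pow hl.ne' hp.one_lt⟩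
    infer_instance
  have hcop : ∀ r ∈ (Icc 1 (p ^ l)).filter (fun r => ¬ p ∣ r), Nat.Coprime r (p ^ l) := by
    intro r hr
    rw [Finset.mem_filter] at hr
    exact ((hp.coprime_iff_not_dvd.mpr hr.2).symm).pow_right l
  have hlt : ∀ r ∈ (Icc 1 (p ^ l)).filter (fun r => ¬ p ∣ r), r < p ^ l := by
    intro r hr
    rw [Finset.mem_filter, Finset.mem_Icc] at hr
    rcases hr.1.2.lt_or_eq with h | h
    · exact h
    · exact absurd (h ▸ dvd_pow_self p hl.ne') hr.2
  have key : ∏ r ∈ (Icc 1 (p ^ l)).filter (fun r => ¬ p ∣ r), (r : ZMod (p ^ l))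
      = ∏ x : (ZMod (p ^ l))ˣ, (x : ZMod (p ^ l)) := by
    refine Finset.prod_bij (fun r hr => ZMod.unitOfCoprime r (hcop r hr)) (fun r hr => Finset.mem_univ _)
      ?_ ?_ ?_
    · intro r₁ hr₁ r₂ hr₂ h
      have h' : ((r₁ : ℕ) : ZMod (p ^ l)) = ((r₂ : ℕ) : ZMod (p ^ l)) := by
        have := congrArg (Units.val) h
        simpa [ZMod.coe_unitOfCoprime] using this
      have := congrArg ZMod.val h'
      rwa [ZMod.val_cast_of_lt (hlt _ hr₁), ZMod.val_cast_of_lt (hlt _ hr₂)] at this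
    · intro u _
      refine ⟨((u : ZMod (p ^ l))).val, ?_, ?_⟩
      · rw [Finset.mem_filter, Finset.mem_Icc]
        have hv : ((u : ZMod (p ^ l))).val < p ^ l := ZMod.val_lt _
        have hne : ((u : ZMod (p ^ l))).val ≠ 0 := by
          intro h
          have : (u : ZMod (p ^ l)) = 0 := by
            rw [← ZMod.natCast_rightInverse (u : ZMod (p ^ l)), h, Nat.cast_zero]
          exact u.ne_zero this
        refine ⟨⟨Nat.one_le_iff_ne_zero.mpr hne, hv.le⟩, ?_⟩
        intro hdvd
        have hc : Nat.Coprime ((u : ZMod (p ^ l))).val (p ^ l) := ZMod.val_coe_unit_coprime u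
        have : p ∣ Nat.gcd ((u : ZMod (p ^ l))).val (p ^ l) :=
          Nat.dvd_gcd hdvd (dvd_pow_self p hl.ne')
        rw [hc] at this
        exact hp.one_lt.ne' (Nat.dvd_one.mp this)
      · apply Units.ext
        simp [ZMod.coe_unitOfCoprime, ZMod.natCast_rightInverse (u : ZMod (p ^ l))]
    · intro r hr
      simp [ZMod.coe_unitOfCoprime]
  have key2 : ∏ x : (ZMod (p ^ l))ˣ, (x : ZMod (p ^ l))
      = ((∏ x : (ZMod (p ^ l))ˣ, x : (ZMod (p ^ l))ˣ) : ZMod (p ^ l)) :=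
    (map_prod (Units.coeHom (ZMod (p ^ l))) _ _).symm
  rw [key, key2, units_prod_eq_neg_one p l hp hodd hl]
  simp

theorem stmt_8 (p k l : ℕ) (hp : p.Prime) (hodd : Odd p) (hl : 0 < l) (hkl : l ≤ k) :
    ((∏ i ∈ (Finset.Icc 1 (p ^ k - 1)).filter (fun i => ¬ p ∣ i), i : ℕ) : ZMod (p ^ l)) = -1 := by
  classical
  have hq : 0 < p ^ l := pow_pos hp.pos l
  have hpq : p ∣ p ^ l := dvd_pow_self p hl.ne'
  have hk : 0 < k := hl.trans_le hkl
  have hpk : p ∣ p ^ k := dvd_pow_self p hk.ne'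
  have hNq : p ^ k = p ^ (k - l) * p ^ l := by
    rw [← pow_add, Nat.sub_add_cancel hkl]
  set N := p ^ (k - l) with hN
  set q := p ^ l with hqdef
  -- step 1: cast the product
  rw [Nat.cast_prod]
  -- step 2: extend range to p ^ k
  have hset : (Finset.Icc 1 (p ^ k - 1)).filter (fun i => ¬ p ∣ i)
      = (Finset.Icc 1 (p ^ k)).filter (fun i => ¬ p ∣ i) := by
    ext i
    simp only [Finset.mem_filter, Finset.mem_Icc]
    constructor
    · rintro ⟨⟨h1, h2⟩, h3⟩
      exact ⟨⟨h1, by omega⟩, h3⟩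
    · rintro ⟨⟨h1, h2⟩, h3⟩
      refine ⟨⟨h1, ?_⟩, h3⟩
      rcases h2.lt_or_eq with h | h
      · omega
      · exact absurd (h ▸ hpk) h3
  rw [hset]
  -- step 3: reindex by (j, r) ↦ j * q + r
  have hdecomp : ∀ i, 1 ≤ i → ((i - 1) / q) * q + ((i - 1) % q + 1) = i := by
    intro i h1
    have := Nat.div_add_mod (i - 1) q
    have h2 : ((i - 1) / q) * q = q * ((i - 1) / q) := Nat.mul_comm _ _
    omega
  have hre : ∏ i ∈ (Finset.Icc 1 (p ^ k)).filter (fun i => ¬ p ∣ i), (i : ZMod q)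
      = ∏ x ∈ (Finset.range N) ×ˢ ((Finset.Icc 1 q).filter (fun r => ¬ p ∣ r)),
          ((x.2 : ℕ) : ZMod q) := by
    refine Finset.prod_nbij' (fun i => ((i - 1) / q, (i - 1) % q + 1))
      (fun x => x.1 * q + x.2) ?_ ?_ ?_ ?_ ?_
    · -- forward membership
      intro i hi
      rw [Finset.mem_filter, Finset.mem_Icc] at hi
      obtain ⟨⟨h1, h2⟩, h3⟩ := hi
      rw [Finset.mem_product, Finset.mem_range, Finset.mem_filter, Finset.mem_Icc]
      have hmod : (i - 1) % q < q := Nat.mod_lt _ hq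
      refine ⟨?_, ⟨by omega, by omega⟩, ?_⟩
      · rw [Nat.div_lt_iff_lt_mul hq]
        omega
      · intro hdvd
        have hdj : p ∣ ((i - 1) / q) * q := (hpq.mul_left _)
        have : p ∣ i := by
          rw [← hdecomp i h1]
          exact Nat.dvd_add hdj hdvd
        exact h3 this
    · -- backward membership
      rintro ⟨j, r⟩ hx
      rw [Finset.mem_product, Finset.mem_range, Finset.mem_filter, Finset.mem_Icc] at hx
      dsimp only at hx ⊢
      obtain ⟨hj, ⟨hr1, hr2⟩, hr3⟩ := hx
      rw [Finset.mem_filter, Finset.mem_Icc]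
      have hle : j * q + r ≤ N * q := by
        calc j * q + r ≤ j * q + q := by omega
        _ = (j + 1) * q := by ring
        _ ≤ N * q := Nat.mul_le_mul_right _ (by omega)
      refine ⟨⟨by omega, by rw [hNq]; exact hle⟩, ?_⟩
      intro hdvd
      exact hr3 ((Nat.dvd_add_right (hpq.mul_left j)).mp hdvd)
    · -- left inverse
      intro i hi
      rw [Finset.mem_filter, Finset.mem_Icc] at hi
      exact hdecomp i hi.1.1
    · -- right inverse
      rintro ⟨j, r⟩ hx
      rw [Finset.mem_product, Finset.mem_range, Finset.mem_filter, Finset.mem_Icc] at hx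
      dsimp only at hx ⊢
      obtain ⟨hj, ⟨hr1, hr2⟩, hr3⟩ := hx
      have h1 : j * q + r - 1 = (r - 1) + j * q := by omega
      have hrq : r - 1 < q := by omega
      have hd : (j * q + r - 1) / q = j := by
        rw [h1, Nat.add_mul_div_right _ _ hq, Nat.div_eq_of_lt hrq, zero_add]
      have hm : (j * q + r - 1) % q = r - 1 := by
        rw [h1, Nat.add_mul_mod_self_right, Nat.mod_eq_of_lt hrq]
      rw [hd, hm, Prod.mk.injEq]
      omega
    · -- function values agree
      intro i hi
      rw [Finset.mem_filter, Finset.mem_Icc] at hi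
      conv_lhs => rw [← hdecomp i hi.1.1]
      push_cast
      simp [hqdef, ZMod.natCast_self]
  rw [hre, Finset.prod_product]
  have hbase : ∀ j ∈ Finset.range N,
      ∏ r ∈ (Finset.Icc 1 q).filter (fun r => ¬ p ∣ r), ((r : ℕ) : ZMod q) = -1 :=
    fun j _ => base_prod p l hp hodd hl
  rw [Finset.prod_congr rfl hbase, Finset.prod_const, Finset.card_range]
  exact Odd.neg_one_pow (hodd.pow)
end

section
/- For integers k ≥ 4, the product of all odd integers i with 1 ≤ i ≤ 2^(k-1) - 1 is congruent to 1 + 2^(k-1) modulo 2^k. -/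
lemma setEq (m : ℕ) : (Finset.Icc 1 (2*m - 1)).filter (fun i => Odd i)
    = (Finset.range m).image (fun j => 2*j+1) := by
  ext i
  simp only [Finset.mem_filter, Finset.mem_Icc, Finset.mem_image, Finset.mem_range, Nat.odd_iff]
  constructor
  · rintro ⟨⟨h1, h2⟩, h3⟩
    exact ⟨i / 2, by omega, by omega⟩
  · rintro ⟨j, hj, rfl⟩
    omega

lemma sq_step {a b t : ℕ} (h : a ≡ b [MOD 2^(t+1)]) : a^2 ≡ b^2 [MOD 2^(t+2)] := by
  have h2 : a % 2 = b % 2 := by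
    have := Nat.ModEq.of_dvd (dvd_pow_self 2 (Nat.succ_ne_zero t)) h
    simpa [Nat.pow_succ, Nat.ModEq] using Nat.ModEq.of_dvd ⟨2^t, by ring⟩ h
  rw [Nat.modEq_iff_dvd] at h ⊢
  obtain ⟨c, hc⟩ := h
  obtain ⟨d, hd⟩ : ∃ d : ℕ, a + b = 2 * d := ⟨(a+b)/2, by omega⟩
  refine ⟨c * d, ?_⟩
  have hd' : (a : ℤ) + b = 2 * d := by exact_mod_cast hd
  push_cast
  push_cast at hc
  linear_combination (a + b : ℤ) * hc + 2^(t+1) * c * hd'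

lemma key (m : ℕ) : (∏ j ∈ Finset.range (2^(m+2)), (2*j+1)) ≡ 1 + 2^(m+3) [MOD 2^(m+4)] := by
  induction m with
  | zero => decide
  | succ m IH =>
    have IH2 : (∏ j ∈ Finset.range (2^(m+2)), (2*j+1))^2 ≡ (1 + 2^(m+3))^2 [MOD 2^(m+5)] :=
      sq_step IH
    have h3 : (1 + 2^(m+3))^2 ≡ 1 + 2^(m+4) [MOD 2^(m+5)] := by
      have : (1 + 2^(m+3))^2 = (1 + 2^(m+4)) + 2^(m+5) * 2^(m+1) := by ring
      rw [this]
      simpa using (Nat.ModEq.add_left (1 + 2^(m+4))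
        ((Nat.modEq_zero_iff_dvd).mpr ⟨2^(m+1), rfl⟩))
    have hprod : (∏ j ∈ Finset.range (2^(m+3)), (2*j+1))
        ≡ (∏ j ∈ Finset.range (2^(m+2)), (2*j+1))^2 [MOD 2^(m+5)] := by
      rw [← ZMod.natCast_eq_natCast_iff]
      push_cast
      set R := ZMod (2^(m+5))
      have h0 : (2:R)^(m+5) = 0 := by
        have := ZMod.natCast_self (2^(m+5))
        push_cast at this
        exact this
      rw [show 2^(m+3) = 2^(m+2) + 2^(m+2) by ring, Finset.prod_range_add]
      push_cast
      rw [← Finset.prod_range_reflect (fun j => (2*((2^(m+2):R) + j)+1)) (2^(m+2))]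
      have hpt : ∀ j ∈ Finset.range (2^(m+2)),
          (2*((2^(m+2):R) + (2^(m+2) - 1 - j : ℕ))+1) = ((2:R)^(m+4)-1) * (2*j+1) := by
        intro j hj
        simp only [Finset.mem_range] at hj
        have : ((2^(m+2) - 1 - j : ℕ) : R) = 2^(m+2) - 1 - j := by
          push_cast [Nat.cast_sub (by omega : j ≤ 2^(m+2) - 1), Nat.cast_sub (by omega : 1 ≤ 2^(m+2))]
          ring
        rw [this]
        linear_combination (-(j:R)) * h0
      rw [Finset.prod_congr rfl hpt, Finset.prod_mul_distrib, Finset.prod_const,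
        Finset.card_range]
      have hx : ((2:R)^(m+4)-1)^2 = 1 := by linear_combination ((2:R)^(m+3) - 1) * h0
      rw [show (2:ℕ)^(m+2) = 2 * 2^(m+1) by ring, pow_mul, hx, one_pow]
      ring
    exact hprod.trans (IH2.trans h3)

theorem stmt_12 (k : ℕ) (hk : 4 ≤ k) :
    ∏ i ∈ (Finset.Icc 1 (2 ^ (k - 1) - 1)).filter (fun i => Odd i), i
      ≡ 1 + 2 ^ (k - 1) [MOD 2 ^ k] := by
  obtain ⟨m, rfl⟩ : ∃ m, k = m + 4 := ⟨k - 4, by omega⟩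
  have e1 : m + 4 - 1 = m + 3 := rfl
  rw [e1, show (2:ℕ)^(m+3) = 2 * 2^(m+2) by ring, setEq, Finset.prod_image
    (by intro a _ b _ h; simp only at h; omega)]
  rw [show 2 * 2^(m+2) = 2^(m+3) by ring]
  exact key m
end

section
/- For positive integers k and m with gcd(k, m) = 1, the integer C(m+k, k)·C(m, k)/(m+k) is divisible by m. -/
lemma aux_dvd_choose (n k : ℕ) (h : Nat.Coprime (n + 1) (k + 1)) :
    (n + 1) ∣ Nat.choose (n + 1) (k + 1) := by
  have key : (n + 1) * Nat.choose n k = Nat.choose (n + 1) (k + 1) * (k + 1) :=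
    Nat.add_one_mul_choose_eq n k
  have hdvd : (n + 1) ∣ Nat.choose (n + 1) (k + 1) * (k + 1) := ⟨_, key.symm⟩
  exact (Nat.Coprime.dvd_of_dvd_mul_right h hdvd)

theorem stmt_15 (k m : ℕ) (hk : 0 < k) (hm : 0 < m) (hgcd : Nat.gcd k m = 1) :
    (m + k) ∣ Nat.choose (m + k) k * Nat.choose m k
    ∧ m ∣ Nat.choose (m + k) k * Nat.choose m k / (m + k) := by
  obtain ⟨k, rfl⟩ := Nat.exists_eq_add_of_lt hk
  obtain ⟨m, rfl⟩ := Nat.exists_eq_add_of_lt hm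
  simp only [zero_add] at *
  have hc : Nat.Coprime (k + 1) (m + 1) := hgcd
  -- (m+1)+(k+1) coprime to k+1
  have hc1 : Nat.Coprime (m + 1 + k + 1) (k + 1) := by
    have : Nat.Coprime (m + 1 + (k + 1)) (k + 1) := Nat.coprime_add_self_left.mpr hc.symm
    simpa [add_assoc] using this
  have h1 : (m + 1 + (k + 1)) ∣ Nat.choose (m + 1 + (k + 1)) (k + 1) := by
    have := aux_dvd_choose (m + 1 + k) k (by simpa [add_assoc] using hc1)
    simpa [add_assoc] using this
  have h2 : (m + 1) ∣ Nat.choose (m + 1) (k + 1) :=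
    aux_dvd_choose m k hc.symm
  refine ⟨h1.mul_right _, ?_⟩
  -- coprimality of m+1 and m+1+(k+1)
  have hcm : Nat.Coprime (m + 1) (m + 1 + (k + 1)) := by
    rw [add_comm (m+1) (k+1)] 
    exact Nat.coprime_add_self_right.mpr hc.symm
  obtain ⟨a, ha⟩ := h1
  obtain ⟨b, hb⟩ := h2
  have : Nat.choose (m + 1 + (k + 1)) (k + 1) * Nat.choose (m + 1) (k + 1)
      = (m + 1 + (k + 1)) * ((m + 1) * (a * b)) := by
    rw [ha, hb]; ring
  rw [this, Nat.mul_div_cancel_left _ (by positivity)]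
  exact ⟨a * b, by ring⟩
end

section
/- For positive integers k and m, the rational number (1/m)·C(m+k-1, k)² equals (m/(m+k)²)·C(m+k, m)², and for gcd(k,m) = 1 this quantity is an integer divisible by m. -/
theorem stmt_17 (k m : ℕ) (hk : 0 < k) (hm : 0 < m) :
    (1 / (m : ℚ)) * (Nat.choose (m + k - 1) k) ^ 2
      = ((m : ℚ) / ((m : ℚ) + k) ^ 2) * (Nat.choose (m + k) m) ^ 2
    ∧ (Nat.gcd k m = 1 → ∃ z : ℤ,
        (1 / (m : ℚ)) * (Nat.choose (m + k - 1) k) ^ 2 = (m : ℚ) * z) := by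
  have hsymm : Nat.choose (m + k - 1) k = Nat.choose (m + k - 1) (m - 1) := by
    have := Nat.choose_symm (show k ≤ m + k - 1 by omega)
    rw [show m + k - 1 - k = m - 1 by omega] at this
    exact this.symm
  have key : (m + k) * Nat.choose (m + k - 1) k = m * Nat.choose (m + k) m := by
    rw [hsymm]
    have h := Nat.add_one_mul_choose_eq (m + k - 1) (m - 1)
    have h1 : Nat.succ (m + k - 1) = m + k := by omega
    have h2 : m - 1 + 1 = m := by omega
    rw [show m + k - 1 + 1 = m + k from by omega, show m - 1 + 1 = m from by omega] at h
    linarith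
  have hm0 : (m : ℚ) ≠ 0 := by positivity
  have hmk0 : (m : ℚ) + k ≠ 0 := by positivity
  have keyQ : ((m : ℚ) + k) * Nat.choose (m + k - 1) k = m * Nat.choose (m + k) m := by
    exact_mod_cast congrArg (Nat.cast : ℕ → ℚ) key
  constructor
  · field_simp
    linear_combination (((m : ℚ) + k) * (Nat.choose (m + k - 1) k : ℚ) + (m : ℚ) * (Nat.choose (m + k) m : ℚ)) * keyQ
  · intro hgcd
    have hcop : Nat.Coprime m (m + k) := by
      simpa [add_comm] using (Nat.coprime_add_self_right.2 (Nat.coprime_comm.mp hgcd))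
    have hdvd : m ∣ Nat.choose (m + k - 1) k := by
      have : m ∣ (m + k) * Nat.choose (m + k - 1) k := key ▸ Dvd.intro _ rfl
      exact (Nat.Coprime.dvd_of_dvd_mul_left hcop this)
    obtain ⟨c, hc⟩ := hdvd
    refine ⟨(c : ℤ) ^ 2, ?_⟩
    rw [hc]
    push_cast
    field_simp
end

section
/- For a prime p > 3, positive integers l, and positive integers k, m with gcd(k, m) = 1, one has C(p^l(m+k), p^l·k)·C(p^l·m, p^l·k) ≡ C(p^(l-1)(m+k), p^(l-1)·k)·C(p^(l-1)·m, p^(l-1)·k) modulo m·p^(2l). -/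
open Finset

lemma aux_fact_prod (x t : ℕ) :
    Nat.factorial x * ∏ i ∈ Ioc 0 t, (x + i) = Nat.factorial (x + t) := by
  induction t with
  | zero => simp
  | succ n ih =>
      rw [Finset.prod_Ioc_succ_top (Nat.zero_le n), ← mul_assoc, ih]
      rw [← Nat.add_assoc, Nat.factorial_succ, mul_comm]

lemma aux_split (p n : ℕ) (hp : 0 < p) (f : ℕ → ℕ) :
    ∏ i ∈ Ioc 0 (p*n), f i =
      (∏ j ∈ Ioc 0 n, f (p*j)) * ∏ i ∈ (Ioc 0 (p*n)).filter (fun i => ¬ p ∣ i), f i := by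
  rw [← Finset.prod_filter_mul_prod_filter_not (Ioc 0 (p*n)) (fun i => p ∣ i) f]
  congr 1
  symm
  apply Finset.prod_bij' (fun j _ => p * j) (fun i _ => i / p)
  · intro a ha
    simp only [mem_Ioc] at ha
    simp only [mem_filter, mem_Ioc]
    exact ⟨⟨Nat.mul_pos hp ha.1, Nat.mul_le_mul_left p ha.2⟩, Dvd.intro a rfl⟩
  · intro a ha
    simp only [mem_filter, mem_Ioc] at ha
    obtain ⟨⟨h1, h2⟩, c, rfl⟩ := ha
    simp only [mem_Ioc]
    rw [Nat.mul_div_cancel_left _ hp]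
    exact ⟨Nat.pos_of_mul_pos_left h1, le_of_mul_le_mul_left h2 hp⟩
  · intro a _
    rw [Nat.mul_div_cancel_left _ hp]
  · intro a ha
    simp only [mem_filter, mem_Ioc] at ha
    obtain ⟨-, c, rfl⟩ := ha
    rw [Nat.mul_div_cancel_left _ hp]
  · intro a _
    rfl

lemma key_id (p A B : ℕ) (hp : 0 < p) (hBA : B ≤ A) :
    Nat.choose (p*A) (p*B) * ∏ i ∈ (Ioc 0 (p*B)).filter (fun i => ¬ p ∣ i), i =
      Nat.choose A B * ∏ i ∈ (Ioc 0 (p*B)).filter (fun i => ¬ p ∣ i), (p*(A-B) + i) := by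
  set S := (Ioc 0 (p*B)).filter (fun i => ¬ p ∣ i) with hS
  set P := ∏ i ∈ S, i with hP
  set Q := ∏ i ∈ S, (p*(A-B) + i) with hQ
  set R := ∏ j ∈ Ioc 0 B, ((A-B) + j) with hR
  -- h2 : (p*B)! = p^B * (B! * P)
  have hcard : (Ioc 0 B).card = B := by simp
  have h2 : Nat.factorial (p*B) = p^B * (Nat.factorial B * P) := by
    have := aux_fact_prod 0 (p*B)
    simp only [Nat.factorial_zero, one_mul, Nat.zero_add] at this
    rw [← this, aux_split p B hp (fun i => i)]
    have : ∏ j ∈ Ioc 0 B, (p*j) = p^B * ∏ j ∈ Ioc 0 B, j := by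
      rw [Finset.prod_mul_distrib, Finset.prod_const, hcard]
    rw [this]
    have hBfac : ∏ j ∈ Ioc 0 B, j = Nat.factorial B := by
      have := aux_fact_prod 0 B
      simpa using this
    rw [hBfac, mul_assoc]
  -- h1 : (p*A)! = (p*(A-B))! * (p^B * (R * Q))
  have hpa : p*(A-B) + p*B = p*A := by
    rw [← Nat.mul_add, Nat.sub_add_cancel hBA]
  have h1 : Nat.factorial (p*A) = Nat.factorial (p*(A-B)) * (p^B * (R * Q)) := by
    have hf := aux_fact_prod (p*(A-B)) (p*B)
    rw [hpa] at hf
    rw [← hf, aux_split p B hp (fun i => p*(A-B) + i)]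
    have : ∏ j ∈ Ioc 0 B, (p*(A-B) + p*j) = p^B * R := by
      calc ∏ j ∈ Ioc 0 B, (p*(A-B) + p*j) = ∏ j ∈ Ioc 0 B, p*((A-B) + j) :=
            Finset.prod_congr rfl (fun j _ => by rw [Nat.mul_add])
        _ = p^B * R := by rw [Finset.prod_mul_distrib, Finset.prod_const, hcard, hR]
    rw [this, mul_assoc]
  -- hA : (A-B)! * R = A!
  have hA : Nat.factorial (A-B) * R = Nat.factorial A := by
    have := aux_fact_prod (A-B) B
    rw [Nat.sub_add_cancel hBA] at this
    exact this
  -- choose identities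
  have hcf : Nat.choose (p*A) (p*B) * Nat.factorial (p*B) * Nat.factorial (p*(A-B)) =
      Nat.factorial (p*A) := by
    have h := Nat.choose_mul_factorial_mul_factorial (Nat.mul_le_mul_left p hBA)
    rwa [← Nat.mul_sub] at h
  have hcf2 : Nat.choose A B * Nat.factorial B * Nat.factorial (A-B) = Nat.factorial A :=
    Nat.choose_mul_factorial_mul_factorial hBA
  -- multiply both sides by K and cancel
  have hK : 0 < p^B * Nat.factorial B * Nat.factorial (A-B) * Nat.factorial (p*(A-B)) := by
    positivity
  apply Nat.eq_of_mul_eq_mul_right hK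
  calc Nat.choose (p*A) (p*B) * P *
        (p^B * Nat.factorial B * Nat.factorial (A-B) * Nat.factorial (p*(A-B)))
      = (Nat.choose (p*A) (p*B) * (p^B * (Nat.factorial B * P)) * Nat.factorial (p*(A-B)))
          * Nat.factorial (A-B) := by ring
    _ = Nat.factorial (p*A) * Nat.factorial (A-B) := by rw [← h2, hcf]
    _ = Nat.factorial (p*(A-B)) * (p^B * (Nat.factorial (A-B) * R * Q)) := by
        rw [h1]; ring
    _ = Nat.factorial (p*(A-B)) * (p^B * (Nat.factorial A * Q)) := by rw [hA]
    _ = Nat.factorial (p*(A-B)) *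
          (p^B * ((Nat.choose A B * Nat.factorial B * Nat.factorial (A-B)) * Q)) := by
        rw [hcf2]
    _ = Nat.choose A B * Q *
        (p^B * Nat.factorial B * Nat.factorial (A-B) * Nat.factorial (p*(A-B))) := by ring

lemma prod_one_add_of_sq_zero {R : Type*} [CommRing R] (c : R) (hc : c * c = 0)
    {ι : Type*} (s : Finset ι) (x : ι → R) :
    ∏ i ∈ s, (1 + c * x i) = 1 + c * ∑ i ∈ s, x i := by
  induction s using Finset.cons_induction_on with
  | empty => simp
  | cons _ _ ha ih =>
      rename_i a s'
      rw [Finset.prod_cons, ih, Finset.sum_cons]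
      have : c * x a * (c * ∑ i ∈ s', x i) = (c * c) * (x a * ∑ i ∈ s', x i) := by ring
      calc (1 + c * x a) * (1 + c * ∑ i ∈ s', x i)
          = 1 + c * (x a + ∑ i ∈ s', x i) + (c*c) * (x a * ∑ i ∈ s', x i) := by ring
        _ = 1 + c * (x a + ∑ i ∈ s', x i) := by rw [hc]; ring

lemma prod_cong (p t B c : ℕ) (hp : p.Prime) (hodd : ¬ 2 ∣ p)
    (hc : p^t ∣ c) (hB : p^t ∣ p*B) :
    (∏ i ∈ (Ioc 0 (p*B)).filter (fun i => ¬ p ∣ i), (c + i)) ≡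
      (∏ i ∈ (Ioc 0 (p*B)).filter (fun i => ¬ p ∣ i), i) [MOD p^(2*t)] := by
  set n := p * B with hn
  set S := (Ioc 0 n).filter (fun i => ¬ p ∣ i) with hSdef
  haveI : NeZero (p^(2*t)) := ⟨pow_ne_zero _ hp.ne_zero⟩
  rw [← ZMod.natCast_eq_natCast_iff]
  set R := ZMod (p^(2*t)) with hRdef
  push_cast
  -- basic facts about members of S
  have hpn : p ∣ n := ⟨B, rfl⟩
  have hmem : ∀ i ∈ S, 0 < i ∧ i ≤ n ∧ ¬ p ∣ i := by
    intro i hi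
    simp only [hSdef, mem_filter, mem_Ioc] at hi
    exact ⟨hi.1.1, hi.1.2, hi.2⟩
  have hcop : ∀ i ∈ S, Nat.Coprime i (p^(2*t)) := by
    intro i hi
    exact (Nat.Coprime.pow_right _ ((hp.coprime_iff_not_dvd.mpr (hmem i hi).2.2).symm))
  have hinv : ∀ i ∈ S, (i : R) * (i : R)⁻¹ = 1 := fun i hi =>
    ZMod.coe_mul_inv_eq_one i (hcop i hi)
  have hcc : (c : R) * (c : R) = 0 := by
    rw [← Nat.cast_mul]
    rw [ZMod.natCast_eq_zero_iff]
    calc p^(2*t) = p^t * p^t := by rw [← pow_add, two_mul]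
      _ ∣ c * c := mul_dvd_mul hc hc
  have hcn : (c : R) * (n : R) = 0 := by
    rw [← Nat.cast_mul, ZMod.natCast_eq_zero_iff]
    calc p^(2*t) = p^t * p^t := by rw [← pow_add, two_mul]
      _ ∣ c * n := mul_dvd_mul hc hB
  -- n - i stays in S
  have hsub : ∀ i ∈ S, n - i ∈ S := by
    intro i hi
    obtain ⟨h1, h2, h3⟩ := hmem i hi
    have hilt : i < n := lt_of_le_of_ne h2 (fun h => h3 (h ▸ hpn))
    simp only [hSdef, mem_filter, mem_Ioc]
    refine ⟨⟨Nat.sub_pos_of_lt hilt, Nat.sub_le _ _⟩, fun hd => h3 ?_⟩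
    have := Nat.dvd_sub hpn hd
    rwa [Nat.sub_sub_self h2] at this
  -- step 1 : rewrite the product
  have step1 : ∏ i ∈ S, ((c : R) + i) = (∏ i ∈ S, (i : R)) * ∏ i ∈ S, (1 + (c:R) * (i:R)⁻¹) := by
    rw [← Finset.prod_mul_distrib]
    apply Finset.prod_congr rfl
    intro i hi
    have h := hinv i hi
    calc (c : R) + i = i + c * ((i:R) * (i:R)⁻¹) := by rw [h]; ring
      _ = (i:R) * (1 + c * (i:R)⁻¹) := by ring
  -- step 3 : c * sum of inverses = 0
  have hsym : ∑ i ∈ S, ((i:ℕ) : R)⁻¹ = ∑ i ∈ S, (((n - i : ℕ)) : R)⁻¹ := by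
    apply Finset.sum_nbij' (fun i => n - i) (fun i => n - i)
    · exact hsub
    · exact hsub
    · intro a ha; exact Nat.sub_sub_self (hmem a ha).2.1
    · intro a ha; exact Nat.sub_sub_self (hmem a ha).2.1
    · intro a ha; rw [Nat.sub_sub_self (hmem a ha).2.1]
  have hpair : ∀ i ∈ S, ((i:ℕ):R)⁻¹ + (((n-i:ℕ)):R)⁻¹ = (n:R) * (((i:ℕ):R)⁻¹ * (((n-i:ℕ)):R)⁻¹) := by
    intro i hi
    have h1 := hinv i hi
    have h2 := hinv _ (hsub i hi)
    have hadd : ((i:ℕ):R) + ((n-i:ℕ):R) = (n:R) := by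
      rw [← Nat.cast_add, Nat.add_sub_cancel' (hmem i hi).2.1]
    calc ((i:ℕ):R)⁻¹ + ((n-i:ℕ):R)⁻¹
        = ((i:ℕ):R) * ((i:ℕ):R)⁻¹ * ((n-i:ℕ):R)⁻¹
          + ((n-i:ℕ):R) * ((n-i:ℕ):R)⁻¹ * ((i:ℕ):R)⁻¹ := by rw [h1, h2]; ring
      _ = (((i:ℕ):R) + ((n-i:ℕ):R)) * (((i:ℕ):R)⁻¹ * ((n-i:ℕ):R)⁻¹) := by ring
      _ = (n:R) * (((i:ℕ):R)⁻¹ * (((n-i:ℕ)):R)⁻¹) := by rw [hadd]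
  have h2z : (2 : R) * ((c:R) * ∑ i ∈ S, ((i:ℕ):R)⁻¹) = 0 := by
    have : (2 : R) * ((c:R) * ∑ i ∈ S, ((i:ℕ):R)⁻¹)
        = (c:R) * ∑ i ∈ S, (((i:ℕ):R)⁻¹ + (((n-i:ℕ)):R)⁻¹) := by
      rw [Finset.sum_add_distrib, ← hsym]; ring
    rw [this, Finset.mul_sum]
    apply Finset.sum_eq_zero
    intro i hi
    rw [hpair i hi, ← mul_assoc, hcn, zero_mul]
  have h2unit : (2 : R) * ((2:ℕ) : R)⁻¹ = 1 := by
    have hcop2 : Nat.Coprime 2 (p^(2*t)) := by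
      apply Nat.Coprime.pow_right
      exact (Nat.prime_two.coprime_iff_not_dvd).mpr hodd
    have := ZMod.coe_mul_inv_eq_one 2 hcop2
    rwa [Nat.cast_ofNat] at this
  have step3 : (c:R) * ∑ i ∈ S, ((i:ℕ):R)⁻¹ = 0 := by
    calc (c:R) * ∑ i ∈ S, ((i:ℕ):R)⁻¹
        = ((2:R) * ((2:ℕ):R)⁻¹) * ((c:R) * ∑ i ∈ S, ((i:ℕ):R)⁻¹) := by rw [h2unit, one_mul]
      _ = ((2:ℕ):R)⁻¹ * ((2:R) * ((c:R) * ∑ i ∈ S, ((i:ℕ):R)⁻¹)) := by ring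
      _ = 0 := by rw [h2z, mul_zero]
  rw [step1, prod_one_add_of_sq_zero (c:R) hcc S (fun i => ((i:ℕ):R)⁻¹), step3]
  simp

lemma m_dvd_choose (q k m : ℕ) (hq : 0 < q) (hk : 0 < k) (hm : 0 < m)
    (hcop : Nat.Coprime k m) : m ∣ Nat.choose (q*m) (q*k) := by
  have hqm : 0 < q * m := Nat.mul_pos hq hm
  have hqk : 0 < q * k := Nat.mul_pos hq hk
  have h := Nat.add_one_mul_choose_eq (q*m - 1) (q*k - 1)
  rw [show q*m - 1 + 1 = q*m from Nat.succ_pred_eq_of_pos hqm,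
    show q*k - 1 + 1 = q*k from Nat.succ_pred_eq_of_pos hqk] at h
  -- h : q*m * choose (q*m-1) (q*k-1) = choose (q*m) (q*k) * (q*k)
  have h2 : m * Nat.choose (q*m-1) (q*k-1) = Nat.choose (q*m) (q*k) * k := by
    apply Nat.eq_of_mul_eq_mul_left hq
    calc q * (m * Nat.choose (q*m-1) (q*k-1)) = q*m * Nat.choose (q*m-1) (q*k-1) := by ring
      _ = Nat.choose (q*m) (q*k) * (q*k) := h
      _ = q * (Nat.choose (q*m) (q*k) * k) := by ring
  exact (Nat.Coprime.dvd_of_dvd_mul_right hcop.symm ⟨_, h2.symm⟩)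

lemma choose_diff_dvd (p t A B E : ℕ) (hp : p.Prime) (hodd : ¬ 2 ∣ p) (hBA : B ≤ A)
    (hc : p^t ∣ p*(A-B)) (hB : p^t ∣ p*B)
    (hE : (p:ℤ)^E ∣ (Nat.choose A B : ℤ)) :
    (p:ℤ)^(2*t + E) ∣ (Nat.choose (p*A) (p*B) : ℤ) - (Nat.choose A B : ℤ) := by
  have hp0 : 0 < p := hp.pos
  set S := (Ioc 0 (p*B)).filter (fun i => ¬ p ∣ i) with hSdef
  set Pn := ∏ i ∈ S, i with hPn
  set Qn := ∏ i ∈ S, (p*(A-B) + i) with hQn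
  have hid : Nat.choose (p*A) (p*B) * Pn = Nat.choose A B * Qn := key_id p A B hp0 hBA
  have hcong : Qn ≡ Pn [MOD p^(2*t)] := prod_cong p t B (p*(A-B)) hp hodd hc hB
  have hQP : ((p:ℤ))^(2*t) ∣ (Pn:ℤ) - (Qn:ℤ) := by
    have := (Nat.modEq_iff_dvd).mp hcong
    push_cast at this ⊢
    exact this
  -- (X - X') * P = X' * (Q - P) in ℤ
  have hidZ : ((Nat.choose (p*A) (p*B) : ℤ) - Nat.choose A B) * Pn
      = (Nat.choose A B : ℤ) * ((Qn:ℤ) - Pn) := by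
    have : ((Nat.choose (p*A) (p*B) * Pn : ℕ) : ℤ) = ((Nat.choose A B * Qn : ℕ) : ℤ) := by
      exact_mod_cast congrArg (Nat.cast : ℕ → ℤ) hid
    push_cast at this
    linarith [this]
  have hdvd : (p:ℤ)^(2*t+E) ∣ ((Nat.choose (p*A) (p*B) : ℤ) - Nat.choose A B) * Pn := by
    rw [hidZ, pow_add]
    have h1 : ((p:ℤ))^(2*t) ∣ (Qn:ℤ) - Pn := by
      rw [show (Qn:ℤ) - Pn = -((Pn:ℤ) - Qn) by ring]
      exact dvd_neg.mpr hQP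
    rw [show (Nat.choose A B : ℤ) * ((Qn:ℤ) - Pn) = ((Qn:ℤ) - Pn) * (Nat.choose A B : ℤ) by ring]
    exact mul_dvd_mul h1 hE
  have hcop : IsCoprime ((p:ℤ)^(2*t+E)) (Pn:ℤ) := by
    have hnp : ¬ p ∣ Pn := by
      intro hdvdP
      obtain ⟨i, hi, hpi⟩ := (hp.prime.dvd_finset_prod_iff _).mp hdvdP
      simp only [hSdef, mem_filter] at hi
      exact hi.2 hpi
    have : Nat.Coprime p Pn := hp.coprime_iff_not_dvd.mpr hnp
    exact (Nat.isCoprime_iff_coprime.mpr this).pow_left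
  exact hcop.dvd_of_dvd_mul_right hdvd

theorem stmt_18 (p l k m : ℕ) (hp : p.Prime) (hp3 : 3 < p) (hl : 0 < l)
    (hk : 0 < k) (hm : 0 < m) (hgcd : Nat.gcd k m = 1) :
    Nat.choose (p ^ l * (m + k)) (p ^ l * k) * Nat.choose (p ^ l * m) (p ^ l * k)
      ≡ Nat.choose (p ^ (l - 1) * (m + k)) (p ^ (l - 1) * k) *
          Nat.choose (p ^ (l - 1) * m) (p ^ (l - 1) * k) [MOD m * p ^ (2 * l)] := by
  obtain ⟨b, rfl⟩ : ∃ b, l = b + 1 := ⟨l - 1, (Nat.succ_pred_eq_of_pos hl).symm⟩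
  simp only [Nat.add_sub_cancel]
  have hp0 : 0 < p := hp.pos
  have hodd : ¬ 2 ∣ p := by
    intro h
    rcases hp.eq_one_or_self_of_dvd 2 h with h' | h' <;> omega
  have hcop : Nat.Coprime k m := hgcd
  rcases Nat.lt_or_ge m k with hmk | hkm
  · have h1 : p^(b+1) * m < p^(b+1) * k := (Nat.mul_lt_mul_left (pow_pos hp0 _)).mpr hmk
    have h2 : p^b * m < p^b * k := (Nat.mul_lt_mul_left (pow_pos hp0 _)).mpr hmk
    rw [Nat.choose_eq_zero_of_lt h1, Nat.choose_eq_zero_of_lt h2, mul_zero, mul_zero]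
  · set t := b + 1 with ht
    set e := m.factorization p with he
    set m₂ := m / p^e with hm2def
    have hm2 : p^e * m₂ = m := Nat.ordProj_mul_ordCompl_eq_self m p
    have hndvd : ¬ p ∣ m₂ := Nat.not_dvd_ordCompl hp hm.ne'
    have hpe_m : p^e ∣ m := Nat.ordProj_dvd m p
    have hq : p^(b+1) = p * p^b := by rw [pow_succ, mul_comm]
    have hrw : ∀ x : ℕ, p * (p^b * x) = p^(b+1) * x := fun x => by rw [hq, mul_assoc]
    -- m divides the "Y" binomials
    have hYm : m ∣ Nat.choose (p^(b+1) * m) (p^(b+1) * k) :=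
      m_dvd_choose (p^(b+1)) k m (pow_pos hp0 _) hk hm hcop
    have hY'm : m ∣ Nat.choose (p^b * m) (p^b * k) :=
      m_dvd_choose (p^b) k m (pow_pos hp0 _) hk hm hcop
    -- X difference divisible by p^(2t)
    have hXdiff : (p:ℤ)^(2*t) ∣ (Nat.choose (p^(b+1)*(m+k)) (p^(b+1)*k) : ℤ) -
        (Nat.choose (p^b*(m+k)) (p^b*k) : ℤ) := by
      have hsubAB : p^b*(m+k) - p^b*k = p^b*m := by
        rw [← Nat.mul_sub, Nat.add_sub_cancel]
      have hc : p^t ∣ p * (p^b*(m+k) - p^b*k) := by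
        rw [hsubAB, hrw m, ht]
        exact Dvd.intro m rfl
      have hB : p^t ∣ p * (p^b*k) := by
        rw [hrw k, ht]
        exact Dvd.intro k rfl
      have h := choose_diff_dvd p t (p^b*(m+k)) (p^b*k) 0 hp hodd
        (Nat.mul_le_mul_left _ (Nat.le_add_left k m)) hc hB (by simp)
      rw [add_zero] at h
      rwa [hrw (m+k), hrw k] at h
    -- Y difference divisible by p^(2t+e)
    have hYe' : (p:ℤ)^e ∣ (Nat.choose (p^b*m) (p^b*k) : ℤ) := by
      have : (p^e : ℕ) ∣ Nat.choose (p^b*m) (p^b*k) := dvd_trans hpe_m hY'm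
      have := Int.natCast_dvd_natCast.mpr this
      push_cast at this
      exact this
    have hYdiff : (p:ℤ)^(2*t+e) ∣ (Nat.choose (p^(b+1)*m) (p^(b+1)*k) : ℤ) -
        (Nat.choose (p^b*m) (p^b*k) : ℤ) := by
      have hsubAB : p^b*m - p^b*k = p^b*(m-k) := by rw [← Nat.mul_sub]
      have hc : p^t ∣ p * (p^b*m - p^b*k) := by
        rw [hsubAB, hrw (m-k), ht]
        exact Dvd.intro (m-k) rfl
      have hB : p^t ∣ p * (p^b*k) := by
        rw [hrw k, ht]
        exact Dvd.intro k rfl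
      have h := choose_diff_dvd p t (p^b*m) (p^b*k) e hp hodd
        (Nat.mul_le_mul_left _ hkm) hc hB hYe'
      rwa [hrw m, hrw k] at h
    -- assemble
    rw [Nat.modEq_iff_dvd]
    push_cast
    set X : ℤ := (Nat.choose (p^(b+1)*(m+k)) (p^(b+1)*k) : ℤ)
    set Y : ℤ := (Nat.choose (p^(b+1)*m) (p^(b+1)*k) : ℤ)
    set X' : ℤ := (Nat.choose (p^b*(m+k)) (p^b*k) : ℤ)
    set Y' : ℤ := (Nat.choose (p^b*m) (p^b*k) : ℤ)
    have hm2dvd : m₂ ∣ m := ⟨p^e, by rw [mul_comm]; exact hm2.symm⟩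
    have hYZ : (m₂:ℤ) ∣ Y := Int.natCast_dvd_natCast.mpr (dvd_trans hm2dvd hYm)
    have hY'Z : (m₂:ℤ) ∣ Y' := Int.natCast_dvd_natCast.mpr (dvd_trans hm2dvd hY'm)
    have hYe : (p:ℤ)^e ∣ Y := by
      have : (p^e : ℕ) ∣ Nat.choose (p^(b+1)*m) (p^(b+1)*k) := dvd_trans hpe_m hYm
      have := Int.natCast_dvd_natCast.mpr this
      push_cast at this
      exact this
    have hdvd1 : (m₂:ℤ) ∣ X*Y - X'*Y' :=
      dvd_sub (Dvd.dvd.mul_left hYZ X) (Dvd.dvd.mul_left hY'Z X')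
    have hdvd2 : (p:ℤ)^(2*t+e) ∣ X*Y - X'*Y' := by
      rw [show X*Y - X'*Y' = (X-X')*Y + X'*(Y-Y') by ring]
      apply dvd_add
      · rw [pow_add]
        exact mul_dvd_mul hXdiff hYe
      · exact Dvd.dvd.mul_left hYdiff X'
    have hcopZ : IsCoprime ((m₂:ℤ)) ((p:ℤ)^(2*t+e)) := by
      have : Nat.Coprime m₂ p := (hp.coprime_iff_not_dvd.mpr hndvd).symm
      have h2 : Nat.Coprime m₂ (p^(2*t+e)) := this.pow_right _
      have := Nat.isCoprime_iff_coprime.mpr h2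
      push_cast at this
      exact this
    have key : (m₂:ℤ) * (p:ℤ)^(2*t+e) ∣ X*Y - X'*Y' := hcopZ.mul_dvd hdvd1 hdvd2
    have hmod : (m:ℤ) * (p:ℤ)^(2*(b+1)) = (m₂:ℤ) * (p:ℤ)^(2*t+e) := by
      rw [← hm2]
      push_cast
      ring
    rw [hmod, show X'*Y' - X*Y = -(X*Y - X'*Y') by ring]
    exact dvd_neg.mpr key
end

section
/- For distinct primes p, q > 3 and positive integers k, m with gcd(k, m) = 1, one has C(pq(m+k), pq·k)·C(pq·m, pq·k) − C(q(m+k), q·k)·C(q·m, q·k) − C(p(m+k), p·k)·C(p·m, p·k) + C(m+k, k)·C(m, k) ≡ 0 modulo p²·q². -/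
open Finset

lemma prime_dvd_choose_mul (p : ℕ) (hp : p.Prime) (a i : ℕ) (hi : ¬ p ∣ i) :
    p ∣ (a * p).choose i := by
  rcases Nat.eq_zero_or_pos a with rfl | ha
  · have hi0 : i ≠ 0 := by rintro rfl; exact hi (dvd_zero p)
    simp [Nat.choose_eq_zero_of_lt (Nat.pos_of_ne_zero hi0)]
  · have hi0 : i ≠ 0 := by rintro rfl; exact hi (dvd_zero p)
    obtain ⟨k, rfl⟩ := Nat.exists_eq_succ_of_ne_zero hi0
    have hap : a * p ≠ 0 := Nat.mul_ne_zero ha.ne' hp.pos.ne'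
    obtain ⟨n, hn⟩ := Nat.exists_eq_succ_of_ne_zero hap
    have key : a * p * n.choose k = (a * p).choose (k + 1) * (k + 1) := by
      rw [hn]; exact Nat.add_one_mul_choose_eq n k
    have hdvd : p ∣ (a * p).choose (k + 1) * (k + 1) := by
      rw [← key]; exact Dvd.dvd.mul_right (dvd_mul_left p a) _
    rcases (hp.dvd_mul.mp hdvd) with h | h
    · exact h
    · exact absurd h hi

lemma babbage (p : ℕ) (hp : p.Prime) : ∀ a b : ℕ,
    (((a * p).choose (b * p) : ℕ) : ZMod (p ^ 2)) = ((a.choose b : ℕ) : ZMod (p ^ 2)) := by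
  have hp0 : 0 < p := hp.pos
  intro a
  induction a with
  | zero =>
    intro b
    cases b with
    | zero => simp
    | succ c =>
      rw [Nat.choose_eq_zero_of_lt, Nat.choose_eq_zero_of_lt] <;> simp <;> positivity
  | succ a ih =>
    intro b
    cases b with
    | zero => simp
    | succ c =>
      have hrw : (a + 1) * p = a * p + p := by ring
      rw [hrw, Nat.add_choose_eq]
      have hpairs : ({((c + 1) * p, 0), (c * p, p)} : Finset (ℕ × ℕ)) ⊆
          antidiagonal ((c + 1) * p) := by
        intro x hx
        simp only [Finset.mem_insert, Finset.mem_singleton] at hx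
        rcases hx with rfl | rfl <;> simp [Finset.mem_antidiagonal] <;> ring
      have hdistinct : ((c + 1) * p, 0) ≠ (c * p, p) := by
        intro h
        have := congrArg Prod.snd h
        simp at this
        omega
      push_cast
      rw [← Finset.sum_subset hpairs]
      · rw [Finset.sum_insert (by simp [hdistinct]), Finset.sum_singleton]
        simp only
        rw [Nat.choose_zero_right, Nat.choose_self]
        push_cast
        rw [ih (c + 1), ih c]
        push_cast
        rw [Nat.choose_succ_succ a c]
        push_cast
        ring
      · intro x hx hnx
        simp only [Finset.HasAntidiagonal.mem_antidiagonal] at hx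
        simp only [Finset.mem_insert, Finset.mem_singleton] at hnx
        obtain ⟨i, j⟩ := x
        simp only [Prod.mk.injEq, not_and, not_or] at hnx
        simp only at hx ⊢
        haveI : NeZero (p ^ 2) := ⟨by positivity⟩
        have hcp : (c + 1) * p = c * p + p := by ring
        by_cases hj0 : j = 0
        · exact absurd hj0 (hnx.1 (by omega))
        by_cases hjp : j = p
        · have hi : i = c * p := by rw [hjp] at hx; omega
          exact absurd hjp (hnx.2 hi)
        by_cases hjlt : j < p
        · have h1 : p ∣ p.choose j := hp.dvd_choose_self hj0 hjlt
          have h2 : p ∣ (a * p).choose i := by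
            apply prime_dvd_choose_mul p hp
            intro hdvd
            have hij : p ∣ i + j := ⟨c + 1, by rw [hx]; ring⟩
            have hj : p ∣ j := by
              have h3 := Nat.dvd_sub hij hdvd
              simpa [Nat.add_sub_cancel_left] using h3
            rcases hj with ⟨t, rfl⟩
            rcases t with _ | t
            · simp at hj0
            · have : p * (t + 1) ≥ p := by nlinarith
              omega
          have hd : (p ^ 2) ∣ (a * p).choose i * p.choose j := by
            rw [pow_two]; exact mul_dvd_mul h2 h1
          have := (ZMod.natCast_eq_zero_iff ((a * p).choose i * p.choose j)
            (p ^ 2)).mpr hd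
          push_cast at this
          exact this
        · rw [Nat.choose_eq_zero_of_lt (lt_of_le_of_ne (not_lt.mp hjlt) (fun h => hjp h.symm))]
          push_cast; ring

theorem stmt_19 (p q k m : ℕ) (hp : p.Prime) (hq : q.Prime) (hpq : p ≠ q)
    (hp3 : 3 < p) (hq3 : 3 < q) (hk : 0 < k) (hm : 0 < m) (hgcd : Nat.gcd k m = 1) :
    ((Nat.choose (p * q * (m + k)) (p * q * k) * Nat.choose (p * q * m) (p * q * k) : ℤ)
      - Nat.choose (q * (m + k)) (q * k) * Nat.choose (q * m) (q * k)
      - Nat.choose (p * (m + k)) (p * k) * Nat.choose (p * m) (p * k)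
      + Nat.choose (m + k) k * Nat.choose m k)
      ≡ 0 [ZMOD (p : ℤ) ^ 2 * (q : ℤ) ^ 2] := by
  have babbage_int : ∀ (r : ℕ), r.Prime → ∀ a b : ℕ,
      ((a * r).choose (b * r) : ℤ) ≡ (a.choose b : ℤ) [ZMOD ((r : ℤ) ^ 2)] := by
    intro r hr a b
    have h := (ZMod.natCast_eq_natCast_iff _ _ _).mp (babbage r hr a b)
    have h2 := Int.natCast_modEq_iff.mpr h
    simpa [Int.ModEq] using h2
  have key : ∀ (r s : ℕ), r.Prime →
      ((Nat.choose (r * s * (m + k)) (r * s * k) * Nat.choose (r * s * m) (r * s * k) : ℤ)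
        - Nat.choose (s * (m + k)) (s * k) * Nat.choose (s * m) (s * k)
        - (Nat.choose (r * (m + k)) (r * k) * Nat.choose (r * m) (r * k)
          - Nat.choose (m + k) k * Nat.choose m k))
        ≡ 0 [ZMOD ((r : ℤ) ^ 2)] := by
    intro r s hr
    have h1 : ((r * s * (m + k)).choose (r * s * k) : ℤ) ≡
        ((s * (m + k)).choose (s * k) : ℤ) [ZMOD ((r : ℤ) ^ 2)] := by
      have := babbage_int r hr (s * (m + k)) (s * k)
      rwa [show s * (m + k) * r = r * s * (m + k) from by ring,
        show s * k * r = r * s * k from by ring] at this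
    have h1' : ((r * s * m).choose (r * s * k) : ℤ) ≡
        ((s * m).choose (s * k) : ℤ) [ZMOD ((r : ℤ) ^ 2)] := by
      have := babbage_int r hr (s * m) (s * k)
      rwa [show s * m * r = r * s * m from by ring,
        show s * k * r = r * s * k from by ring] at this
    have h2 : ((r * (m + k)).choose (r * k) : ℤ) ≡
        ((m + k).choose k : ℤ) [ZMOD ((r : ℤ) ^ 2)] := by
      have := babbage_int r hr (m + k) k
      rwa [show (m + k) * r = r * (m + k) from by ring,
        show k * r = r * k from by ring] at this
    have h2' : ((r * m).choose (r * k) : ℤ) ≡ (m.choose k : ℤ) [ZMOD ((r : ℤ) ^ 2)] := by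
      have := babbage_int r hr m k
      rwa [show m * r = r * m from by ring, show k * r = r * k from by ring] at this
    have hA := h1.mul h1'
    have hB := h2.mul h2'
    have := hA.sub hB
    have hz := this.sub (Int.ModEq.refl
      (((s * (m + k)).choose (s * k) : ℤ) * ((s * m).choose (s * k)) -
        ((m + k).choose k : ℤ) * (m.choose k)))
    calc _ ≡ (((s * (m + k)).choose (s * k) : ℤ) * ((s * m).choose (s * k)) -
          ((m + k).choose k : ℤ) * (m.choose k)) -
          (((s * (m + k)).choose (s * k) : ℤ) * ((s * m).choose (s * k)) -
          ((m + k).choose k : ℤ) * (m.choose k)) [ZMOD ((r : ℤ) ^ 2)] := by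
            convert hz using 1; ring
      _ = 0 := by ring
  have hp2 : ((Nat.choose (p * q * (m + k)) (p * q * k) * Nat.choose (p * q * m) (p * q * k) : ℤ)
      - Nat.choose (q * (m + k)) (q * k) * Nat.choose (q * m) (q * k)
      - Nat.choose (p * (m + k)) (p * k) * Nat.choose (p * m) (p * k)
      + Nat.choose (m + k) k * Nat.choose m k)
      ≡ 0 [ZMOD ((p : ℤ) ^ 2)] := by
    have h := key p q hp
    calc _ = ((Nat.choose (p * q * (m + k)) (p * q * k) * Nat.choose (p * q * m) (p * q * k) : ℤ)
        - Nat.choose (q * (m + k)) (q * k) * Nat.choose (q * m) (q * k)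
        - (Nat.choose (p * (m + k)) (p * k) * Nat.choose (p * m) (p * k)
          - Nat.choose (m + k) k * Nat.choose m k)) := by ring
      _ ≡ 0 [ZMOD ((p : ℤ) ^ 2)] := h
  have hq2 : ((Nat.choose (p * q * (m + k)) (p * q * k) * Nat.choose (p * q * m) (p * q * k) : ℤ)
      - Nat.choose (q * (m + k)) (q * k) * Nat.choose (q * m) (q * k)
      - Nat.choose (p * (m + k)) (p * k) * Nat.choose (p * m) (p * k)
      + Nat.choose (m + k) k * Nat.choose m k)
      ≡ 0 [ZMOD ((q : ℤ) ^ 2)] := by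
    have h := key q p hq
    rw [show q * p = p * q from by ring] at h
    calc _ = ((Nat.choose (p * q * (m + k)) (p * q * k) * Nat.choose (p * q * m) (p * q * k) : ℤ)
        - Nat.choose (p * (m + k)) (p * k) * Nat.choose (p * m) (p * k)
        - (Nat.choose (q * (m + k)) (q * k) * Nat.choose (q * m) (q * k)
          - Nat.choose (m + k) k * Nat.choose m k)) := by ring
      _ ≡ 0 [ZMOD ((q : ℤ) ^ 2)] := h
  have hco : ((p : ℤ) ^ 2).natAbs.Coprime ((q : ℤ) ^ 2).natAbs := by
    simp only [Int.natAbs_pow, Int.natAbs_natCast]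
    exact Nat.Coprime.pow 2 2 ((Nat.coprime_primes hp hq).mpr hpq)
  exact (Int.modEq_and_modEq_iff_modEq_mul hco).mp ⟨hp2, hq2⟩
end
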